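/- arXiv:math/9806008 — 10 statements merged into one kernel-verified Lean document; each statement's English description precedes it below -/
import Mathlib

section
/- Let (Γ, d) be a covariant free first order differential calculus on a left coideal subalgebra X of a Hopf algebra H, with basis differentials d e^i where Δ(e^i) = Σ_j π^i_j ⊗ e^j. Then the partial derivatives are determined by their counit values: ∂_i(a) = Σ_j a_{(1)} · (ε∘∂_j)(a_{(2)}) · S(π^j_i) for all a ∈ X. -/
open TensorProduct MulOpposite

/-- for a covariant free first order differential calculus on a left coideal
subalgebra `X` of a Hopf algebra `H`, the partial derivatives are determined by their
counit values: `∂_i(a) = Σ a_{(1)} (ε∘∂_j)(a_{(2)}) S(π^j_i)`. -/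
theorem stmt4
    {H : Type} [Ring H] [HopfAlgebra ℂ H] (X : Subalgebra ℂ H)
    -- corestricted comultiplication: X is a left coideal
    (comulX : X →ₗ[ℂ] H ⊗[ℂ] X)
    (hcomulX : ∀ a : X,
      (TensorProduct.map (LinearMap.id) X.val.toLinearMap) (comulX a)
        = Coalgebra.comul (R := ℂ) (a : H))
    -- basis of a subcomodule: Δ(e^i) = Σ_j π^i_j ⊗ e^j
    {M : ℕ} (e : Fin M → X) (π : Fin M → Fin M → H)
    (hπ : ∀ i, comulX (e i) = ∑ j, π i j ⊗ₜ[ℂ] e j)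
    (hΔπ : ∀ i j, Coalgebra.comul (R := ℂ) (π i j) = ∑ k, π i k ⊗ₜ[ℂ] π k j)
    (hεπ : ∀ i j, Coalgebra.counit (R := ℂ) (π i j) = if i = j then 1 else 0)
    -- the calculus
    {Γ : Type} [AddCommGroup Γ] [Module ℂ Γ] [Module X Γ] [Module Xᵐᵒᵖ Γ]
    [SMulCommClass X Xᵐᵒᵖ Γ] [IsScalarTower ℂ X Γ]
    (d : X →ₗ[ℂ] Γ)
    (leibniz : ∀ a b : X, d (a * b) = a • d b + op b • d a)
    (free : ∀ ω : Γ, ∃! c : Fin M → X, ω = ∑ i, c i • d (e i))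
    (P : X → Fin M → X) (hP : ∀ a, d a = ∑ i, P a i • d (e i))
    -- covariance: Δ_Γ(a d b) = a_{(1)} b_{(1)} ⊗ a_{(2)} d b_{(2)} is well-defined
    (covariant : ∃ ΔΓ : Γ →ₗ[ℂ] H ⊗[ℂ] Γ,
      ∀ (a b : X) (ι κ : Type) (_ : Fintype ι) (_ : Fintype κ)
        (a1 : ι → H) (a2 : ι → X) (b1 : κ → H) (b2 : κ → X),
        comulX a = ∑ t, a1 t ⊗ₜ[ℂ] a2 t → comulX b = ∑ s, b1 s ⊗ₜ[ℂ] b2 s →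
        ΔΓ (a • d b) = ∑ t, ∑ s, (a1 t * b1 s) ⊗ₜ[ℂ] (a2 t • d (b2 s))) :
    ∀ (a : X) (i : Fin M) (ι : Type) (_ : Fintype ι) (a1 : ι → H) (a2 : ι → X),
      comulX a = ∑ t, a1 t ⊗ₜ[ℂ] a2 t →
      ((P a i : H)) = ∑ t, ∑ j,
        (Coalgebra.counit (R := ℂ) ((P (a2 t) j : H))) •
          (a1 t * HopfAlgebra.antipode (R := ℂ) (π j i)) := by
  classical
  obtain ⟨ΔΓ, hΔΓ⟩ := covariant
  -- the coefficient functions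
  set coeff : Γ → Fin M → X := fun ω => (free ω).choose with hcoeff_def
  have hrep : ∀ ω : Γ, ω = ∑ i, coeff ω i • d (e i) := fun ω => (free ω).choose_spec.1
  have huniq : ∀ (ω : Γ) (c : Fin M → X), ω = ∑ i, c i • d (e i) → c = coeff ω :=
    fun ω c h => (free ω).choose_spec.2 c h
  -- coefficients are ℂ-linear
  have hadd : ∀ ω ω' : Γ, coeff (ω + ω') = coeff ω + coeff ω' := by
    intro ω ω'
    refine (huniq _ _ ?_).symm
    conv_lhs => rw [hrep ω, hrep ω']
    rw [← Finset.sum_add_distrib]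
    simp [add_smul]
  have hsmul : ∀ (c : ℂ) (ω : Γ), coeff (c • ω) = c • coeff ω := by
    intro c ω
    refine (huniq _ _ ?_).symm
    conv_lhs => rw [hrep ω]
    rw [Finset.smul_sum]
    simp [smul_assoc]
  let φ : Fin M → (Γ →ₗ[ℂ] X) := fun j =>
    { toFun := fun ω => coeff ω j
      map_add' := fun ω ω' => congrFun (hadd ω ω') j
      map_smul' := fun c ω => congrFun (hsmul c ω) j }
  -- extraction maps on H ⊗ Γ
  let ψ : Fin M → (H ⊗[ℂ] Γ →ₗ[ℂ] H) := fun j =>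
    (TensorProduct.rid ℂ H).toLinearMap ∘ₗ
      TensorProduct.map LinearMap.id
        ((Coalgebra.counit (R := ℂ) (A := H)) ∘ₗ X.val.toLinearMap ∘ₗ φ j)
  have hψ : ∀ (j : Fin M) (h : H) (ω : Γ),
      ψ j (h ⊗ₜ[ℂ] ω) = (Coalgebra.counit (R := ℂ) ((coeff ω j : X) : H)) • h := by
    intro j h ω
    simp [ψ, φ]
  -- coefficients of basic elements
  have hcd : ∀ (x : X), coeff (d x) = P x := fun x => (huniq _ _ (hP x)).symm
  have hbasic : ∀ (x : X) (j k : Fin M),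
      coeff (x • d (e j)) k = if k = j then x else 0 := by
    intro x j k
    have : (fun l => if l = j then x else 0) = coeff (x • d (e j)) := by
      refine huniq _ _ ?_
      rw [Finset.sum_eq_single j]
      · simp
      · intro b _ hb; simp [hb]
      · simp
    rw [← this]
  -- comulX 1 = 1 ⊗ 1
  have hinj : Function.Injective
      (TensorProduct.map (LinearMap.id) X.val.toLinearMap : H ⊗[ℂ] X →ₗ[ℂ] H ⊗[ℂ] H) := by
    have : Function.Injective (LinearMap.lTensor H X.val.toLinearMap) :=
      Module.Flat.lTensor_preserves_injective_linearMap _ Subtype.val_injective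
    exact this
  have hone : comulX 1 = (1 : H) ⊗ₜ[ℂ] (1 : X) := by
    apply hinj
    rw [hcomulX]
    simp [Algebra.TensorProduct.one_def]
  -- now the main computation
  intro a i₀ ι instι a1 a2 ha
  -- finite representations of comulX (P a i)
  choose S hS using fun i => TensorProduct.exists_finset (comulX (P a i))
  have hSrep : ∀ i : Fin M, comulX (P a i) = ∑ t : (S i), ((t : H × X).1 ⊗ₜ[ℂ] (t : H × X).2) := by
    intro i
    rw [hS i, ← Finset.sum_coe_sort]
  -- equation A : ΔΓ (d a) = ∑ t, a1 t ⊗ d (a2 t)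
  have h1 : comulX 1 = ∑ _t : Fin 1, (1 : H) ⊗ₜ[ℂ] (1 : X) := by
    simp [hone]
  have eqA : ΔΓ (d a) = ∑ t, a1 t ⊗ₜ[ℂ] (d (a2 t)) := by
    have := hΔΓ 1 a (Fin 1) ι inferInstance instι (fun _ => 1) (fun _ => 1) a1 a2 h1 ha
    simpa using this
  -- equation B
  have eqB : ΔΓ (d a) = ∑ i, ∑ t : (S i), ∑ j,
      ((t : H × X).1 * π i j) ⊗ₜ[ℂ] ((t : H × X).2 • d (e j)) := by
    rw [hP a, map_sum]
    refine Finset.sum_congr rfl fun i _ => ?_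
    exact hΔΓ (P a i) (e i) (S i) (Fin M) inferInstance inferInstance
      (fun t => (t : H × X).1) (fun t => (t : H × X).2) (π i) e (hSrep i) (hπ i)
  -- counit identity: ∑ t, ε(p2) • p1 = P a i
  have hcounit : ∀ i : Fin M,
      ∑ t : (S i), (Coalgebra.counit (R := ℂ) (((t : H × X).2 : X) : H)) • (t : H × X).1
        = ((P a i : X) : H) := by
    intro i
    have h2 : Coalgebra.comul (R := ℂ) ((P a i : X) : H)
        = ∑ t : (S i), ((t : H × X).1 ⊗ₜ[ℂ] (((t : H × X).2 : X) : H)) := by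
      rw [← hcomulX, hSrep i, map_sum]
      rfl
    have h3 := Coalgebra.lTensor_counit_comul (R := ℂ) ((P a i : X) : H)
    rw [h2, map_sum] at h3
    have h4 := congrArg (TensorProduct.rid ℂ H) h3
    simpa [LinearMap.lTensor_tmul] using h4
  -- apply ψ k to eqA = eqB
  have key : ∀ k : Fin M,
      ∑ t, (Coalgebra.counit (R := ℂ) ((P (a2 t) k : X) : H)) • a1 t
        = ∑ i, ((P a i : X) : H) * π i k := by
    intro k
    have h5 : ψ k (ΔΓ (d a)) = ψ k (ΔΓ (d a)) := rfl
    have h6 : ψ k (∑ t, a1 t ⊗ₜ[ℂ] (d (a2 t)))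
        = ψ k (∑ i, ∑ t : (S i), ∑ j,
            ((t : H × X).1 * π i j) ⊗ₜ[ℂ] ((t : H × X).2 • d (e j))) := by
      rw [← eqA, ← eqB]
    rw [map_sum, map_sum] at h6
    simp only [map_sum, hψ] at h6
    calc ∑ t, (Coalgebra.counit (R := ℂ) ((P (a2 t) k : X) : H)) • a1 t
        = ∑ t, (Coalgebra.counit (R := ℂ) ((coeff (d (a2 t)) k : X) : H)) • a1 t := by
          refine Finset.sum_congr rfl fun t _ => ?_
          rw [hcd]
      _ = ∑ i, ∑ t : (S i), ∑ j,
            (Coalgebra.counit (R := ℂ) ((coeff ((t : H × X).2 • d (e j)) k : X) : H)) •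
              ((t : H × X).1 * π i j) := h6
      _ = ∑ i, ∑ t : (S i),
            (Coalgebra.counit (R := ℂ) (((t : H × X).2 : X) : H)) •
              ((t : H × X).1 * π i k) := by
          refine Finset.sum_congr rfl fun i _ => Finset.sum_congr rfl fun t _ => ?_
          rw [Finset.sum_eq_single k]
          · rw [hbasic]; simp
          · intro j _ hj
            rw [hbasic]
            simp [Ne.symm hj]
          · simp
      _ = ∑ i, (∑ t : (S i),
            (Coalgebra.counit (R := ℂ) (((t : H × X).2 : X) : H)) • (t : H × X).1) * π i k := by
          refine Finset.sum_congr rfl fun i _ => ?_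
          rw [Finset.sum_mul]
          refine Finset.sum_congr rfl fun t _ => ?_
          rw [smul_mul_assoc]
      _ = ∑ i, ((P a i : X) : H) * π i k := by
          refine Finset.sum_congr rfl fun i _ => ?_
          rw [hcounit i]
  -- antipode identity
  have hanti : ∀ i k : Fin M, ∑ j, π i j * HopfAlgebra.antipode (R := ℂ) (π j k)
      = if i = k then 1 else 0 := by
    intro i k
    have h7 := HopfAlgebra.mul_antipode_lTensor_comul_apply (R := ℂ) (π i k)
    rw [hΔπ i k, map_sum, map_sum] at h7
    simp only [LinearMap.lTensor_tmul, LinearMap.mul'_apply] at h7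
    rw [h7, hεπ i k]
    simp [Algebra.algebraMap_eq_smul_one, apply_ite (fun c : ℂ => c • (1 : H))]
  -- conclude
  calc ((P a i₀ : X) : H)
      = ∑ i, ((P a i : X) : H) * (if i = i₀ then 1 else 0) := by
        rw [Finset.sum_eq_single i₀] <;> simp +contextual
    _ = ∑ i, ((P a i : X) : H) * (∑ j, π i j * HopfAlgebra.antipode (R := ℂ) (π j i₀)) := by
        refine Finset.sum_congr rfl fun i _ => ?_
        rw [hanti i i₀]
    _ = ∑ i, ∑ j, ((P a i : X) : H) * π i j * HopfAlgebra.antipode (R := ℂ) (π j i₀) := by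
        refine Finset.sum_congr rfl fun i _ => ?_
        rw [Finset.mul_sum]
        refine Finset.sum_congr rfl fun j _ => ?_
        rw [mul_assoc]
    _ = ∑ j, (∑ i, ((P a i : X) : H) * π i j) * HopfAlgebra.antipode (R := ℂ) (π j i₀) := by
        rw [Finset.sum_comm]
        refine Finset.sum_congr rfl fun j _ => ?_
        rw [Finset.sum_mul]
    _ = ∑ j, (∑ t, (Coalgebra.counit (R := ℂ) ((P (a2 t) j : X) : H)) • a1 t) *
          HopfAlgebra.antipode (R := ℂ) (π j i₀) := by
        refine Finset.sum_congr rfl fun j _ => ?_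
        rw [key j]
    _ = ∑ t, ∑ j, (Coalgebra.counit (R := ℂ) ((P (a2 t) j : X) : H)) •
          (a1 t * HopfAlgebra.antipode (R := ℂ) (π j i₀)) := by
        rw [Finset.sum_comm]
        refine Finset.sum_congr rfl fun j _ => ?_
        rw [Finset.sum_mul]
        refine Finset.sum_congr rfl fun t _ => ?_
        rw [smul_mul_assoc]
end

section
/- Let (Γ, d) be a covariant free first order differential calculus on a left coideal subalgebra X of a Hopf algebra H. Then for each i, the functional ε∘∂_i lies in the restricted dual X°, and Δ(ε∘∂_i) = Σ_j (ε∘∂_j) ⊗ (ε∘∂^j_i) + ε ⊗ (ε∘∂_i); in particular span{ε, ε∘∂_1, …, ε∘∂_M} is a right coideal of X°. -/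
/-!
Freeness and the Leibniz rule give `∂_j(ab) = a ∂_j(b) + Σ_i ∂_i(a) ∂^i_j(b)`; applying the
character `ε` yields the formula for `Δ(ε∘∂_i)`, which says that
`V = span{ε, ε∘∂_1, …, ε∘∂_M}` is stable under the right translations `φ ↦ φ(· b)`. For any
finite-dimensional translation-stable `V` with basis `(φ_k)`, expanding `ψ(· b) ∈ V` gives
`ψ(ab) = Σ_k φ_k(a) c_k(b)`, and the coefficients `c_k` are matrix coefficients of the right
regular representation on `V`, hence lie in `X°` themselves.
-/

open TensorProduct MulOpposite

/-- A linear functional `f` on an algebra `A` belongs to the restricted dual `A°` iff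
`f(ab) = Σ_i g_i(a) h_i(b)` for finitely many functionals `g_i, h_i`. -/
def InRestrictedDual {A : Type} [Ring A] [Algebra ℂ A] (f : A →ₗ[ℂ] ℂ) : Prop :=
  ∃ (n : ℕ) (g h : Fin n → (A →ₗ[ℂ] ℂ)), ∀ a b : A, f (a * b) = ∑ k, g k a * h k b

section RestrictedDual

variable {A : Type} [Ring A] [Algebra ℂ A]

def rightTranslate (φ : A →ₗ[ℂ] ℂ) : A →ₗ[ℂ] A →ₗ[ℂ] ℂ :=
  (LinearMap.llcomp ℂ A A ℂ φ).comp (LinearMap.mul ℂ A).flip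

@[simp]
lemma rightTranslate_apply (φ : A →ₗ[ℂ] ℂ) (b a : A) : rightTranslate φ b a = φ (a * b) := rfl

variable {V : Submodule ℂ (A →ₗ[ℂ] ℂ)} (hV : ∀ φ ∈ V, ∀ b : A, rightTranslate φ b ∈ V)
  {n : ℕ} (bas : Module.Basis (Fin n) ℂ V)

noncomputable def translateCoeff (φ : A →ₗ[ℂ] ℂ) (hφ : φ ∈ V) (k : Fin n) : A →ₗ[ℂ] ℂ :=
  (bas.coord k).comp ((rightTranslate φ).codRestrict V (hV φ hφ))

lemma apply_mul_eq_sum_translateCoeff (φ : A →ₗ[ℂ] ℂ) (hφ : φ ∈ V) (a b : A) :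
    φ (a * b) = ∑ k, (bas k : A →ₗ[ℂ] ℂ) a * translateCoeff hV bas φ hφ k b := by
  have hexpand := congrArg (fun ψ : V => (ψ : A →ₗ[ℂ] ℂ) a)
    (bas.sum_repr ((rightTranslate φ).codRestrict V (hV φ hφ) b))
  simp only [Submodule.coe_sum, Submodule.coe_smul, LinearMap.coe_sum, Finset.sum_apply,
    LinearMap.smul_apply, smul_eq_mul, LinearMap.codRestrict_apply, rightTranslate_apply] at hexpand
  rw [← hexpand]
  exact Finset.sum_congr rfl fun k _ => mul_comm _ _

lemma translateCoeff_mul (ψ : A →ₗ[ℂ] ℂ) (hψ : ψ ∈ V) (k : Fin n) (b c : A) :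
    translateCoeff hV bas ψ hψ k (b * c) =
      ∑ l, translateCoeff hV bas (bas l) (bas l).2 k b * translateCoeff hV bas ψ hψ l c := by
  have hexpand : (rightTranslate ψ).codRestrict V (hV ψ hψ) (b * c) =
      ∑ l, translateCoeff hV bas ψ hψ l c •
        (rightTranslate (bas l : A →ₗ[ℂ] ℂ)).codRestrict V (hV _ (bas l).2) b := by
    ext a
    simp only [LinearMap.codRestrict_apply, rightTranslate_apply, Submodule.coe_sum,
      Submodule.coe_smul, LinearMap.coe_sum, Finset.sum_apply, LinearMap.smul_apply, smul_eq_mul]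
    rw [← mul_assoc, apply_mul_eq_sum_translateCoeff hV bas ψ hψ]
    exact Finset.sum_congr rfl fun l _ => mul_comm _ _
  simp only [translateCoeff, LinearMap.comp_apply, hexpand, map_sum, map_smul, smul_eq_mul]
  exact Finset.sum_congr rfl fun l _ => mul_comm _ _

lemma inRestrictedDual_translateCoeff (ψ : A →ₗ[ℂ] ℂ) (hψ : ψ ∈ V) (k : Fin n) :
    InRestrictedDual (translateCoeff hV bas ψ hψ k) :=
  ⟨n, fun l => translateCoeff hV bas (bas l) (bas l).2 k, fun l => translateCoeff hV bas ψ hψ l,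
    translateCoeff_mul hV bas ψ hψ k⟩

variable [FiniteDimensional ℂ V]

include hV in
theorem exists_sum_mul_of_mem_of_rightTranslate_mem (ψ : A →ₗ[ℂ] ℂ) (hψ : ψ ∈ V) :
    ∃ (n : ℕ) (g h : Fin n → (A →ₗ[ℂ] ℂ)),
      (∀ k, g k ∈ V) ∧ (∀ k, InRestrictedDual (h k)) ∧
      ∀ a b : A, ψ (a * b) = ∑ k, g k a * h k b :=
  let bas := Module.finBasis ℂ V
  ⟨_, fun k => bas k, translateCoeff hV bas ψ hψ, fun k => (bas k).2,
    inRestrictedDual_translateCoeff hV bas ψ hψ, apply_mul_eq_sum_translateCoeff hV bas ψ hψ⟩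

include hV in
theorem inRestrictedDual_of_mem_of_rightTranslate_mem (ψ : A →ₗ[ℂ] ℂ) (hψ : ψ ∈ V) :
    InRestrictedDual ψ :=
  let ⟨n, g, h, _, _, hψ_mul⟩ := exists_sum_mul_of_mem_of_rightTranslate_mem hV ψ hψ
  ⟨n, g, h, hψ_mul⟩

end RestrictedDual

theorem rightTranslate_mem_span_singleton_union_range {A ι : Type} [Ring A] [Algebra ℂ A]
    [Fintype ι]
    (ε : A →ₐ[ℂ] ℂ) (χ : ι → (A →ₗ[ℂ] ℂ)) (q : A → ι → ι → ℂ)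
    (hχ : ∀ i a b, χ i (a * b) = ∑ j, χ j a * q b j i + ε a * χ i b) :
    ∀ φ ∈ Submodule.span ℂ ({ε.toLinearMap} ∪ Set.range χ), ∀ b : A,
      rightTranslate φ b ∈ Submodule.span ℂ ({ε.toLinearMap} ∪ Set.range χ) := by
  set V := Submodule.span ℂ ({ε.toLinearMap} ∪ Set.range χ)
  have hε_mem : ε.toLinearMap ∈ V := Submodule.subset_span (Or.inl rfl)
  have hχ_mem (j : ι) : χ j ∈ V := Submodule.subset_span (Or.inr ⟨j, rfl⟩)
  intro φ hφ b
  suffices V ≤ V.comap (LinearMap.mulRight ℂ b).dualMap from this hφ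
  refine Submodule.span_le.mpr ?_
  rintro _ (rfl | ⟨i, rfl⟩)
  · have hε_translate : (LinearMap.mulRight ℂ b).dualMap ε.toLinearMap = ε b • ε.toLinearMap := by
      ext a
      simp [mul_comm]
    simpa [hε_translate] using V.smul_mem (ε b) hε_mem
  · have hχ_translate : (LinearMap.mulRight ℂ b).dualMap (χ i) =
        ∑ j, q b j i • χ j + χ i b • ε.toLinearMap := by
      ext a
      simp [hχ, mul_comm]
    simpa [hχ_translate] using
      add_mem (V.sum_mem fun j _ => V.smul_mem (q b j i) (hχ_mem j)) (V.smul_mem (χ i b) hε_mem)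

theorem coeff_mul_of_leibniz {R Γ ι : Type} [Ring R] [Fintype ι] [AddCommGroup Γ] [Module R Γ]
    [Module Rᵐᵒᵖ Γ] [SMulCommClass R Rᵐᵒᵖ Γ] (d : R → Γ) (v : ι → Γ)
    (leibniz : ∀ a b : R, d (a * b) = a • d b + op b • d a)
    (free : ∀ ω : Γ, ∃! c : ι → R, ω = ∑ i, c i • v i)
    (P : R → ι → R) (hP : ∀ a, d a = ∑ i, P a i • v i)
    (Q : R → ι → ι → R) (hQ : ∀ a i, op a • v i = ∑ j, Q a i j • v j) (a b : R) :
    P (a * b) = fun j => a * P b j + ∑ i, P a i * Q b i j := by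
  obtain ⟨c, -, hc_unique⟩ := free (d (a * b))
  refine (hc_unique _ (hP _)).trans (hc_unique _ ?_).symm
  calc d (a * b) = a • d b + op b • d a := leibniz a b
    _ = ∑ j, (a * P b j) • v j + ∑ i, ∑ j, (P a i * Q b i j) • v j := by
      rw [hP b, hP a, Finset.smul_sum, Finset.smul_sum]
      congr 1
      · simp only [smul_smul]
      · refine Finset.sum_congr rfl fun i _ => ?_
        rw [← smul_comm (P a i) (op b), hQ, Finset.smul_sum]
        simp only [smul_smul]
    _ = ∑ j, (a * P b j + ∑ i, P a i * Q b i j) • v j := by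
      rw [Finset.sum_comm (s := Finset.univ), ← Finset.sum_add_distrib]
      simp only [add_smul, Finset.sum_smul]

theorem stmt5_general
    {H : Type} [Ring H] [HopfAlgebra ℂ H] (X : Subalgebra ℂ H)
    {M : ℕ} (e : Fin M → X)
    {Γ : Type} [AddCommGroup Γ] [Module ℂ Γ] [Module X Γ] [Module Xᵐᵒᵖ Γ]
    [SMulCommClass X Xᵐᵒᵖ Γ]
    (d : X →ₗ[ℂ] Γ)
    (leibniz : ∀ a b : X, d (a * b) = a • d b + op b • d a)
    (free : ∀ ω : Γ, ∃! c : Fin M → X, ω = ∑ i, c i • d (e i))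
    (P : X → Fin M → X) (hP : ∀ a, d a = ∑ i, P a i • d (e i))
    (Q : X → Fin M → Fin M → X)
    (hQ : ∀ a i, op a • d (e i) = ∑ j, Q a i j • d (e j))
    -- the functionals ε∘∂_i, realized as linear maps
    (χ : Fin M → (X →ₗ[ℂ] ℂ))
    (hχ : ∀ i (a : X), χ i a = Coalgebra.counit (R := ℂ) ((P a i : H))) :
    -- (a) each ε∘∂_i lies in the restricted dual X°
    (∀ i, InRestrictedDual (χ i)) ∧
    -- (b) Δ(ε∘∂_i) = Σ_j (ε∘∂_j) ⊗ (ε∘∂^j_i) + ε ⊗ (ε∘∂_i)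
    (∀ (i : Fin M) (a b : X),
      χ i (a * b) =
        (∑ j, χ j a * Coalgebra.counit (R := ℂ) ((Q b j i : H)))
          + Coalgebra.counit (R := ℂ) ((a : H)) * χ i b) ∧
    -- (c) span{ε, χ_1, …, χ_M} is a right coideal of X°
    (∀ f : X →ₗ[ℂ] ℂ,
      f ∈ Submodule.span ℂ
        ({(Coalgebra.counit (R := ℂ)).comp X.val.toLinearMap} ∪ Set.range χ) →
      ∃ (n : ℕ) (g h : Fin n → (X →ₗ[ℂ] ℂ)),
        (∀ k, g k ∈ Submodule.span ℂ
          ({(Coalgebra.counit (R := ℂ)).comp X.val.toLinearMap} ∪ Set.range χ)) ∧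
        (∀ k, InRestrictedDual (h k)) ∧
        (∀ a b : X, f (a * b) = ∑ k, g k a * h k b)) := by
  let ε : X →ₐ[ℂ] ℂ := (Bialgebra.counitAlgHom ℂ H).comp X.val
  have hχ_mul (i : Fin M) (a b : X) : χ i (a * b) =
      ∑ j, χ j a * Coalgebra.counit (R := ℂ) ((Q b j i : H)) + ε a * χ i b := by
    have hP_mul := congrFun (coeff_mul_of_leibniz d (fun i => d (e i)) leibniz free P hP Q hQ a b) i
    rw [hχ, hP_mul]
    push_cast
    simp only [map_add, map_sum, Bialgebra.counit_mul, ← hχ]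
    exact add_comm _ _
  set V := Submodule.span ℂ ({(Coalgebra.counit (R := ℂ)).comp X.val.toLinearMap} ∪ Set.range χ)
  have hV : ∀ φ ∈ V, ∀ b, rightTranslate φ b ∈ V :=
    rightTranslate_mem_span_singleton_union_range ε χ _ hχ_mul
  have : FiniteDimensional ℂ V :=
    FiniteDimensional.span_of_finite ℂ ((Set.finite_singleton _).union (Set.finite_range _))
  exact ⟨fun i => inRestrictedDual_of_mem_of_rightTranslate_mem hV (χ i)
      (Submodule.subset_span (Or.inr ⟨i, rfl⟩)),
    hχ_mul, exists_sum_mul_of_mem_of_rightTranslate_mem hV⟩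

/-- for a covariant free first order differential calculus on a left coideal
subalgebra `X ⊆ H`, the functionals `ε∘∂_i` lie in `X°`, satisfy
`Δ(ε∘∂_i) = Σ_j (ε∘∂_j) ⊗ (ε∘∂^j_i) + ε ⊗ (ε∘∂_i)`, and
`span{ε, ε∘∂_1, …, ε∘∂_M}` is a right coideal of `X°`. -/
theorem stmt5
    {H : Type} [Ring H] [HopfAlgebra ℂ H] (X : Subalgebra ℂ H)
    (comulX : X →ₗ[ℂ] H ⊗[ℂ] X)
    (hcomulX : ∀ a : X,
      (TensorProduct.map (LinearMap.id) X.val.toLinearMap) (comulX a)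
        = Coalgebra.comul (R := ℂ) (a : H))
    {M : ℕ} (e : Fin M → X) (π : Fin M → Fin M → H)
    (hπ : ∀ i, comulX (e i) = ∑ j, π i j ⊗ₜ[ℂ] e j)
    (hΔπ : ∀ i j, Coalgebra.comul (R := ℂ) (π i j) = ∑ k, π i k ⊗ₜ[ℂ] π k j)
    (hεπ : ∀ i j, Coalgebra.counit (R := ℂ) (π i j) = if i = j then 1 else 0)
    {Γ : Type} [AddCommGroup Γ] [Module ℂ Γ] [Module X Γ] [Module Xᵐᵒᵖ Γ]
    [SMulCommClass X Xᵐᵒᵖ Γ] [IsScalarTower ℂ X Γ]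
    (d : X →ₗ[ℂ] Γ)
    (leibniz : ∀ a b : X, d (a * b) = a • d b + op b • d a)
    (free : ∀ ω : Γ, ∃! c : Fin M → X, ω = ∑ i, c i • d (e i))
    (P : X → Fin M → X) (hP : ∀ a, d a = ∑ i, P a i • d (e i))
    (Q : X → Fin M → Fin M → X)
    (hQ : ∀ a i, op a • d (e i) = ∑ j, Q a i j • d (e j))
    (covariant : ∃ ΔΓ : Γ →ₗ[ℂ] H ⊗[ℂ] Γ,
      ∀ (a b : X) (ι κ : Type) (_ : Fintype ι) (_ : Fintype κ)
        (a1 : ι → H) (a2 : ι → X) (b1 : κ → H) (b2 : κ → X),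
        comulX a = ∑ t, a1 t ⊗ₜ[ℂ] a2 t → comulX b = ∑ s, b1 s ⊗ₜ[ℂ] b2 s →
        ΔΓ (a • d b) = ∑ t, ∑ s, (a1 t * b1 s) ⊗ₜ[ℂ] (a2 t • d (b2 s)))
    -- the functionals ε∘∂_i, realized as linear maps
    (χ : Fin M → (X →ₗ[ℂ] ℂ))
    (hχ : ∀ i (a : X), χ i a = Coalgebra.counit (R := ℂ) ((P a i : H))) :
    -- (a) each ε∘∂_i lies in the restricted dual X°
    (∀ i, InRestrictedDual (χ i)) ∧
    -- (b) Δ(ε∘∂_i) = Σ_j (ε∘∂_j) ⊗ (ε∘∂^j_i) + ε ⊗ (ε∘∂_i)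
    (∀ (i : Fin M) (a b : X),
      χ i (a * b) =
        (∑ j, χ j a * Coalgebra.counit (R := ℂ) ((Q b j i : H)))
          + Coalgebra.counit (R := ℂ) ((a : H)) * χ i b) ∧
    -- (c) span{ε, χ_1, …, χ_M} is a right coideal of X°
    (∀ f : X →ₗ[ℂ] ℂ,
      f ∈ Submodule.span ℂ
        ({(Coalgebra.counit (R := ℂ)).comp X.val.toLinearMap} ∪ Set.range χ) →
      ∃ (n : ℕ) (g h : Fin n → (X →ₗ[ℂ] ℂ)),
        (∀ k, g k ∈ Submodule.span ℂ
          ({(Coalgebra.counit (R := ℂ)).comp X.val.toLinearMap} ∪ Set.range χ)) ∧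
        (∀ k, InRestrictedDual (h k)) ∧
        (∀ a b : X, f (a * b) = ∑ k, g k a * h k b)) :=
  stmt5_general X e d leibniz free P hP Q hQ χ hχ
end

section
/- Let H be a Hopf algebra, X a subalgebra, and R a right ideal of X with ε(R) = {0}. Set p : X → X/span(R ∪ {1}) the canonical projection, define a·db := a b_{(1)} ⊗ p(b_{(2)}) ∈ H ⊗ (X/span(R ∪ {1})), Γ := span{a·db | a,b ∈ X}, with right module structure determined by (db)·c := d(bc) − b·dc. Then (Γ, d) with d b := 1·db is a well-defined covariant first order differential calculus on X. -/
/-!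
Write `π = id ⊗ p : H ⊗ X → H ⊗ (X ⧸ N)` and `Δ'` for the coproduct of `X`, so that
`d b = π (Δ' b)`. Both maps are prescribed on the generators `a · db`, and each is well defined
because it is the restriction of a linear map defined on the whole of `H ⊗ (X ⧸ N)`.

For the right action by `c`, the map `x ↦ π((1 ⊗ x) Δ'c) - ε(x) π(Δ'c)` kills `R` (a right ideal
killed by `ε`) and `1`, so it factors through `X ⧸ N`; its `H`-linear extension sends `db` to
`d(bc) - b · dc` because `Δ'` is multiplicative and `(id ⊗ ε) Δ' = id`. For covariance, `Δ ⊗ id`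
sends `a · db` to `a₍₁₎ b₍₁₎ ⊗ a₍₂₎ · d b₍₂₎` by multiplicativity and coassociativity of `Δ`.
-/

open TensorProduct

namespace LeftCoidealSubalgebra

variable {K H : Type*} [Field K] [Ring H] [Bialgebra K H] {X : Subalgebra K H}

theorem lTensor_val_injective (M : Type*) [AddCommGroup M] [Module K M] :
    Function.Injective (X.val.toLinearMap.lTensor M) :=
  Module.Flat.lTensor_preserves_injective_linearMap _ Subtype.val_injective

theorem lTensor_val_mul (u v : H ⊗[K] X) :
    X.val.toLinearMap.lTensor H (u * v) =
      X.val.toLinearMap.lTensor H u * X.val.toLinearMap.lTensor H v :=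
  map_mul (Algebra.TensorProduct.map (AlgHom.id K H) X.val) u v

variable (X) in
noncomputable def counitContract : H ⊗[K] X →ₗ[K] H :=
  TensorProduct.rid K H ∘ₗ (Coalgebra.counit ∘ₗ X.val.toLinearMap).lTensor H

theorem counitContract_tmul (h : H) (x : X) :
    counitContract X (h ⊗ₜ x) = Coalgebra.counit (R := K) (x : H) • h := by
  simp [counitContract]

section comul

variable {comulX : X →ₗ[K] H ⊗[K] X}
  (hcomulX : ∀ a : X, X.val.toLinearMap.lTensor H (comulX a) = Coalgebra.comul (a : H))
include hcomulX

theorem comulX_mul (b c : X) : comulX (b * c) = comulX b * comulX c :=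
  lTensor_val_injective H <| by
    rw [lTensor_val_mul, hcomulX, hcomulX, hcomulX, Subalgebra.coe_mul, Bialgebra.comul_mul]

theorem comulX_coassoc (b : X) :
    (TensorProduct.assoc K H H X).symm (comulX.lTensor H (comulX b)) =
      (Coalgebra.comul (R := K)).rTensor X (comulX b) := by
  apply lTensor_val_injective (H ⊗[K] H)
  calc X.val.toLinearMap.lTensor (H ⊗[K] H)
          ((TensorProduct.assoc K H H X).symm (comulX.lTensor H (comulX b)))
      = (TensorProduct.assoc K H H H).symm
          ((X.val.toLinearMap.lTensor H ∘ₗ comulX).lTensor H (comulX b)) := by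
        simp [LinearMap.lTensor_tensor, LinearMap.lTensor_comp]
    _ = (TensorProduct.assoc K H H H).symm
          ((Coalgebra.comul (R := K)).lTensor H (Coalgebra.comul (b : H))) := by
        rw [show X.val.toLinearMap.lTensor H ∘ₗ comulX = Coalgebra.comul ∘ₗ X.val.toLinearMap
          from LinearMap.ext hcomulX, LinearMap.lTensor_comp, LinearMap.comp_apply, hcomulX]
    _ = (Coalgebra.comul (R := K)).rTensor H (X.val.toLinearMap.lTensor H (comulX b)) := by
        rw [Coalgebra.coassoc_symm_apply, hcomulX]
    _ = X.val.toLinearMap.lTensor (H ⊗[K] H)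
          ((Coalgebra.comul (R := K)).rTensor X (comulX b)) := by
        rw [← LinearMap.comp_apply (LinearMap.rTensor H _), LinearMap.rTensor_comp_lTensor,
          ← LinearMap.lTensor_comp_rTensor, LinearMap.comp_apply]

theorem counitContract_comulX (b : X) : counitContract X (comulX b) = b := by
  rw [counitContract, LinearMap.lTensor_comp, LinearMap.comp_apply, LinearMap.comp_apply,
    hcomulX, Coalgebra.lTensor_counit_comul]
  simp

end comul

section quotient

variable (N : Submodule K X)

theorem lTensor_mkQ_tmul_mul (h : H) (x : X) (w : H ⊗[K] X) :
    N.mkQ.lTensor H ((h ⊗ₜ x) * w) = h • N.mkQ.lTensor H ((1 ⊗ₜ x) * w) := by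
  have hsmul : h ⊗ₜ[K] x = h • (1 ⊗ₜ[K] x : H ⊗[K] X) := by rw [smul_tmul', smul_eq_mul, mul_one]
  rw [hsmul, smul_mul_assoc]
  exact (AlgebraTensorModule.lTensor H H N.mkQ).map_smul h _

theorem lTensor_mkQ_one_tmul_mul_eq_zero {ρ : X} (hρ : ∀ x : X, ρ * x ∈ N) (w : H ⊗[K] X) :
    N.mkQ.lTensor H ((1 ⊗ₜ ρ) * w) = 0 := by
  induction w using TensorProduct.induction_on with
  | zero => simp
  | tmul h x => simp [(Submodule.Quotient.mk_eq_zero N).2 (hρ x)]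
  | add u v hu hv => rw [mul_add, map_add, hu, hv, add_zero]

variable (comulX : X →ₗ[K] H ⊗[K] X)

noncomputable def diff : X →ₗ[K] H ⊗[K] (X ⧸ N) :=
  N.mkQ.lTensor H ∘ₗ comulX

/-- The right action of `c` on `1 ⊗ p(x)`, before passing to the quotient. -/
noncomputable def rightActionOneTmul (c : X) : X →ₗ[K] H ⊗[K] (X ⧸ N) :=
  N.mkQ.lTensor H ∘ₗ LinearMap.mulRight K (comulX c) ∘ₗ TensorProduct.mk K H X 1
    - (Coalgebra.counit ∘ₗ X.val.toLinearMap).smulRight (diff N comulX c)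

theorem rightActionOneTmul_apply (c x : X) :
    rightActionOneTmul N comulX c x =
      N.mkQ.lTensor H ((1 ⊗ₜ x) * comulX c) - Coalgebra.counit (R := K) (x : H) • diff N comulX c :=
  rfl

theorem le_ker_rightActionOneTmul {R : Submodule K X} (hRideal : ∀ ρ ∈ R, ∀ x : X, ρ * x ∈ R)
    (hεR : ∀ ρ ∈ R, Coalgebra.counit (R := K) (ρ : H) = 0) (hN : N = R ⊔ Submodule.span K {1})
    (c : X) : N ≤ LinearMap.ker (rightActionOneTmul N comulX c) := by
  subst hN
  refine sup_le (fun ρ hρ => ?_) ?_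
  · rw [LinearMap.mem_ker, rightActionOneTmul_apply, hεR ρ hρ, zero_smul, sub_zero]
    exact lTensor_mkQ_one_tmul_mul_eq_zero _ (fun x => Submodule.mem_sup_left (hRideal ρ hρ x)) _
  · rw [Submodule.span_le, Set.singleton_subset_iff, SetLike.mem_coe, LinearMap.mem_ker,
      rightActionOneTmul_apply, ← Algebra.TensorProduct.one_def, one_mul, OneMemClass.coe_one,
      Bialgebra.counit_one, one_smul, diff, LinearMap.comp_apply, sub_self]

noncomputable def rightAction (c : X) (hc : N ≤ LinearMap.ker (rightActionOneTmul N comulX c)) :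
    H ⊗[K] (X ⧸ N) →ₗ[H] H ⊗[K] (X ⧸ N) :=
  AlgebraTensorModule.lift (LinearMap.toSpanSingleton H _ (N.liftQ _ hc))

variable {N comulX}

theorem rightAction_tmul_mk (c : X) (hc : N ≤ LinearMap.ker (rightActionOneTmul N comulX c))
    (h : H) (x : X) :
    rightAction N comulX c hc (h ⊗ₜ Submodule.Quotient.mk x) =
      h • rightActionOneTmul N comulX c x :=
  rfl

theorem rightAction_lTensor_mkQ (c : X) (hc : N ≤ LinearMap.ker (rightActionOneTmul N comulX c))
    (w : H ⊗[K] X) :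
    rightAction N comulX c hc (N.mkQ.lTensor H w) =
      N.mkQ.lTensor H (w * comulX c) - counitContract X w • diff N comulX c := by
  induction w using TensorProduct.induction_on with
  | zero => simp
  | tmul h x =>
    rw [LinearMap.lTensor_tmul, Submodule.mkQ_apply, rightAction_tmul_mk, rightActionOneTmul_apply,
      smul_sub, ← lTensor_mkQ_tmul_mul, counitContract_tmul, smul_comm, smul_assoc]
  | add u v hu hv =>
    rw [map_add, map_add, hu, hv, add_mul, map_add, map_add, add_smul]
    abel

theorem rightAction_diff
    (hcomulX : ∀ a : X, X.val.toLinearMap.lTensor H (comulX a) = Coalgebra.comul (a : H))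
    (c : X) (hc : N ≤ LinearMap.ker (rightActionOneTmul N comulX c)) (b : X) :
    rightAction N comulX c hc (diff N comulX b) =
      diff N comulX (b * c) - (b : H) • diff N comulX c := by
  rw [diff, LinearMap.comp_apply, rightAction_lTensor_mkQ, counitContract_comulX hcomulX,
    ← comulX_mul hcomulX]
  rfl

variable {R : Submodule K X}

theorem sum_smul_diff_mul_sub_eq_zero
    (hcomulX : ∀ a : X, X.val.toLinearMap.lTensor H (comulX a) = Coalgebra.comul (a : H))
    (hRideal : ∀ ρ ∈ R, ∀ x : X, ρ * x ∈ R) (hεR : ∀ ρ ∈ R, Coalgebra.counit (R := K) (ρ : H) = 0)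
    (hN : N = R ⊔ Submodule.span K {1}) (c : X) {ι : Type*} [Fintype ι] (a b : ι → X)
    (hab : ∑ k, (a k : H) • diff N comulX (b k) = 0) :
    ∑ k, ((a k : H) • diff N comulX (b k * c) - ((a k * b k : X) : H) • diff N comulX c) = 0 := by
  set F := rightAction N comulX c (le_ker_rightActionOneTmul N comulX hRideal hεR hN c)
  calc _ = ∑ k, F ((a k : H) • diff N comulX (b k)) := by
        refine Finset.sum_congr rfl fun k _ => ?_
        rw [map_smul, rightAction_diff hcomulX, smul_sub, Subalgebra.coe_mul, mul_smul]
    _ = 0 := by rw [← map_sum, hab, map_zero]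

end quotient

section coaction

variable (N : Submodule K X)

noncomputable def leftCoaction : H ⊗[K] (X ⧸ N) →ₗ[K] H ⊗[K] (H ⊗[K] (X ⧸ N)) :=
  (TensorProduct.assoc K H H (X ⧸ N)).toLinearMap ∘ₗ (Coalgebra.comul (R := K)).rTensor (X ⧸ N)

noncomputable def mulLeftMkQ (A : H ⊗[K] H) : (H ⊗[K] H) ⊗[K] X →ₗ[K] H ⊗[K] (H ⊗[K] (X ⧸ N)) :=
  (TensorProduct.assoc K H H (X ⧸ N)).toLinearMap ∘ₗ TensorProduct.map (LinearMap.mulLeft K A) N.mkQ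

theorem mulLeftMkQ_comul_rTensor_comul (a : H) (w : H ⊗[K] X) :
    mulLeftMkQ N (Coalgebra.comul a) ((Coalgebra.comul (R := K)).rTensor X w) =
      leftCoaction N (a • N.mkQ.lTensor H w) := by
  induction w using TensorProduct.induction_on with
  | zero => simp
  | tmul h x => simp [mulLeftMkQ, leftCoaction, smul_tmul', Bialgebra.comul_mul]
  | add u v hu hv => rw [map_add, map_add, hu, hv, map_add, smul_add, map_add]

theorem mulLeftMkQ_assoc_symm_tmul {ι : Type*} [Fintype ι] (a1 : ι → H) (a2 : ι → X)
    {A : H ⊗[K] H} (hA : A = ∑ t, a1 t ⊗ₜ (a2 t : H)) (h : H) (w : H ⊗[K] X) :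
    mulLeftMkQ N A ((TensorProduct.assoc K H H X).symm (h ⊗ₜ w)) =
      ∑ t, (a1 t * h) ⊗ₜ ((a2 t : H) • N.mkQ.lTensor H w) := by
  induction w using TensorProduct.induction_on with
  | zero => simp
  | tmul h' x => simp [mulLeftMkQ, hA, Finset.sum_mul, sum_tmul, smul_tmul']
  | add u v hu hv => simp only [tmul_add, map_add, hu, hv, smul_add, ← Finset.sum_add_distrib]

variable {N} {comulX : X →ₗ[K] H ⊗[K] X}
  (hcomulX : ∀ a : X, X.val.toLinearMap.lTensor H (comulX a) = Coalgebra.comul (a : H))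
include hcomulX

theorem sum_tmul_smul_diff_eq_leftCoaction {ι κ : Type*} [Fintype ι] [Fintype κ] (a b : X)
    (a1 : ι → H) (a2 : ι → X) (b1 : κ → H) (b2 : κ → X)
    (ha : comulX a = ∑ t, a1 t ⊗ₜ a2 t) (hb : comulX b = ∑ s, b1 s ⊗ₜ b2 s) :
    ∑ t, ∑ s, (a1 t * b1 s) ⊗ₜ ((a2 t : H) • diff N comulX (b2 s)) =
      leftCoaction N ((a : H) • diff N comulX b) := by
  have hA : Coalgebra.comul (R := K) (a : H) = ∑ t, a1 t ⊗ₜ (a2 t : H) := by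
    rw [← hcomulX, ha, map_sum]
    rfl
  calc _ = ∑ s, mulLeftMkQ N (Coalgebra.comul (a : H))
        ((TensorProduct.assoc K H H X).symm (b1 s ⊗ₜ comulX (b2 s))) := by
        rw [Finset.sum_comm]
        simp only [mulLeftMkQ_assoc_symm_tmul N a1 a2 hA, diff, LinearMap.comp_apply]
    _ = mulLeftMkQ N (Coalgebra.comul (a : H))
        ((TensorProduct.assoc K H H X).symm (comulX.lTensor H (comulX b))) := by
        rw [hb, map_sum, map_sum, map_sum]
        rfl
    _ = leftCoaction N ((a : H) • diff N comulX b) := by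
        rw [comulX_coassoc hcomulX, mulLeftMkQ_comul_rTensor_comul]
        rfl

theorem sum_sum_tmul_smul_diff_eq_zero {m ι κ : Type*} [Fintype m] [Fintype ι] [Fintype κ]
    (a b : m → X) (hab : ∑ k, (a k : H) • diff N comulX (b k) = 0)
    (a1 : m → ι → H) (a2 : m → ι → X) (b1 : m → κ → H) (b2 : m → κ → X)
    (ha : ∀ k, comulX (a k) = ∑ t, a1 k t ⊗ₜ a2 k t)
    (hb : ∀ k, comulX (b k) = ∑ s, b1 k s ⊗ₜ b2 k s) :
    ∑ k, ∑ t, ∑ s, (a1 k t * b1 k s) ⊗ₜ[K] ((a2 k t : H) • diff N comulX (b2 k s)) = 0 := by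
  rw [Finset.sum_congr rfl fun k _ => sum_tmul_smul_diff_eq_leftCoaction hcomulX (a k) (b k)
    (a1 k) (a2 k) (b1 k) (b2 k) (ha k) (hb k), ← map_sum, hab, map_zero]

end coaction

end LeftCoidealSubalgebra

/-- any right ideal `R` of a left coideal subalgebra `X ⊆ H` with
`ε(R) = 0` gives rise to a covariant first order differential calculus on `X` via
`a db := a b₍₁₎ ⊗ p(b₍₂₎)`, `p : X → X/span(R ∪ {1})`, with right module structure
determined by the Leibniz rule.  Well-definedness of the right action and of the
covariance map are the assertions below. -/
theorem stmt7
    {H : Type} [Ring H] [HopfAlgebra ℂ H] (X : Subalgebra ℂ H)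
    (comulX : X →ₗ[ℂ] H ⊗[ℂ] X)
    (hcomulX : ∀ a : X,
      (TensorProduct.map (LinearMap.id) X.val.toLinearMap) (comulX a)
        = Coalgebra.comul (R := ℂ) (a : H))
    -- R: a right ideal of X annihilated by the counit
    (R : Submodule ℂ X)
    (hRideal : ∀ ρ ∈ R, ∀ x : X, ρ * x ∈ R)
    (hεR : ∀ ρ ∈ R, Coalgebra.counit (R := ℂ) ((ρ : H)) = 0)
    -- N = span(R ∪ {1}) and p the canonical projection; D b = b₍₁₎ ⊗ p(b₍₂₎)
    (N : Submodule ℂ X) (hN : N = R ⊔ Submodule.span ℂ {1})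
    (D : X →ₗ[ℂ] H ⊗[ℂ] (X ⧸ N))
    (hD : ∀ b : X, D b = (TensorProduct.map (LinearMap.id : H →ₗ[ℂ] H) N.mkQ) (comulX b)) :
    -- (1) the right module structure `(db)·c := d(bc) − b·dc` is well-defined on
    --     Γ = span{a·db}
    (∀ (c : X) (n : ℕ) (a b : Fin n → X),
      (∑ k, ((a k : H)) • D (b k)) = 0 →
      ∑ k, (((a k : H)) • D (b k * c) - ((((a k) * (b k) : X) : H)) • D c) = 0) ∧
    -- (2) the covariance map `a·db ↦ a₍₁₎b₍₁₎ ⊗ a₍₂₎·d b₍₂₎` is well-defined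
    (∀ (n : ℕ) (a b : Fin n → X),
      (∑ k, ((a k : H)) • D (b k)) = 0 →
      ∀ (ι κ : Type) (_ : Fintype ι) (_ : Fintype κ)
        (a1 : Fin n → ι → H) (a2 : Fin n → ι → X)
        (b1 : Fin n → κ → H) (b2 : Fin n → κ → X),
        (∀ k, comulX (a k) = ∑ t, a1 k t ⊗ₜ[ℂ] a2 k t) →
        (∀ k, comulX (b k) = ∑ s, b1 k s ⊗ₜ[ℂ] b2 k s) →
        ∑ k, ∑ t, ∑ s, (a1 k t * b1 k s) ⊗ₜ[ℂ] (((a2 k t : H)) • D (b2 k s))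
          = (0 : H ⊗[ℂ] (H ⊗[ℂ] (X ⧸ N)))) := by
  obtain rfl : D = LeftCoidealSubalgebra.diff N comulX := LinearMap.ext hD
  exact ⟨fun c n a b hab => LeftCoidealSubalgebra.sum_smul_diff_mul_sub_eq_zero hcomulX hRideal
      hεR hN c a b hab,
    fun n a b hab ι κ _ _ a1 a2 b1 b2 ha hb =>
      LeftCoidealSubalgebra.sum_sum_tmul_smul_diff_eq_zero hcomulX a b hab a1 a2 b1 b2 ha hb⟩
end

section
/- Let H be a Hopf algebra, p : H → M a homomorphism of left (or right) H-modules into an H-module M, and X = {a ∈ H | a_{(1)} ⊗ p(a_{(2)}) = a ⊗ p(1)}. Then X has the invertibility-closure property: whenever finite matrices (x_{ij}) over X and (y_{ij}) over H satisfy Σ_k x_{ik} y_{kj} = δ_{ij}·1 = Σ_k y_{ik} x_{kj}, all entries y_{ij} lie in X. -/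
open TensorProduct MulOpposite

section Aux

variable {H : Type} [Ring H] [HopfAlgebra ℂ H]
  {M : Type} [AddCommGroup M] [Module ℂ M] [Module H M] [IsScalarTower ℂ H M]

/-- The action of `b : H` on `M` as a `ℂ`-linear map. -/
noncomputable def stmt11.ssmul (b : H) : M →ₗ[ℂ] M where
  toFun m := b • m
  map_add' := smul_add b
  map_smul' c m := (smul_comm c b m).symm

namespace stmt11

@[simp] lemma ssmul_apply (b : H) (m : M) : ssmul b m = b • m := rfl

/-- The action of `H ⊗ H` on `H ⊗ M`: `(a ⊗ b) · (c ⊗ m) = (a*c) ⊗ (b • m)`. -/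
noncomputable def actMap : H ⊗[ℂ] H →ₗ[ℂ] (H ⊗[ℂ] M) →ₗ[ℂ] (H ⊗[ℂ] M) :=
  TensorProduct.lift <| LinearMap.mk₂ ℂ
    (fun a b => TensorProduct.map (LinearMap.mulLeft ℂ a) (ssmul b))
    (fun a a' b => by
      have h : LinearMap.mulLeft ℂ (a + a') = LinearMap.mulLeft ℂ a + LinearMap.mulLeft ℂ a' := by
        ext z; simp [add_mul]
      rw [h, TensorProduct.map_add_left])
    (fun c a b => by
      have h : LinearMap.mulLeft ℂ (c • a) = c • LinearMap.mulLeft ℂ a := by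
        ext z; simp [smul_mul_assoc]
      rw [h, TensorProduct.map_smul_left])
    (fun a b b' => by
      have h : (ssmul (b + b') : M →ₗ[ℂ] M) = ssmul b + ssmul b' := by
        ext m; simp [add_smul]
      rw [h, TensorProduct.map_add_right])
    (fun c a b => by
      have h : (ssmul (c • b) : M →ₗ[ℂ] M) = c • ssmul b := by
        ext m; simp [smul_assoc]
      rw [h, TensorProduct.map_smul_right])

@[simp] lemma actMap_tmul (a b c : H) (m : M) :
    actMap (a ⊗ₜ[ℂ] b) (c ⊗ₜ[ℂ] m) = (a * c) ⊗ₜ[ℂ] (b • m) := rfl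

/-- Right multiplication by `c` on the first tensor factor, `ℂ`-linear in `c`. -/
noncomputable def rmulL : H →ₗ[ℂ] (H ⊗[ℂ] M) →ₗ[ℂ] (H ⊗[ℂ] M) where
  toFun c := LinearMap.rTensor M (LinearMap.mulRight ℂ c)
  map_add' c c' := by
    have h : LinearMap.mulRight ℂ (c + c') = LinearMap.mulRight ℂ c + LinearMap.mulRight ℂ c' := by
      ext z; simp [mul_add]
    rw [h, LinearMap.rTensor_add]
  map_smul' r c := by
    have h : LinearMap.mulRight ℂ (r • c) = r • LinearMap.mulRight ℂ c := by
      ext z; simp [mul_smul_comm]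
    rw [h, LinearMap.rTensor_smul]; rfl

@[simp] lemma rmulL_tmul (c a : H) (m : M) :
    rmulL c (a ⊗ₜ[ℂ] m) = (a * c) ⊗ₜ[ℂ] m := rfl

lemma rmulL_one : (rmulL (1 : H) : (H ⊗[ℂ] M) →ₗ[ℂ] (H ⊗[ℂ] M)) = LinearMap.id := by
  have h : LinearMap.mulRight ℂ (1 : H) = LinearMap.id := by ext z; simp
  show LinearMap.rTensor M (LinearMap.mulRight ℂ (1 : H)) = LinearMap.id
  rw [h, LinearMap.rTensor_id]

lemma rmulL_comp (a b : H) (z : H ⊗[ℂ] M) :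
    rmulL b (rmulL a z) = rmulL (a * b) z := by
  show LinearMap.rTensor M (LinearMap.mulRight ℂ b) (LinearMap.rTensor M (LinearMap.mulRight ℂ a) z)
    = LinearMap.rTensor M (LinearMap.mulRight ℂ (a * b)) z
  rw [LinearMap.mulRight_mul, LinearMap.rTensor_comp, LinearMap.comp_apply]

/-- `ρ(a) = a₍₁₎ ⊗ p(a₍₂₎)`. -/
noncomputable def rho (p : H →ₗ[H] M) : H →ₗ[ℂ] H ⊗[ℂ] M :=
  (TensorProduct.map LinearMap.id (p.restrictScalars ℂ)) ∘ₗ (Coalgebra.comul (R := ℂ))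

lemma mapP_mul (p : H →ₗ[H] M) (u v : H ⊗[ℂ] H) :
    TensorProduct.map LinearMap.id (p.restrictScalars ℂ) (u * v)
      = actMap u (TensorProduct.map LinearMap.id (p.restrictScalars ℂ) v) := by
  induction u using TensorProduct.induction_on with
  | zero => simp
  | tmul a b =>
    induction v using TensorProduct.induction_on with
    | zero => simp
    | tmul c d =>
      simp only [Algebra.TensorProduct.tmul_mul_tmul, TensorProduct.map_tmul,
        LinearMap.id_apply, LinearMap.coe_restrictScalars, actMap_tmul]
      congr 1
      exact p.map_smul b d
    | add v1 v2 h1 h2 => simp [mul_add, h1, h2]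
  | add u1 u2 h1 h2 => simp [add_mul, h1, h2]

lemma rho_mul (p : H →ₗ[H] M) (a b : H) :
    rho p (a * b) = actMap (Coalgebra.comul (R := ℂ) a) (rho p b) := by
  simp only [rho, LinearMap.comp_apply, Bialgebra.comul_mul]
  exact mapP_mul p _ _

lemma rho_one (p : H →ₗ[H] M) : rho p (1 : H) = (1 : H) ⊗ₜ[ℂ] p 1 := by
  simp [rho, Algebra.TensorProduct.one_def]

lemma actMap_rmulL (u : H ⊗[ℂ] H) (c : H) (z : H ⊗[ℂ] M) :
    actMap u (rmulL c z) = rmulL c (actMap u z) := by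
  induction u using TensorProduct.induction_on with
  | zero => simp
  | tmul a b =>
    induction z using TensorProduct.induction_on with
    | zero => simp
    | tmul h m => simp [mul_assoc]
    | add z1 z2 h1 h2 => simp [h1, h2]
  | add u1 u2 h1 h2 => simp [h1, h2]

lemma mem_iff {p : H →ₗ[H] M} {Xset : Set H}
    (hXset : ∀ a : H, a ∈ Xset ↔ ∀ (ι : Type) (_ : Fintype ι) (a1 a2 : ι → H),
      Coalgebra.comul (R := ℂ) a = ∑ t, a1 t ⊗ₜ[ℂ] a2 t →
      ∑ t, a1 t ⊗ₜ[ℂ] p (a2 t) = a ⊗ₜ[ℂ] p 1) (a : H) :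
    a ∈ Xset ↔ rho p a = a ⊗ₜ[ℂ] p 1 := by
  rw [hXset]
  constructor
  · intro h
    obtain ⟨S, hS⟩ := TensorProduct.exists_finset (Coalgebra.comul (R := ℂ) a)
    have hrep : Coalgebra.comul (R := ℂ) a
        = ∑ t : {z // z ∈ S}, (t.1.1 : H) ⊗ₜ[ℂ] (t.1.2 : H) := by
      rw [hS, ← Finset.sum_coe_sort S (fun i => i.1 ⊗ₜ[ℂ] i.2)]
    have h2 := h {z // z ∈ S} inferInstance (fun t => t.1.1) (fun t => t.1.2) hrep
    have : rho p a = ∑ t : {z // z ∈ S}, (t.1.1 : H) ⊗ₜ[ℂ] p t.1.2 := by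
      simp only [rho, LinearMap.comp_apply, hrep, map_sum, TensorProduct.map_tmul,
        LinearMap.id_apply, LinearMap.coe_restrictScalars]
    rw [this, h2]
  · intro h ι _ a1 a2 hrep
    have : ∑ t, a1 t ⊗ₜ[ℂ] p (a2 t) = rho p a := by
      simp only [rho, LinearMap.comp_apply, hrep, map_sum, TensorProduct.map_tmul,
        LinearMap.id_apply, LinearMap.coe_restrictScalars]
    rw [this, h]

end stmt11

end Aux

/-- Lemma, first case: if `p : H → M` is a homomorphism of left
`H`-modules and `X = {a ∈ H | a₍₁₎ ⊗ p(a₍₂₎) = a ⊗ p(1)}`, then `X` has the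
invertibility-closure property. -/
theorem stmt11
    {H : Type} [Ring H] [HopfAlgebra ℂ H]
    {M : Type} [AddCommGroup M] [Module ℂ M] [Module H M] [IsScalarTower ℂ H M]
    (p : H →ₗ[H] M) :
    -- X := {a ∈ H | a₍₁₎ ⊗ p(a₍₂₎) = a ⊗ p(1)}
    ∀ (Xset : Set H),
      (∀ a : H, a ∈ Xset ↔ ∀ (ι : Type) (_ : Fintype ι) (a1 a2 : ι → H),
        Coalgebra.comul (R := ℂ) a = ∑ t, a1 t ⊗ₜ[ℂ] a2 t →
        ∑ t, a1 t ⊗ₜ[ℂ] p (a2 t) = a ⊗ₜ[ℂ] p 1) →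
      ∀ (n : ℕ) (x y : Fin n → Fin n → H),
        (∀ i j, x i j ∈ Xset) →
        (∀ i j, ∑ k, x i k * y k j = if i = j then (1 : H) else 0) →
        (∀ i j, ∑ k, y i k * x k j = if i = j then (1 : H) else 0) →
        ∀ i j, y i j ∈ Xset := by
  intro Xset hXset n x y hx hxy hyx i l
  open stmt11 in
  rw [stmt11.mem_iff hXset]
  have hx' : ∀ k j, stmt11.rho p (x k j) = x k j ⊗ₜ[ℂ] p 1 :=
    fun k j => (stmt11.mem_iff hXset (x k j)).mp (hx k j)
  -- each `actMap (Δ(y i k)) (ρ (x k j))` computed two ways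
  have step2 : ∀ (i' k j : Fin n),
      stmt11.actMap (Coalgebra.comul (R := ℂ) (y i' k)) (stmt11.rho p (x k j))
        = stmt11.rmulL (x k j) (stmt11.rho p (y i' k)) := by
    intro i' k j
    rw [hx' k j]
    have h1 : (x k j : H) ⊗ₜ[ℂ] p 1 = stmt11.rmulL (x k j) (stmt11.rho p (1 : H)) := by
      rw [stmt11.rho_one, stmt11.rmulL_tmul, one_mul]
    rw [h1, stmt11.actMap_rmulL, ← stmt11.rho_mul, mul_one]
  have step1 : ∀ j : Fin n,
      ∑ k, stmt11.actMap (Coalgebra.comul (R := ℂ) (y i k)) (stmt11.rho p (x k j))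
        = if i = j then (1 : H) ⊗ₜ[ℂ] p 1 else 0 := by
    intro j
    have : ∀ k : Fin n,
        stmt11.actMap (Coalgebra.comul (R := ℂ) (y i k)) (stmt11.rho p (x k j))
          = stmt11.rho p (y i k * x k j) := fun k => (stmt11.rho_mul p _ _).symm
    rw [Finset.sum_congr rfl (fun k _ => this k), ← map_sum, hyx i j]
    split
    · exact stmt11.rho_one p
    · exact map_zero _
  -- the double sum, two ways
  have T1 : ∑ j, stmt11.rmulL (y j l)
      (∑ k, stmt11.actMap (Coalgebra.comul (R := ℂ) (y i k)) (stmt11.rho p (x k j)))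
      = y i l ⊗ₜ[ℂ] p 1 := by
    have : ∀ j : Fin n, stmt11.rmulL (y j l)
        (∑ k, stmt11.actMap (Coalgebra.comul (R := ℂ) (y i k)) (stmt11.rho p (x k j)))
        = if i = j then (y j l) ⊗ₜ[ℂ] p 1 else 0 := by
      intro j
      rw [step1 j]
      split
      · rw [stmt11.rmulL_tmul, one_mul]
      · exact map_zero _
    rw [Finset.sum_congr rfl (fun j _ => this j), Finset.sum_ite_eq]
    simp
  have T2 : ∑ j, stmt11.rmulL (y j l)
      (∑ k, stmt11.actMap (Coalgebra.comul (R := ℂ) (y i k)) (stmt11.rho p (x k j)))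
      = stmt11.rho p (y i l) := by
    have e1 : ∀ j : Fin n, stmt11.rmulL (y j l)
        (∑ k, stmt11.actMap (Coalgebra.comul (R := ℂ) (y i k)) (stmt11.rho p (x k j)))
        = ∑ k, stmt11.rmulL ((x k j) * (y j l)) (stmt11.rho p (y i k)) := by
      intro j
      rw [Finset.sum_congr rfl (fun k _ => step2 i k j), map_sum]
      exact Finset.sum_congr rfl (fun k _ => stmt11.rmulL_comp _ _ _)
    rw [Finset.sum_congr rfl (fun j _ => e1 j), Finset.sum_comm]
    have e2 : ∀ k : Fin n, ∑ j, stmt11.rmulL ((x k j) * (y j l)) (stmt11.rho p (y i k))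
        = if k = l then stmt11.rho p (y i k) else 0 := by
      intro k
      have : ∑ j, stmt11.rmulL ((x k j) * (y j l)) (stmt11.rho p (y i k))
          = stmt11.rmulL (∑ j, (x k j) * (y j l)) (stmt11.rho p (y i k)) := by
        rw [map_sum, LinearMap.sum_apply]
      rw [this, hxy k l]
      split
      · rw [stmt11.rmulL_one]; rfl
      · rw [map_zero]; rfl
    rw [Finset.sum_congr rfl (fun k _ => e2 k), Finset.sum_ite_eq']
    simp
  rw [← T2, T1]
end

section
/- Let H be a coquasitriangular Hopf algebra with universal r-form r, X ⊆ H a subalgebra and left coideal with the invertibility-closure property, e^1,…,e^M ∈ X with Δ(e^i) = Σ_j π^i_j ⊗ e^j, b^1,…,b^M ∈ X with Δ(b^i) = Σ_j ψ^i_j ⊗ b^j, and ν a covariant algebra endomorphism of X (Δ∘ν = (id ⊗ ν)∘Δ). Define χ^i(a) = r(b^i ⊗ ν(a)) − ε(b^i)ε(a) and assume the M×M matrix χ with entries χ^{ij} = χ^i(e^j) is invertible. Then the operators ∂_i(a) := a_{(1)} χ^k(a_{(2)}) (χ^{-1})_{jk} S(π^j_i) map X into X, i.e. ∂_i(X) ⊆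 X for all i. -/
open TensorProduct MulOpposite

/-
Write `v_m = a₍₁₎ χ^m(a₍₂₎)`, so that `∂(a) = v (χᵀ)⁻¹ S(π) = v Q⁻¹` with `Q = π χᵀ`, which is
invertible because `S(π)` inverts `π`. The intertwining property of `r` gives
`r(b^m, ν(a₍₂₎)) a₍₁₎ ψ^k_m = r(ψ^k_m, a₍₁₎) b^m ν(a₍₂₎) ∈ X`, so `v ψᵀ` has entries in `X`
(up to the term `a b^k`); for `a = e^l` these are the entries of the `l`-th row of `Q ψᵀ`.
Once `ψᵀ` is invertible, the closure property puts the entries of `(Q ψᵀ)⁻¹` in `X`, and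
`v Q⁻¹ = (v ψᵀ) (Q ψᵀ)⁻¹`. Over the noncommutative `H` the transpose `ψᵀ` is invertible because
the Drinfeld matrix `u` of `r` conjugates it to `S²(ψ)ᵀ`, which is inverted by `S(ψ)ᵀ`.
-/

open Coalgebra HopfAlgebra Matrix

lemma sum_counit_smul_eq_of_comul_eq {R C : Type*} [CommSemiring R] [AddCommMonoid C] [Module R C]
    [Coalgebra R C] {a : C} {ι : Type*} [Fintype ι] {a₁ a₂ : ι → C}
    (h : comul (R := R) a = ∑ t, a₁ t ⊗ₜ[R] a₂ t) :
    ∑ t, counit (R := R) (a₂ t) • a₁ t = a := by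
  have := congrArg (TensorProduct.rid R C) (lTensor_counit_comul (R := R) a)
  simpa [h, map_sum] using this

section MultiplicativeMatrix

variable {R H n : Type*} [CommSemiring R] [Semiring H] [HopfAlgebra R H] [Fintype n]

variable (R) in
lemma transpose_map_antipode_mul (A B : Matrix n n H) :
    ((A * B).map (antipode R))ᵀ = (B.map (antipode R))ᵀ * (A.map (antipode R))ᵀ := by
  ext i j
  simp [Matrix.mul_apply, antipode_mul_antidistrib]

variable [DecidableEq n]

variable (R) in
structure IsMultiplicativeMatrix (ψ : Matrix n n H) : Prop where
  comul_apply (i j : n) : comul (R := R) (ψ i j) = ∑ k, ψ i k ⊗ₜ[R] ψ k j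
  counit_apply (i j : n) : counit (R := R) (ψ i j) = if i = j then 1 else 0

namespace IsMultiplicativeMatrix

variable {ψ : Matrix n n H} (hψ : IsMultiplicativeMatrix R ψ)
include hψ

lemma map_antipode_mul : ψ.map (antipode R) * ψ = 1 := by
  ext i j
  have h := mul_antipode_rTensor_comul_apply (R := R) (ψ i j)
  rw [hψ.comul_apply, hψ.counit_apply] at h
  simpa [map_sum, Matrix.mul_apply, Matrix.one_apply, apply_ite] using h

lemma mul_map_antipode : ψ * ψ.map (antipode R) = 1 := by
  ext i j
  have h := mul_antipode_lTensor_comul_apply (R := R) (ψ i j)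
  rw [hψ.comul_apply, hψ.counit_apply] at h
  simpa [map_sum, Matrix.mul_apply, Matrix.one_apply, apply_ite] using h

def unit : (Matrix n n H)ˣ :=
  ⟨ψ, ψ.map (antipode R), hψ.mul_map_antipode, hψ.map_antipode_mul⟩

lemma transpose_map_antipode_mul_transpose_map_antipode_antipode :
    (ψ.map (antipode R))ᵀ * ((ψ.map (antipode R)).map (antipode R))ᵀ = 1 := by
  rw [← transpose_map_antipode_mul, hψ.map_antipode_mul]
  simp

lemma isUnit_transpose_map_antipode_antipode :
    IsUnit ((ψ.map (antipode R)).map (antipode R))ᵀ := by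
  refine ⟨⟨_, (ψ.map (antipode R))ᵀ, ?_,
    hψ.transpose_map_antipode_mul_transpose_map_antipode_antipode⟩, rfl⟩
  rw [← transpose_map_antipode_mul, hψ.mul_map_antipode]
  simp

lemma comul_antipode (i j : n) :
    comul (R := R) (antipode R (ψ i j)) =
      ∑ k, antipode R (ψ k j) ⊗ₜ[R] antipode R (ψ i k) := by
  -- `Δ(S ψ)` is a right and `(1 ⊗ S ψ)(S ψ ⊗ 1)` a left inverse of `Δψ = (ψ ⊗ 1)(1 ⊗ ψ)`.
  let Δ := (Bialgebra.comulAlgHom R H).toRingHom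
  let inl := (Algebra.TensorProduct.includeLeft (R := R) (S := R) (A := H) (B := H)).toRingHom
  let inr := (Algebra.TensorProduct.includeRight (R := R) (A := H) (B := H)).toRingHom
  have hD : ψ.map Δ = ψ.map inl * ψ.map inr := by
    ext i j
    simp [Δ, inl, inr, Matrix.mul_apply, hψ.comul_apply, Algebra.TensorProduct.tmul_mul_tmul]
  have hleft :
      ((ψ.map (antipode R)).map inr * (ψ.map (antipode R)).map inl) * ψ.map Δ = 1 := by
    rw [hD, mul_assoc, ← mul_assoc ((ψ.map (antipode R)).map inl), ← Matrix.map_mul,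
      hψ.map_antipode_mul, Matrix.map_one _ inl.map_zero inl.map_one, one_mul, ← Matrix.map_mul,
      hψ.map_antipode_mul, Matrix.map_one _ inr.map_zero inr.map_one]
  have hright : ψ.map Δ * (ψ.map (antipode R)).map Δ = 1 := by
    rw [← Matrix.map_mul, hψ.mul_map_antipode, Matrix.map_one _ Δ.map_zero Δ.map_one]
  have := congrArg (fun A => A i j) (left_inv_eq_right_inv hleft hright)
  simpa [Δ, inl, inr, Matrix.mul_apply, Algebra.TensorProduct.tmul_mul_tmul] using this.symm

end IsMultiplicativeMatrix

end MultiplicativeMatrix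

section RForm

variable {R H : Type*} {n : Type} [CommRing R] [Ring H] [HopfAlgebra R H]
  [Fintype n] [DecidableEq n]
variable (r : H →ₗ[R] H →ₗ[R] R)

def RFormIntertwines : Prop :=
  ∀ (a b : H) (ι κ : Type) (_ : Fintype ι) (_ : Fintype κ) (a1 a2 : ι → H) (b1 b2 : κ → H),
    comul (R := R) a = ∑ t, a1 t ⊗ₜ[R] a2 t → comul (R := R) b = ∑ s, b1 s ⊗ₜ[R] b2 s →
    ∑ t, ∑ s, r (a1 t) (b1 s) • (a2 t * b2 s) = ∑ t, ∑ s, r (a2 t) (b2 s) • (b1 s * a1 t)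

def RFormMulRight : Prop :=
  ∀ (a b c : H) (ι : Type) (_ : Fintype ι) (a1 a2 : ι → H),
    comul (R := R) a = ∑ t, a1 t ⊗ₜ[R] a2 t → r a (b * c) = ∑ t, r (a1 t) c * r (a2 t) b

/- The matrices of the Drinfeld functional `u(a) = r(a₍₂₎, S a₍₁₎)` and of
`ū(a) = r(S² a₍₂₎, a₍₁₎)` on the coefficients of `ψ`. -/
def drinfeldMatrix (ψ : Matrix n n H) : Matrix n n R :=
  of fun q p => ∑ c, r (ψ c p) (antipode R (ψ q c))

def drinfeldInvMatrix (ψ : Matrix n n H) : Matrix n n R :=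
  of fun j q => ∑ w, r (antipode R (antipode R (ψ w q))) (ψ j w)

namespace IsMultiplicativeMatrix

variable {r} {ψ : Matrix n n H} (hψ : IsMultiplicativeMatrix R ψ)
include hψ

lemma transpose_mul_drinfeldMatrix_mul (hr : RFormIntertwines r) :
    ψᵀ * ((drinfeldMatrix r ψ).map (algebraMap R H))ᵀ * (ψ.map (antipode R))ᵀ =
      ((drinfeldMatrix r ψ).map (algebraMap R H))ᵀ := by
  ext w q
  have braid (c : n) := hr (ψ c w) (antipode R (ψ q c)) n n inferInstance inferInstance
    (ψ c) (ψ · w) (fun d => antipode R (ψ d c)) (fun d => antipode R (ψ q d))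
    (hψ.comul_apply c w) (hψ.comul_antipode q c)
  calc (ψᵀ * ((drinfeldMatrix r ψ).map (algebraMap R H))ᵀ * (ψ.map (antipode R))ᵀ) w q
      = ∑ c, ∑ p, ∑ d, r (ψ c p) (antipode R (ψ d c)) • (ψ p w * antipode R (ψ q d)) := by
        simp only [Matrix.mul_apply, transpose_apply, map_apply, drinfeldMatrix, of_apply, map_sum,
          Finset.sum_mul, Finset.mul_sum, Algebra.smul_def, ← Algebra.left_comm, mul_assoc]
        exact (Finset.sum_congr rfl fun _ _ => Finset.sum_comm).trans
          (Finset.sum_comm.trans (Finset.sum_congr rfl fun _ _ => Finset.sum_comm))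
    _ = ∑ c, ∑ p, ∑ d, r (ψ p w) (antipode R (ψ q d)) • (antipode R (ψ d c) * ψ c p) :=
        Finset.sum_congr rfl fun c _ => braid c
    _ = ∑ p, ∑ d, r (ψ p w) (antipode R (ψ q d)) • (ψ.map (antipode R) * ψ) d p := by
        simp only [Matrix.mul_apply, map_apply, Finset.smul_sum]
        rw [Finset.sum_comm]
        exact Finset.sum_congr rfl fun p _ => Finset.sum_comm
    _ = _ := by
        simp [hψ.map_antipode_mul, Matrix.one_apply, drinfeldMatrix,
          Algebra.algebraMap_eq_smul_one]

lemma transpose_mul_drinfeldMatrix (hr : RFormIntertwines r) :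
    ψᵀ * ((drinfeldMatrix r ψ).map (algebraMap R H))ᵀ =
      ((drinfeldMatrix r ψ).map (algebraMap R H))ᵀ *
        ((ψ.map (antipode R)).map (antipode R))ᵀ := by
  calc ψᵀ * ((drinfeldMatrix r ψ).map (algebraMap R H))ᵀ
      = ψᵀ * ((drinfeldMatrix r ψ).map (algebraMap R H))ᵀ *
          ((ψ.map (antipode R))ᵀ * ((ψ.map (antipode R)).map (antipode R))ᵀ) := by
        rw [hψ.transpose_map_antipode_mul_transpose_map_antipode_antipode, mul_one]
    _ = _ := by rw [← mul_assoc, hψ.transpose_mul_drinfeldMatrix_mul hr]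

lemma drinfeldInvMatrix_mul_drinfeldMatrix (hr : RFormIntertwines r) (hr' : RFormMulRight r)
    (hr'' : ∀ a : H, r a 1 = counit (R := R) a) :
    drinfeldInvMatrix r ψ * drinfeldMatrix r ψ = 1 := by
  let u := drinfeldMatrix r ψ
  have twist (p w : n) :
      ∑ q, u q p • antipode R (antipode R (ψ w q)) = ∑ t, u w t • ψ t p := by
    have := congrArg (fun A => A p w) (hψ.transpose_mul_drinfeldMatrix hr)
    simpa [u, Matrix.mul_apply, Algebra.smul_def, Algebra.commutes] using this.symm
  ext j p
  calc (drinfeldInvMatrix r ψ * u) j p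
      = ∑ w, r (∑ q, u q p • antipode R (antipode R (ψ w q))) (ψ j w) := by
        simp only [Matrix.mul_apply, drinfeldInvMatrix, of_apply, Finset.sum_mul, map_sum,
          map_smul, LinearMap.sum_apply, LinearMap.smul_apply, smul_eq_mul, mul_comm (u _ p)]
        exact Finset.sum_comm
    _ = ∑ w, r (∑ t, u w t • ψ t p) (ψ j w) := by simp only [twist]
    _ = ∑ w, ∑ c, r (ψ c p) (ψ j w * antipode R (ψ w c)) := by
        simp only [hr' _ _ _ n inferInstance _ _ (hψ.comul_apply _ p), u, drinfeldMatrix, of_apply,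
          map_sum, map_smul, LinearMap.sum_apply, LinearMap.smul_apply, smul_eq_mul, Finset.sum_mul]
        exact Finset.sum_congr rfl fun _ _ => Finset.sum_comm
    _ = ∑ c, r (ψ c p) ((ψ * ψ.map (antipode R)) j c) := by
        simp only [Matrix.mul_apply, map_apply, map_sum]
        exact Finset.sum_comm
    _ = (1 : Matrix n n R) j p := by
        rw [hψ.mul_map_antipode]
        simp [Matrix.one_apply, apply_ite (DFunLike.coe (r _)), hr'', hψ.counit_apply]

lemma isUnit_transpose (hr : RFormIntertwines r) (hr' : RFormMulRight r)
    (hr'' : ∀ a : H, r a 1 = counit (R := R) a) : IsUnit ψᵀ := by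
  have hu : IsUnit (drinfeldMatrix r ψ) :=
    .of_mul_eq_one_right _ (hψ.drinfeldInvMatrix_mul_drinfeldMatrix hr hr' hr'')
  obtain ⟨v, hv⟩ : IsUnit ((drinfeldMatrix r ψ).map (algebraMap R H))ᵀ := by
    rw [← transpose_map]
    exact ((Matrix.isUnit_transpose _).mpr hu).map (algebraMap R H).mapMatrix
  rw [← Units.isUnit_mul_units _ v, hv, hψ.transpose_mul_drinfeldMatrix hr, ← hv]
  exact v.isUnit.mul hψ.isUnit_transpose_map_antipode_antipode

end IsMultiplicativeMatrix

end RForm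

section CoidealSubalgebra

variable {R H : Type*} [CommRing R] [Ring H] [HopfAlgebra R H]

lemma comul_coe_eq_sum {X : Subalgebra R H} {comulX : X →ₗ[R] H ⊗[R] X}
    (hcomulX : ∀ a : X, TensorProduct.map LinearMap.id X.val.toLinearMap (comulX a) =
      comul (R := R) (a : H))
    {a : X} {ι : Type*} [Fintype ι] {a₁ : ι → H} {a₂ : ι → X}
    (h : comulX a = ∑ t, a₁ t ⊗ₜ[R] a₂ t) :
    comul (R := R) (a : H) = ∑ t, a₁ t ⊗ₜ[R] (a₂ t : H) := by
  simp [← hcomulX, h, map_sum]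

section

variable (X : Subalgebra R H) {r : H →ₗ[R] H →ₗ[R] R} (hr : RFormIntertwines r)
include hr

lemma sum_rForm_smul_mul_mem {a b : H} {ι κ : Type} [Fintype ι] [Fintype κ] {a₁ a₂ : ι → H}
    {b₁ b₂ : κ → H} (ha : comul (R := R) a = ∑ t, a₁ t ⊗ₜ[R] a₂ t)
    (hb : comul (R := R) b = ∑ s, b₁ s ⊗ₜ[R] b₂ s) (ha₂ : ∀ t, a₂ t ∈ X) (hb₂ : ∀ s, b₂ s ∈ X) :
    ∑ t, ∑ s, r (a₂ t) (b₂ s) • (b₁ s * a₁ t) ∈ X := by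
  rw [← hr a b ι κ inferInstance inferInstance a₁ a₂ b₁ b₂ ha hb]
  exact sum_mem fun t _ => sum_mem fun s _ => X.smul_mem (X.mul_mem (ha₂ t) (hb₂ s)) _

lemma sum_rForm_sub_counit_smul_mul_mem {n ι : Type} [Fintype n] [Fintype ι] {ψ : Matrix n n H}
    {b : n → H} (hb : ∀ m, b m ∈ X) (hΔb : ∀ k, comul (R := R) (b k) = ∑ m, ψ k m ⊗ₜ[R] b m)
    {x y : H} (hx : x ∈ X) {x₁ x₂ y₂ : ι → H} (hΔx : comul (R := R) x = ∑ t, x₁ t ⊗ₜ[R] x₂ t)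
    (hΔy : comul (R := R) y = ∑ t, x₁ t ⊗ₜ[R] y₂ t) (hy₂ : ∀ t, y₂ t ∈ X) (k : n) :
    ∑ m, (∑ t, (r (b m) (y₂ t) - counit (R := R) (b m) * counit (R := R) (x₂ t)) • x₁ t) *
      ψ k m ∈ X := by
  have hsplit : ∑ m, (∑ t, (r (b m) (y₂ t) - counit (R := R) (b m) * counit (R := R) (x₂ t)) •
      x₁ t) * ψ k m = ∑ m, ∑ t, r (b m) (y₂ t) • (x₁ t * ψ k m) -
        (∑ t, counit (R := R) (x₂ t) • x₁ t) * ∑ m, counit (R := R) (b m) • ψ k m := by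
    simp only [sub_smul, Finset.sum_sub_distrib, sub_mul, Finset.sum_mul, Finset.mul_sum,
      Finset.smul_sum, smul_mul_assoc, mul_smul_comm, smul_smul]
  rw [hsplit, sum_counit_smul_eq_of_comul_eq hΔx, sum_counit_smul_eq_of_comul_eq (hΔb k)]
  exact sub_mem (sum_rForm_smul_mul_mem X hr (hΔb k) hΔy hb hy₂) (X.mul_mem hx (hb k))

end

end CoidealSubalgebra

lemma vecMul_inv_mem {R H : Type*} [CommSemiring R] [Semiring H] [Algebra R H]
    {X : Subalgebra R H} {n : ℕ}
    (hX : ∀ x y : Fin n → Fin n → H, (∀ i j, x i j ∈ X) →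
      (∀ i j, ∑ k, x i k * y k j = if i = j then (1 : H) else 0) →
      (∀ i j, ∑ k, y i k * x k j = if i = j then (1 : H) else 0) → ∀ i j, y i j ∈ X)
    {P Q : (Matrix (Fin n) (Fin n) H)ˣ} {v : Fin n → H}
    (hv : ∀ k, (v ᵥ* (P : Matrix (Fin n) (Fin n) H)) k ∈ X)
    (hQP : ∀ i j, (↑(Q * P) : Matrix (Fin n) (Fin n) H) i j ∈ X) (i : Fin n) :
    (v ᵥ* (↑Q⁻¹ : Matrix (Fin n) (Fin n) H)) i ∈ X := by
  have hinv := hX _ _ hQP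
    (fun i j => by
      simpa [Matrix.mul_apply, Matrix.one_apply] using congrArg (· i j) (Q * P).mul_inv)
    (fun i j => by
      simpa [Matrix.mul_apply, Matrix.one_apply] using congrArg (· i j) (Q * P).inv_mul)
  have hfactor : v ᵥ* (↑Q⁻¹ : Matrix (Fin n) (Fin n) H) =
      (v ᵥ* (P : Matrix (Fin n) (Fin n) H)) ᵥ* ↑(Q * P)⁻¹ := by
    rw [vecMul_vecMul, _root_.mul_inv_rev, Units.val_mul, ← mul_assoc, P.mul_inv, one_mul]
  rw [hfactor]
  unfold vecMul dotProduct
  exact sum_mem fun k _ => X.mul_mem (hv k) (hinv k i)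

theorem stmt12_general
    {H : Type} [Ring H] [HopfAlgebra ℂ H]
    -- universal r-form
    (r : H →ₗ[ℂ] H →ₗ[ℂ] ℂ)
    (hr1 : ∀ (a b : H) (ι κ : Type) (_ : Fintype ι) (_ : Fintype κ)
      (a1 a2 : ι → H) (b1 b2 : κ → H),
      Coalgebra.comul (R := ℂ) a = ∑ t, a1 t ⊗ₜ[ℂ] a2 t →
      Coalgebra.comul (R := ℂ) b = ∑ s, b1 s ⊗ₜ[ℂ] b2 s →
      ∑ t, ∑ s, r (a1 t) (b1 s) • (a2 t * b2 s)
        = ∑ t, ∑ s, r (a2 t) (b2 s) • (b1 s * a1 t))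
    (hr3 : ∀ (a b c : H) (ι : Type) (_ : Fintype ι) (a1 a2 : ι → H),
      Coalgebra.comul (R := ℂ) a = ∑ t, a1 t ⊗ₜ[ℂ] a2 t →
      r a (b * c) = ∑ t, r (a1 t) c * r (a2 t) b)
    (hr3' : ∀ a : H, r a 1 = Coalgebra.counit (R := ℂ) a)
    -- X: a left coideal subalgebra
    (X : Subalgebra ℂ H)
    (comulX : X →ₗ[ℂ] H ⊗[ℂ] X)
    (hcomulX : ∀ a : X,
      (TensorProduct.map (LinearMap.id) X.val.toLinearMap) (comulX a)
        = Coalgebra.comul (R := ℂ) (a : H))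
    -- invertibility-closure property of X
    (hclosure : ∀ (n : ℕ) (x y : Fin n → Fin n → H),
      (∀ i j, x i j ∈ X) →
      (∀ i j, ∑ k, x i k * y k j = if i = j then (1 : H) else 0) →
      (∀ i j, ∑ k, y i k * x k j = if i = j then (1 : H) else 0) →
      ∀ i j, y i j ∈ X)
    -- e^i and b^i with their matrix coefficients
    {M : ℕ} (e bb : Fin M → X) (π ψ : Fin M → Fin M → H)
    (hπ : ∀ i, comulX (e i) = ∑ j, π i j ⊗ₜ[ℂ] e j)
    (hΔπ : ∀ i j, Coalgebra.comul (R := ℂ) (π i j) = ∑ k, π i k ⊗ₜ[ℂ] π k j)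
    (hεπ : ∀ i j, Coalgebra.counit (R := ℂ) (π i j) = if i = j then 1 else 0)
    (hψ : ∀ i, comulX (bb i) = ∑ j, ψ i j ⊗ₜ[ℂ] bb j)
    (hΔψ : ∀ i j, Coalgebra.comul (R := ℂ) (ψ i j) = ∑ k, ψ i k ⊗ₜ[ℂ] ψ k j)
    (hεψ : ∀ i j, Coalgebra.counit (R := ℂ) (ψ i j) = if i = j then 1 else 0)
    -- covariant algebra endomorphism ν of X
    (ν : X →ₐ[ℂ] X)
    (hν : ∀ a : X, comulX (ν a) = (TensorProduct.map LinearMap.id ν.toLinearMap) (comulX a))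
    -- the functionals χ^i and the invertible matrix χ
    (χ : Fin M → X → ℂ)
    (hχ : ∀ i (a : X), χ i a =
      r ((bb i : H)) ((ν a : H))
        - Coalgebra.counit (R := ℂ) ((bb i : H)) * Coalgebra.counit (R := ℂ) ((a : H)))
    (χinv : Fin M → Fin M → ℂ)
    (hχinv1 : ∀ i j, ∑ k, χ i (e k) * χinv k j = if i = j then 1 else 0)
    (hχinv2 : ∀ i j, ∑ k, χinv i k * χ k (e j) = if i = j then 1 else 0)
    :
    ∀ (a : X) (i : Fin M) (ι : Type) (_ : Fintype ι) (a1 : ι → H) (a2 : ι → X),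
      comulX a = ∑ t, a1 t ⊗ₜ[ℂ] a2 t →
      (∑ t, ∑ j, ∑ k, (χ k (a2 t) * χinv j k) •
          (a1 t * HopfAlgebra.antipode (R := ℂ) (π j i))) ∈ X := by
  intro a i ι _ a1 a2 ha
  have hπ' : IsMultiplicativeMatrix ℂ (of π) := ⟨hΔπ, hεπ⟩
  have hψ' : IsMultiplicativeMatrix ℂ (of ψ) := ⟨hΔψ, hεψ⟩
  have hrow (x : X) (κ : Type) [Fintype κ] (x₁ : κ → H) (x₂ : κ → X)
      (hx : comulX x = ∑ t, x₁ t ⊗ₜ[ℂ] x₂ t) (k : Fin M) :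
      ((fun m => ∑ t, χ m (x₂ t) • x₁ t) ᵥ* (of ψ)ᵀ) k ∈ X := by
    have hνx : comulX (ν x) = ∑ t, x₁ t ⊗ₜ[ℂ] ν (x₂ t) := by simp [hν, hx, map_sum]
    simpa [vecMul, dotProduct, hχ] using sum_rForm_sub_counit_smul_mul_mem X hr1
      (fun m => (bb m).2) (fun k => comul_coe_eq_sum hcomulX (hψ k)) x.2
      (comul_coe_eq_sum hcomulX hx) (comul_coe_eq_sum hcomulX hνx) (fun t => (ν (x₂ t)).2) k
  obtain ⟨Ψ, hΨ⟩ := hψ'.isUnit_transpose hr1 hr3 hr3'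
  let C : (Matrix (Fin M) (Fin M) ℂ)ˣ :=
    ⟨of fun n m => χ m (e n), of fun m l => χinv l m,
      by ext n l; simpa [Matrix.mul_apply, Matrix.one_apply, mul_comm, eq_comm] using hχinv2 l n,
      by ext m k; simpa [Matrix.mul_apply, Matrix.one_apply, mul_comm, eq_comm] using hχinv1 k m⟩
  let Q := hπ'.unit * Units.map (algebraMap ℂ H).mapMatrix.toMonoidHom C
  have hQΨ (l k : Fin M) : (↑(Q * Ψ) : Matrix (Fin M) (Fin M) H) l k ∈ X := by
    convert hrow (e l) (Fin M) (π l) e (hπ l) k using 1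
    simp [Q, C, hΨ, IsMultiplicativeMatrix.unit, vecMul, dotProduct, Matrix.mul_apply,
      Finset.sum_mul, Algebra.smul_def, Algebra.commutes]
  convert vecMul_inv_mem (hclosure M) (hΨ ▸ hrow a ι a1 a2 ha) hQΨ i using 1
  simp only [Q, C, _root_.mul_inv_rev, Units.val_mul, Units.coe_map_inv, Units.inv_mk,
    Units.val_mk, IsMultiplicativeMatrix.unit, RingHom.toMonoidHom_eq_coe, MonoidHom.coe_coe,
    RingHom.mapMatrix_apply, vecMul, dotProduct, Matrix.mul_apply, map_apply, of_apply,
    ← Algebra.smul_def, Finset.sum_mul, Finset.mul_sum, Finset.smul_sum, smul_mul_assoc,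
    mul_smul_comm, smul_smul, mul_comm (χinv _ _)]
  exact ((Finset.sum_congr rfl fun _ _ => Finset.sum_comm).trans
    (Finset.sum_comm.trans (Finset.sum_congr rfl fun _ _ => Finset.sum_comm))).symm

/-- in the setting of the construction theorem, the operators
`∂_i(a) = a₍₁₎ χ^k(a₍₂₎) (χ⁻¹)_{jk} S(π^j_i)` map `X` into `X`. -/
theorem stmt12
    {H : Type} [Ring H] [HopfAlgebra ℂ H]
    -- universal r-form
    (r : H →ₗ[ℂ] H →ₗ[ℂ] ℂ)
    (hr1 : ∀ (a b : H) (ι κ : Type) (_ : Fintype ι) (_ : Fintype κ)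
      (a1 a2 : ι → H) (b1 b2 : κ → H),
      Coalgebra.comul (R := ℂ) a = ∑ t, a1 t ⊗ₜ[ℂ] a2 t →
      Coalgebra.comul (R := ℂ) b = ∑ s, b1 s ⊗ₜ[ℂ] b2 s →
      ∑ t, ∑ s, r (a1 t) (b1 s) • (a2 t * b2 s)
        = ∑ t, ∑ s, r (a2 t) (b2 s) • (b1 s * a1 t))
    (hr2 : ∀ (a b c : H) (κ : Type) (_ : Fintype κ) (c1 c2 : κ → H),
      Coalgebra.comul (R := ℂ) c = ∑ s, c1 s ⊗ₜ[ℂ] c2 s →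
      r (a * b) c = ∑ s, r a (c1 s) * r b (c2 s))
    (hr2' : ∀ c : H, r 1 c = Coalgebra.counit (R := ℂ) c)
    (hr3 : ∀ (a b c : H) (ι : Type) (_ : Fintype ι) (a1 a2 : ι → H),
      Coalgebra.comul (R := ℂ) a = ∑ t, a1 t ⊗ₜ[ℂ] a2 t →
      r a (b * c) = ∑ t, r (a1 t) c * r (a2 t) b)
    (hr3' : ∀ a : H, r a 1 = Coalgebra.counit (R := ℂ) a)
    -- X: a left coideal subalgebra
    (X : Subalgebra ℂ H)
    (comulX : X →ₗ[ℂ] H ⊗[ℂ] X)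
    (hcomulX : ∀ a : X,
      (TensorProduct.map (LinearMap.id) X.val.toLinearMap) (comulX a)
        = Coalgebra.comul (R := ℂ) (a : H))
    -- invertibility-closure property of X
    (hclosure : ∀ (n : ℕ) (x y : Fin n → Fin n → H),
      (∀ i j, x i j ∈ X) →
      (∀ i j, ∑ k, x i k * y k j = if i = j then (1 : H) else 0) →
      (∀ i j, ∑ k, y i k * x k j = if i = j then (1 : H) else 0) →
      ∀ i j, y i j ∈ X)
    -- e^i and b^i with their matrix coefficients
    {M : ℕ} (e bb : Fin M → X) (π ψ : Fin M → Fin M → H)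
    (hπ : ∀ i, comulX (e i) = ∑ j, π i j ⊗ₜ[ℂ] e j)
    (hΔπ : ∀ i j, Coalgebra.comul (R := ℂ) (π i j) = ∑ k, π i k ⊗ₜ[ℂ] π k j)
    (hεπ : ∀ i j, Coalgebra.counit (R := ℂ) (π i j) = if i = j then 1 else 0)
    (hψ : ∀ i, comulX (bb i) = ∑ j, ψ i j ⊗ₜ[ℂ] bb j)
    (hΔψ : ∀ i j, Coalgebra.comul (R := ℂ) (ψ i j) = ∑ k, ψ i k ⊗ₜ[ℂ] ψ k j)
    (hεψ : ∀ i j, Coalgebra.counit (R := ℂ) (ψ i j) = if i = j then 1 else 0)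
    -- covariant algebra endomorphism ν of X
    (ν : X →ₐ[ℂ] X)
    (hν : ∀ a : X, comulX (ν a) = (TensorProduct.map LinearMap.id ν.toLinearMap) (comulX a))
    -- the functionals χ^i and the invertible matrix χ
    (χ : Fin M → X → ℂ)
    (hχ : ∀ i (a : X), χ i a =
      r ((bb i : H)) ((ν a : H))
        - Coalgebra.counit (R := ℂ) ((bb i : H)) * Coalgebra.counit (R := ℂ) ((a : H)))
    (χinv : Fin M → Fin M → ℂ)
    (hχinv1 : ∀ i j, ∑ k, χ i (e k) * χinv k j = if i = j then 1 else 0)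
    (hχinv2 : ∀ i j, ∑ k, χinv i k * χ k (e j) = if i = j then 1 else 0)
    :
    ∀ (a : X) (i : Fin M) (ι : Type) (_ : Fintype ι) (a1 : ι → H) (a2 : ι → X),
      comulX a = ∑ t, a1 t ⊗ₜ[ℂ] a2 t →
      (∑ t, ∑ j, ∑ k, (χ k (a2 t) * χinv j k) •
          (a1 t * HopfAlgebra.antipode (R := ℂ) (π j i))) ∈ X :=
  stmt12_general r hr1 hr3 hr3' X comulX hcomulX hclosure e bb π ψ hπ hΔπ hεπ hψ hΔψ hεψ ν hν χ hχ
    χinv hχinv1 hχinv2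
end

section
/- In the setting of the construction theorem (coquasitriangular H, left coideal subalgebra X with invertibility-closure property, elements e^i, b^i, covariant endomorphism ν, invertible matrix χ^{ij} = χ^i(e^j) where χ^i(a) = r(b^i ⊗ ν(a)) − ε(b^i)ε(a)): the functionals χ^i vanish at 1, satisfy χ^i(e^j) = χ^{ij}, and span{ε, χ^1, …, χ^M} is a right coideal of the restricted dual X°; more precisely, χ^i(ab) = Σ_j χ^j(a) ρ^i_j(b) + ε(a) χ^i(b) where ρ^i_j(b) := r(ψ^i_j ⊗ ν(b)). -/
open TensorProduct MulOpposite

/-- in the setting of the construction theorem the functionals `χ^i`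
vanish at 1, satisfy `χ^i(e^j) = χ^{ij}` and
`χ^i(ab) = Σ_j χ^j(a) ρ^i_j(b) + ε(a) χ^i(b)` with `ρ^i_j(b) = r(ψ^i_j ⊗ ν(b))`;
in particular `span{ε, χ^1, …, χ^M}` is a right coideal of `X°`. -/
theorem stmt13
    {H : Type} [Ring H] [HopfAlgebra ℂ H]
    -- universal r-form
    (r : H →ₗ[ℂ] H →ₗ[ℂ] ℂ)
    (hr1 : ∀ (a b : H) (ι κ : Type) (_ : Fintype ι) (_ : Fintype κ)
      (a1 a2 : ι → H) (b1 b2 : κ → H),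
      Coalgebra.comul (R := ℂ) a = ∑ t, a1 t ⊗ₜ[ℂ] a2 t →
      Coalgebra.comul (R := ℂ) b = ∑ s, b1 s ⊗ₜ[ℂ] b2 s →
      ∑ t, ∑ s, r (a1 t) (b1 s) • (a2 t * b2 s)
        = ∑ t, ∑ s, r (a2 t) (b2 s) • (b1 s * a1 t))
    (hr2 : ∀ (a b c : H) (κ : Type) (_ : Fintype κ) (c1 c2 : κ → H),
      Coalgebra.comul (R := ℂ) c = ∑ s, c1 s ⊗ₜ[ℂ] c2 s →
      r (a * b) c = ∑ s, r a (c1 s) * r b (c2 s))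
    (hr2' : ∀ c : H, r 1 c = Coalgebra.counit (R := ℂ) c)
    (hr3 : ∀ (a b c : H) (ι : Type) (_ : Fintype ι) (a1 a2 : ι → H),
      Coalgebra.comul (R := ℂ) a = ∑ t, a1 t ⊗ₜ[ℂ] a2 t →
      r a (b * c) = ∑ t, r (a1 t) c * r (a2 t) b)
    (hr3' : ∀ a : H, r a 1 = Coalgebra.counit (R := ℂ) a)
    -- X: a left coideal subalgebra
    (X : Subalgebra ℂ H)
    (comulX : X →ₗ[ℂ] H ⊗[ℂ] X)
    (hcomulX : ∀ a : X,
      (TensorProduct.map (LinearMap.id) X.val.toLinearMap) (comulX a)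
        = Coalgebra.comul (R := ℂ) (a : H))
    -- invertibility-closure property of X
    (hclosure : ∀ (n : ℕ) (x y : Fin n → Fin n → H),
      (∀ i j, x i j ∈ X) →
      (∀ i j, ∑ k, x i k * y k j = if i = j then (1 : H) else 0) →
      (∀ i j, ∑ k, y i k * x k j = if i = j then (1 : H) else 0) →
      ∀ i j, y i j ∈ X)
    -- e^i and b^i with their matrix coefficients
    {M : ℕ} (e bb : Fin M → X) (π ψ : Fin M → Fin M → H)
    (hπ : ∀ i, comulX (e i) = ∑ j, π i j ⊗ₜ[ℂ] e j)
    (hΔπ : ∀ i j, Coalgebra.comul (R := ℂ) (π i j) = ∑ k, π i k ⊗ₜ[ℂ] π k j)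
    (hεπ : ∀ i j, Coalgebra.counit (R := ℂ) (π i j) = if i = j then 1 else 0)
    (hψ : ∀ i, comulX (bb i) = ∑ j, ψ i j ⊗ₜ[ℂ] bb j)
    (hΔψ : ∀ i j, Coalgebra.comul (R := ℂ) (ψ i j) = ∑ k, ψ i k ⊗ₜ[ℂ] ψ k j)
    (hεψ : ∀ i j, Coalgebra.counit (R := ℂ) (ψ i j) = if i = j then 1 else 0)
    -- covariant algebra endomorphism ν of X
    (ν : X →ₐ[ℂ] X)
    (hν : ∀ a : X, comulX (ν a) = (TensorProduct.map LinearMap.id ν.toLinearMap) (comulX a))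
    -- the functionals χ^i and the invertible matrix χ
    (χ : Fin M → X → ℂ)
    (hχ : ∀ i (a : X), χ i a =
      r ((bb i : H)) ((ν a : H))
        - Coalgebra.counit (R := ℂ) ((bb i : H)) * Coalgebra.counit (R := ℂ) ((a : H)))
    (χinv : Fin M → Fin M → ℂ)
    (hχinv1 : ∀ i j, ∑ k, χ i (e k) * χinv k j = if i = j then 1 else 0)
    (hχinv2 : ∀ i j, ∑ k, χinv i k * χ k (e j) = if i = j then 1 else 0)
    -- the χ^i realized as linear functionals on X
    (χlin : Fin M → (X →ₗ[ℂ] ℂ))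
    (hχlin : ∀ i (a : X), χlin i a = χ i a) :
    -- χ^i(1) = 0
    (∀ i, χlin i 1 = 0) ∧
    -- χ^i(e^j) is the matrix χ^{ij}
    (∀ i j, χlin i (e j) = χ i (e j)) ∧
    -- χ^i(ab) = Σ_j χ^j(a) r(ψ^i_j ⊗ ν(b)) + ε(a) χ^i(b)
    (∀ (i : Fin M) (a b : X),
      χlin i (a * b) =
        (∑ j, χlin j a * r (ψ i j) ((ν b : H)))
          + Coalgebra.counit (R := ℂ) ((a : H)) * χlin i b) ∧
    -- span{ε, χ^1, …, χ^M} is a right coideal of X°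
    (∀ f : X →ₗ[ℂ] ℂ,
      f ∈ Submodule.span ℂ
        ({(Coalgebra.counit (R := ℂ)).comp X.val.toLinearMap} ∪ Set.range χlin) →
      ∃ (n : ℕ) (g h : Fin n → (X →ₗ[ℂ] ℂ)),
        (∀ k, g k ∈ Submodule.span ℂ
          ({(Coalgebra.counit (R := ℂ)).comp X.val.toLinearMap} ∪ Set.range χlin)) ∧
        (∀ k, InRestrictedDual (h k)) ∧
        (∀ a b : X, f (a * b) = ∑ k, g k a * h k b)) := by
  
  -- notation
  set εX : X →ₗ[ℂ] ℂ := (Coalgebra.counit (R := ℂ)).comp X.val.toLinearMap with hεX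
  -- comultiplication of bb i in H
  have hΔbb : ∀ i, Coalgebra.comul (R := ℂ) ((bb i : H))
      = ∑ j, ψ i j ⊗ₜ[ℂ] ((bb j : H)) := by
    intro i
    rw [← hcomulX, hψ, map_sum]
    simp
  -- counit identity: ∑ ε(bb j) • ψ i j = bb i
  have hsum : ∀ i : Fin M, ∑ j, Coalgebra.counit (R := ℂ) ((bb j : H)) • ψ i j
      = (bb i : H) := by
    intro i
    have h1 : (LinearMap.lTensor H (Coalgebra.counit (R := ℂ)))
        (Coalgebra.comul (R := ℂ) ((bb i : H))) = (bb i : H) ⊗ₜ[ℂ] 1 :=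
      Coalgebra.lTensor_counit_comul _
    rw [hΔbb] at h1
    have h2 := congrArg (TensorProduct.rid ℂ H) h1
    simpa [map_sum, TensorProduct.smul_tmul'] using h2
  have key : ∀ (i : Fin M) (c : H), r ((bb i : H)) c
      = ∑ j, Coalgebra.counit (R := ℂ) ((bb j : H)) * r (ψ i j) c := by
    intro i c
    conv_lhs => rw [← hsum i]
    simp [map_sum, smul_eq_mul]
  -- the multiplicativity formula
  have hmul : ∀ (i : Fin M) (a b : X),
      χlin i (a * b) =
        (∑ j, χlin j a * r (ψ i j) ((ν b : H)))
          + Coalgebra.counit (R := ℂ) ((a : H)) * χlin i b := by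
    intro i a b
    simp only [hχlin, hχ]
    have hcoe : ((ν (a * b) : X) : H) = ((ν a : X) : H) * ((ν b : X) : H) := by
      rw [map_mul]; rfl
    have hLHS : r ((bb i : H)) ((ν (a * b) : X) : H)
        = ∑ j, r (ψ i j) ((ν b : H)) * r ((bb j : H)) ((ν a : H)) := by
      rw [hcoe]
      exact hr3 _ _ _ (Fin M) inferInstance _ _ (hΔbb i)
    have hεab : Coalgebra.counit (R := ℂ) (((a * b : X) : H))
        = Coalgebra.counit (R := ℂ) ((a : H)) * Coalgebra.counit (R := ℂ) ((b : H)) := by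
      rw [MulMemClass.coe_mul, Bialgebra.counit_mul]
    rw [hLHS, hεab, key i ((ν b : X) : H)]
    have e1 : ∑ j, r (ψ i j) ((ν b : H)) * r ((bb j : H)) ((ν a : H))
        = ∑ j, r ((bb j : H)) ((ν a : H)) * r (ψ i j) ((ν b : H)) :=
      Finset.sum_congr rfl fun j _ => mul_comm _ _
    rw [e1]
    rw [show ∑ j, (r ((bb j : H)) ((ν a : H))
          - Coalgebra.counit (R := ℂ) ((bb j : H)) * Coalgebra.counit (R := ℂ) ((a : H)))
            * r (ψ i j) ((ν b : H))
        = ∑ j, r ((bb j : H)) ((ν a : H)) * r (ψ i j) ((ν b : H))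
          - Coalgebra.counit (R := ℂ) ((a : H))
            * ∑ j, Coalgebra.counit (R := ℂ) ((bb j : H)) * r (ψ i j) ((ν b : H)) by
      rw [Finset.mul_sum, ← Finset.sum_sub_distrib]
      exact Finset.sum_congr rfl fun j _ => by ring]
    ring
  refine ⟨?_, ?_, hmul, ?_⟩
  · -- χ i 1 = 0
    intro i
    rw [hχlin, hχ]
    have h1 : ((ν (1 : X) : X) : H) = 1 := by rw [map_one]; rfl
    have h2 : ((1 : X) : H) = 1 := rfl
    rw [h1, h2, hr3', Bialgebra.counit_one, mul_one, sub_self]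
  · intro i j; exact hχlin i (e j)
  · -- right coideal
    -- the functionals ρ i j
    set ρ : Fin M → Fin M → (X →ₗ[ℂ] ℂ) := fun i j =>
      (r (ψ i j)).comp (X.val.toLinearMap.comp ν.toLinearMap) with hρ
    have hρapp : ∀ i j (b : X), ρ i j b = r (ψ i j) ((ν b : H)) := fun _ _ _ => rfl
    have hρmul : ∀ i j (a b : X), ρ i j (a * b) = ∑ k, ρ k j a * ρ i k b := by
      intro i j a b
      have hcoe : ((ν (a * b) : X) : H) = ((ν a : X) : H) * ((ν b : X) : H) := by
        rw [map_mul]; rfl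
      simp only [hρapp]
      rw [hcoe, hr3 _ _ _ (Fin M) inferInstance _ _ (hΔψ i j)]
      exact Finset.sum_congr rfl fun k _ => mul_comm _ _
    have hρres : ∀ i j, InRestrictedDual (ρ i j) := fun i j =>
      ⟨M, fun k => ρ k j, fun k => ρ i k, hρmul i j⟩
    have hεmul : ∀ a b : X, εX (a * b) = εX a * εX b := by
      intro a b
      simp only [hεX, LinearMap.comp_apply]
      rw [show X.val.toLinearMap (a * b) = ((a : H) * (b : H)) from rfl,
        Bialgebra.counit_mul]
      rfl
    have hεres : InRestrictedDual εX := ⟨1, fun _ => εX, fun _ => εX, by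
      intro a b; rw [hεmul]; simp⟩
    have hχres : ∀ i, InRestrictedDual (χlin i) := by
      intro i
      refine ⟨M + 1, Fin.snoc (fun j => χlin j) εX, Fin.snoc (fun j => ρ i j) (χlin i), ?_⟩
      intro a b
      rw [Fin.sum_univ_castSucc]
      simp only [Fin.snoc_castSucc, Fin.snoc_last]
      rw [hmul i a b]
      rfl
    intro f hf
    refine Submodule.span_induction ?_ ?_ ?_ ?_ hf
    · rintro x (rfl | ⟨i, rfl⟩)
      · exact ⟨1, fun _ => εX, fun _ => εX,
          fun _ => Submodule.subset_span (Or.inl rfl), fun _ => hεres,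
          fun a b => by rw [hεmul]; simp⟩
      · refine ⟨M + 1, Fin.snoc (fun j => χlin j) εX,
          Fin.snoc (fun j => ρ i j) (χlin i), ?_, ?_, ?_⟩
        · intro k
          induction k using Fin.lastCases with
          | last => rw [Fin.snoc_last]; exact Submodule.subset_span (Or.inl rfl)
          | cast j => rw [Fin.snoc_castSucc]; exact Submodule.subset_span (Or.inr ⟨j, rfl⟩)
        · intro k
          induction k using Fin.lastCases with
          | last => rw [Fin.snoc_last]; exact hχres i
          | cast j => rw [Fin.snoc_castSucc]; exact hρres i j
        · intro a b
          rw [Fin.sum_univ_castSucc]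
          simp only [Fin.snoc_castSucc, Fin.snoc_last]
          rw [hmul i a b]
          rfl
    · exact ⟨0, Fin.elim0, Fin.elim0, fun k => k.elim0, fun k => k.elim0,
        fun a b => by simp⟩
    · rintro f1 f2 _ _ ⟨n1, g1, h1, hg1, hh1, hf1⟩ ⟨n2, g2, h2, hg2, hh2, hf2⟩
      refine ⟨n1 + n2, Fin.append g1 g2, Fin.append h1 h2, ?_, ?_, ?_⟩
      · intro k
        induction k using Fin.addCases with
        | left j => rw [Fin.append_left]; exact hg1 j
        | right j => rw [Fin.append_right]; exact hg2 j
      · intro k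
        induction k using Fin.addCases with
        | left j => rw [Fin.append_left]; exact hh1 j
        | right j => rw [Fin.append_right]; exact hh2 j
      · intro a b
        rw [LinearMap.add_apply, hf1, hf2, Fin.sum_univ_add]
        simp only [Fin.append_left, Fin.append_right]
    · rintro c f1 _ ⟨n, g, h, hg, hh, hf1⟩
      refine ⟨n, fun k => c • g k, h, fun k => Submodule.smul_mem _ c (hg k), hh, ?_⟩
      intro a b
      rw [LinearMap.smul_apply, hf1, Finset.smul_sum]
      exact Finset.sum_congr rfl fun k _ => by
        simp [smul_eq_mul, mul_assoc]
end

section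
/- In the setting of the construction theorem, the covariance of ν and the r-form commutation relation imply that for every a ∈ X and each j, the element a_{(1)} χ^k(a_{(2)}) ψ^j_k = r(ψ^j_k ⊗ ν(a)_{(1)}) b^k ν(a)_{(2)} − a b^j lies in X, where χ^k(a) = r(b^k ⊗ ν(a)) − ε(b^k)ε(a). -/
open TensorProduct MulOpposite


lemma aux_counit {H : Type} [Ring H] [HopfAlgebra ℂ H] {ι : Type} [Fintype ι]
    (x : H) (x1 x2 : ι → H)
    (h : Coalgebra.comul (R := ℂ) x = ∑ t, x1 t ⊗ₜ[ℂ] x2 t) :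
    ∑ t, Coalgebra.counit (R := ℂ) (x2 t) • x1 t = x := by
  have h2 := congrArg (fun z => (TensorProduct.rid ℂ H)
    ((LinearMap.lTensor H (Coalgebra.counit (R := ℂ))) z)) h
  simp only [Coalgebra.lTensor_counit_comul, map_sum, LinearMap.lTensor_tmul,
    TensorProduct.rid_tmul, one_smul] at h2
  exact h2.symm

/-- in the setting of the construction theorem, for every `a ∈ X` and
each `j` the element `a₍₁₎ χ^k(a₍₂₎) ψ^j_k` equals
`r(ψ^j_k ⊗ ν(a)₍₁₎) b^k ν(a)₍₂₎ − a b^j` and lies in `X`. -/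
theorem stmt14
    {H : Type} [Ring H] [HopfAlgebra ℂ H]
    -- universal r-form
    (r : H →ₗ[ℂ] H →ₗ[ℂ] ℂ)
    (hr1 : ∀ (a b : H) (ι κ : Type) (_ : Fintype ι) (_ : Fintype κ)
      (a1 a2 : ι → H) (b1 b2 : κ → H),
      Coalgebra.comul (R := ℂ) a = ∑ t, a1 t ⊗ₜ[ℂ] a2 t →
      Coalgebra.comul (R := ℂ) b = ∑ s, b1 s ⊗ₜ[ℂ] b2 s →
      ∑ t, ∑ s, r (a1 t) (b1 s) • (a2 t * b2 s)
        = ∑ t, ∑ s, r (a2 t) (b2 s) • (b1 s * a1 t))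
    (hr2 : ∀ (a b c : H) (κ : Type) (_ : Fintype κ) (c1 c2 : κ → H),
      Coalgebra.comul (R := ℂ) c = ∑ s, c1 s ⊗ₜ[ℂ] c2 s →
      r (a * b) c = ∑ s, r a (c1 s) * r b (c2 s))
    (hr2' : ∀ c : H, r 1 c = Coalgebra.counit (R := ℂ) c)
    (hr3 : ∀ (a b c : H) (ι : Type) (_ : Fintype ι) (a1 a2 : ι → H),
      Coalgebra.comul (R := ℂ) a = ∑ t, a1 t ⊗ₜ[ℂ] a2 t →
      r a (b * c) = ∑ t, r (a1 t) c * r (a2 t) b)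
    (hr3' : ∀ a : H, r a 1 = Coalgebra.counit (R := ℂ) a)
    -- X: a left coideal subalgebra
    (X : Subalgebra ℂ H)
    (comulX : X →ₗ[ℂ] H ⊗[ℂ] X)
    (hcomulX : ∀ a : X,
      (TensorProduct.map (LinearMap.id) X.val.toLinearMap) (comulX a)
        = Coalgebra.comul (R := ℂ) (a : H))
    -- invertibility-closure property of X
    (hclosure : ∀ (n : ℕ) (x y : Fin n → Fin n → H),
      (∀ i j, x i j ∈ X) →
      (∀ i j, ∑ k, x i k * y k j = if i = j then (1 : H) else 0) →
      (∀ i j, ∑ k, y i k * x k j = if i = j then (1 : H) else 0) →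
      ∀ i j, y i j ∈ X)
    -- e^i and b^i with their matrix coefficients
    {M : ℕ} (e bb : Fin M → X) (π ψ : Fin M → Fin M → H)
    (hπ : ∀ i, comulX (e i) = ∑ j, π i j ⊗ₜ[ℂ] e j)
    (hΔπ : ∀ i j, Coalgebra.comul (R := ℂ) (π i j) = ∑ k, π i k ⊗ₜ[ℂ] π k j)
    (hεπ : ∀ i j, Coalgebra.counit (R := ℂ) (π i j) = if i = j then 1 else 0)
    (hψ : ∀ i, comulX (bb i) = ∑ j, ψ i j ⊗ₜ[ℂ] bb j)
    (hΔψ : ∀ i j, Coalgebra.comul (R := ℂ) (ψ i j) = ∑ k, ψ i k ⊗ₜ[ℂ] ψ k j)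
    (hεψ : ∀ i j, Coalgebra.counit (R := ℂ) (ψ i j) = if i = j then 1 else 0)
    -- covariant algebra endomorphism ν of X
    (ν : X →ₐ[ℂ] X)
    (hν : ∀ a : X, comulX (ν a) = (TensorProduct.map LinearMap.id ν.toLinearMap) (comulX a))
    -- the functionals χ^i and the invertible matrix χ
    (χ : Fin M → X → ℂ)
    (hχ : ∀ i (a : X), χ i a =
      r ((bb i : H)) ((ν a : H))
        - Coalgebra.counit (R := ℂ) ((bb i : H)) * Coalgebra.counit (R := ℂ) ((a : H)))
    (χinv : Fin M → Fin M → ℂ)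
    (hχinv1 : ∀ i j, ∑ k, χ i (e k) * χinv k j = if i = j then 1 else 0)
    (hχinv2 : ∀ i j, ∑ k, χinv i k * χ k (e j) = if i = j then 1 else 0)
    :
    ∀ (a : X) (j : Fin M)
      (ι κ : Type) (_ : Fintype ι) (_ : Fintype κ)
      (a1 : ι → H) (a2 : ι → X) (c1 : κ → H) (c2 : κ → X),
      comulX a = ∑ t, a1 t ⊗ₜ[ℂ] a2 t →
      comulX (ν a) = ∑ s, c1 s ⊗ₜ[ℂ] c2 s →
      ((∑ t, ∑ k, χ k (a2 t) • (a1 t * ψ j k))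
          = (∑ s, ∑ k, r (ψ j k) (c1 s) • ((bb k : H) * ((c2 s : H))))
            - (a : H) * ((bb j : H))) ∧
      (∑ t, ∑ k, χ k (a2 t) • (a1 t * ψ j k)) ∈ X := by
  intro a j ι κ _ _ a1 a2 c1 c2 ha hc
  -- H-level comultiplication facts
  have hΔa : Coalgebra.comul (R := ℂ) (a : H) = ∑ t, a1 t ⊗ₜ[ℂ] ((a2 t : H)) := by
    rw [← hcomulX a, ha]; simp [map_sum]
  have hΔν : Coalgebra.comul (R := ℂ) ((ν a : X) : H) = ∑ s, c1 s ⊗ₜ[ℂ] ((c2 s : H)) := by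
    rw [← hcomulX (ν a), hc]; simp [map_sum]
  have hΔb : ∀ k, Coalgebra.comul (R := ℂ) ((bb k : H)) = ∑ l, ψ k l ⊗ₜ[ℂ] ((bb l : H)) := by
    intro k; rw [← hcomulX (bb k), hψ k]; simp [map_sum]
  -- counit facts
  have hca : ∑ t, Coalgebra.counit (R := ℂ) ((a2 t : H)) • a1 t = (a : H) :=
    aux_counit _ _ _ hΔa
  have hcb : ∑ k, Coalgebra.counit (R := ℂ) ((bb k : H)) • ψ j k = (bb j : H) :=
    aux_counit _ _ _ (hΔb j)
  -- the r-form commutation applied to b^j and ν(a)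
  have hcomm := hr1 ((bb j : H)) ((ν a : X) : H) (Fin M) κ inferInstance inferInstance
    (ψ j) (fun k => (bb k : H)) c1 (fun s => (c2 s : H)) (hΔb j) hΔν
  -- covariance: two representations of comulX (ν a)
  have hcov : (∑ s, c1 s ⊗ₜ[ℂ] c2 s : H ⊗[ℂ] X) = ∑ t, a1 t ⊗ₜ[ℂ] ν (a2 t) := by
    rw [← hc, hν a, ha]; simp [map_sum]
  -- apply a bilinear map to hcov for each k
  have hcov' : ∀ k, ∑ s, r ((bb k : H)) ((c2 s : H)) • (c1 s * ψ j k)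
      = ∑ t, r ((bb k : H)) ((ν (a2 t) : X) : H) • (a1 t * ψ j k) := by
    intro k
    let B : H →ₗ[ℂ] X →ₗ[ℂ] H := LinearMap.mk₂ ℂ
      (fun h x => r ((bb k : H)) ((x : H)) • (h * ψ j k))
      (fun h h' x => by simp [add_mul, smul_add])
      (fun c h x => by
        rw [smul_mul_assoc, smul_comm])
      (fun h x x' => by push_cast; simp [add_smul]
        )
      (fun c h x => by push_cast; simp [mul_smul]
        )
    have := congrArg (TensorProduct.lift B) hcov
    simpa [map_sum, B] using this
  -- rewrite χ
  have hLHS : (∑ t, ∑ k, χ k (a2 t) • (a1 t * ψ j k))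
      = (∑ t, ∑ k, r ((bb k : H)) ((ν (a2 t) : X) : H) • (a1 t * ψ j k))
        - ∑ t, ∑ k, (Coalgebra.counit (R := ℂ) ((bb k : H))
            * Coalgebra.counit (R := ℂ) ((a2 t : H))) • (a1 t * ψ j k) := by
    rw [← Finset.sum_sub_distrib]
    refine Finset.sum_congr rfl fun t _ => ?_
    rw [← Finset.sum_sub_distrib]
    refine Finset.sum_congr rfl fun k _ => ?_
    rw [hχ, sub_smul]
  have hsecond : (∑ t, ∑ k, (Coalgebra.counit (R := ℂ) ((bb k : H))
        * Coalgebra.counit (R := ℂ) ((a2 t : H))) • (a1 t * ψ j k))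
      = (a : H) * (bb j : H) := by
    rw [← hca, ← hcb, Finset.sum_mul]
    refine Finset.sum_congr rfl fun t _ => ?_
    rw [Finset.mul_sum]
    refine Finset.sum_congr rfl fun k _ => ?_
    rw [smul_mul_assoc, mul_smul_comm, mul_comm, mul_smul]
  have hfirst : (∑ t, ∑ k, r ((bb k : H)) ((ν (a2 t) : X) : H) • (a1 t * ψ j k))
      = ∑ s, ∑ k, r (ψ j k) (c1 s) • ((bb k : H) * ((c2 s : H))) := by
    rw [Finset.sum_comm]
    calc ∑ k, ∑ t, r ((bb k : H)) ((ν (a2 t) : X) : H) • (a1 t * ψ j k)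
        = ∑ k, ∑ s, r ((bb k : H)) ((c2 s : H)) • (c1 s * ψ j k) := by
          refine Finset.sum_congr rfl fun k _ => (hcov' k).symm
      _ = ∑ k, ∑ s, r (ψ j k) (c1 s) • ((bb k : H) * ((c2 s : H))) := hcomm.symm
      _ = _ := Finset.sum_comm
  have heq : (∑ t, ∑ k, χ k (a2 t) • (a1 t * ψ j k))
      = (∑ s, ∑ k, r (ψ j k) (c1 s) • ((bb k : H) * ((c2 s : H))))
        - (a : H) * ((bb j : H)) := by
    rw [hLHS, hsecond, hfirst]
  refine ⟨heq, ?_⟩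
  rw [heq]
  refine sub_mem (sum_mem fun s _ => sum_mem fun k _ =>
    X.smul_mem (X.mul_mem (bb k).2 (c2 s).2) _) (X.mul_mem a.2 (bb j).2)
end

section
/- In the alternative (Jurčo-style) construction: let Γ be the free left X-module with basis γ_1,…,γ_M and define a right X-action by γ_i · a := r(ψ^j_i ⊗ a_{(1)}) ν(a_{(2)}) γ_j. Then this right action makes Γ an X-bimodule, i.e. the left and right actions commute and (γ_i · a) · b = γ_i · (ab) for all a, b ∈ X. -/
open TensorProduct MulOpposite

/-- Jurčo-style construction: the right action
`γ_i · a := r(ψ^j_i ⊗ a₍₁₎) ν(a₍₂₎) γ_j` on the free left `X`-module with basis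
`γ_1, …, γ_M` commutes with the left action and is associative, so it makes the free
module an `X`-bimodule. -/
theorem stmt17
    {H : Type} [Ring H] [HopfAlgebra ℂ H]
    (r : H →ₗ[ℂ] H →ₗ[ℂ] ℂ)
    (hr1 : ∀ (a b : H) (ι κ : Type) (_ : Fintype ι) (_ : Fintype κ)
      (a1 a2 : ι → H) (b1 b2 : κ → H),
      Coalgebra.comul (R := ℂ) a = ∑ t, a1 t ⊗ₜ[ℂ] a2 t →
      Coalgebra.comul (R := ℂ) b = ∑ s, b1 s ⊗ₜ[ℂ] b2 s →
      ∑ t, ∑ s, r (a1 t) (b1 s) • (a2 t * b2 s)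
        = ∑ t, ∑ s, r (a2 t) (b2 s) • (b1 s * a1 t))
    (hr2 : ∀ (a b c : H) (κ : Type) (_ : Fintype κ) (c1 c2 : κ → H),
      Coalgebra.comul (R := ℂ) c = ∑ s, c1 s ⊗ₜ[ℂ] c2 s →
      r (a * b) c = ∑ s, r a (c1 s) * r b (c2 s))
    (hr2' : ∀ c : H, r 1 c = Coalgebra.counit (R := ℂ) c)
    (hr3 : ∀ (a b c : H) (ι : Type) (_ : Fintype ι) (a1 a2 : ι → H),
      Coalgebra.comul (R := ℂ) a = ∑ t, a1 t ⊗ₜ[ℂ] a2 t →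
      r a (b * c) = ∑ t, r (a1 t) c * r (a2 t) b)
    (hr3' : ∀ a : H, r a 1 = Coalgebra.counit (R := ℂ) a)
    (X : Subalgebra ℂ H)
    (comulX : X →ₗ[ℂ] H ⊗[ℂ] X)
    (hcomulX : ∀ a : X,
      (TensorProduct.map (LinearMap.id) X.val.toLinearMap) (comulX a)
        = Coalgebra.comul (R := ℂ) (a : H))
    {M : ℕ} (bb : Fin M → X) (ψ : Fin M → Fin M → H)
    (hψ : ∀ i, comulX (bb i) = ∑ j, ψ i j ⊗ₜ[ℂ] bb j)
    (hΔψ : ∀ i j, Coalgebra.comul (R := ℂ) (ψ i j) = ∑ k, ψ i k ⊗ₜ[ℂ] ψ k j)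
    (hεψ : ∀ i j, Coalgebra.counit (R := ℂ) (ψ i j) = if i = j then 1 else 0)
    (ν : X →ₐ[ℂ] X)
    (hν : ∀ a : X, comulX (ν a) = (TensorProduct.map LinearMap.id ν.toLinearMap) (comulX a))
    :
    ∀ (a b : X) (ι κ μ : Type) (_ : Fintype ι) (_ : Fintype κ) (_ : Fintype μ)
      (a1 : ι → H) (a2 : ι → X) (b1 : κ → H) (b2 : κ → X)
      (m1 : μ → H) (m2 : μ → X),
      comulX a = ∑ t, a1 t ⊗ₜ[ℂ] a2 t →
      comulX b = ∑ s, b1 s ⊗ₜ[ℂ] b2 s →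
      comulX (a * b) = ∑ u, m1 u ⊗ₜ[ℂ] m2 u →
      -- the right action commutes with the left action
      (∀ (x : Fin M → X) (c : X) (k : Fin M),
        ∑ j, (c * x j) * (∑ t, r (ψ k j) (a1 t) • ν (a2 t))
          = c * ∑ j, x j * (∑ t, r (ψ k j) (a1 t) • ν (a2 t))) ∧
      -- (γ_i · a) · b = γ_i · (a b)
      (∀ i k : Fin M,
        ∑ j, (∑ t, r (ψ j i) (a1 t) • ν (a2 t)) * (∑ s, r (ψ k j) (b1 s) • ν (b2 s))
          = ∑ u, r (ψ k i) (m1 u) • ν (m2 u)) := by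
  intro a b ι κ μ _ _ _ a1 a2 b1 b2 m1 m2 ha hb hm
  constructor
  · intro x c k
    rw [Finset.mul_sum]
    exact Finset.sum_congr rfl fun j _ => mul_assoc _ _ _
  · intro i k
    have hinj : Function.Injective
        (TensorProduct.map (LinearMap.id) X.val.toLinearMap : H ⊗[ℂ] X →ₗ[ℂ] H ⊗[ℂ] H) :=
      Module.Flat.lTensor_preserves_injective_linearMap (M := H) X.val.toLinearMap
        Subtype.val_injective
    have key : comulX (a * b) = ∑ t, ∑ s, (a1 t * b1 s) ⊗ₜ[ℂ] (a2 t * b2 s) := by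
      apply hinj
      rw [hcomulX]
      have h1 : Coalgebra.comul (R := ℂ) ((a * b : X) : H)
          = Coalgebra.comul (R := ℂ) (a : H) * Coalgebra.comul (R := ℂ) (b : H) := by
        push_cast
        rw [← Bialgebra.comulAlgHom_apply ℂ, ← Bialgebra.comulAlgHom_apply ℂ,
          ← Bialgebra.comulAlgHom_apply ℂ, map_mul]
      rw [h1, ← hcomulX a, ← hcomulX b, ha, hb]
      simp only [map_sum, TensorProduct.map_tmul, LinearMap.id_coe, id_eq,
        Subalgebra.coe_val, AlgHom.toLinearMap_apply, Finset.sum_mul_sum,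
        Algebra.TensorProduct.tmul_mul_tmul]
      push_cast
      rfl
    have e : (∑ u, m1 u ⊗ₜ[ℂ] m2 u : H ⊗[ℂ] X)
        = ∑ t, ∑ s, (a1 t * b1 s) ⊗ₜ[ℂ] (a2 t * b2 s) := hm.symm.trans key
    let F : H ⊗[ℂ] X →ₗ[ℂ] X :=
      (TensorProduct.lift ((LinearMap.lsmul ℂ X).comp (r (ψ k i)))).comp
        (TensorProduct.map LinearMap.id ν.toLinearMap)
    have hF : ∀ (h : H) (x : X), F (h ⊗ₜ[ℂ] x) = r (ψ k i) h • ν x := by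
      intro h x
      simp [F]
    have hR : ∑ u, r (ψ k i) (m1 u) • ν (m2 u)
        = ∑ t, ∑ s, r (ψ k i) (a1 t * b1 s) • ν (a2 t * b2 s) := by
      have := congrArg F e
      simpa [map_sum, hF] using this
    have hKI : ∀ (t : ι) (s : κ), r (ψ k i) (a1 t * b1 s)
        = ∑ j, r (ψ k j) (b1 s) * r (ψ j i) (a1 t) := fun t s =>
      hr3 (ψ k i) (a1 t) (b1 s) (Fin M) inferInstance (fun j => ψ k j) (fun j => ψ j i)
        (hΔψ k i)
    rw [hR]
    simp only [hKI, Finset.sum_smul, map_mul, Finset.sum_mul, Finset.mul_sum,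
      smul_mul_smul_comm, smul_smul]
    conv_lhs => rw [Finset.sum_comm]
    refine (Finset.sum_congr rfl fun s _ => Finset.sum_comm).trans ?_
    conv_lhs => rw [Finset.sum_comm]
    exact Finset.sum_congr rfl fun t _ => Finset.sum_congr rfl fun s _ =>
      Finset.sum_congr rfl fun j _ => by rw [mul_comm ((r (ψ j i)) (a1 t))]
end

section
/- In the alternative construction: with Γ the free left X-module on γ_1,…,γ_M, bimodule structure γ_i · a = r(ψ^j_i ⊗ a_{(1)}) ν(a_{(2)}) γ_j, and Δ_Γ : Γ → H ⊗ Γ defined by a γ_i ↦ a_{(1)} S^{-1}(ψ^j_i) ⊗ a_{(2)} γ_j, one has Δ_Γ(γ_i · a) = S^{-1}(ψ^j_i) a_{(1)} ⊗ γ_j · a_{(2)}, and the element ω = Σ_i b^i γ_i is invariant: Δ_Γ(ω) = 1 ⊗ ω. Consequently d a := ω a − a ω defines a covariant first order differential calculus on X. -/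
open TensorProduct MulOpposite

set_option synthInstance.maxHeartbeats 1000000
set_option maxHeartbeats 2000000

suppress_compilation

namespace Stmt18Aux

variable {H : Type} [Ring H] [HopfAlgebra ℂ H]

/-- chosen finite decomposition of `comul x` -/
noncomputable def dec (x : H) : Finset (H × H) :=
  (TensorProduct.exists_finset (R := ℂ) (Coalgebra.comul (R := ℂ) x)).choose

lemma dec_spec (x : H) :
    Coalgebra.comul (R := ℂ) x = ∑ p ∈ dec x, p.1 ⊗ₜ[ℂ] p.2 :=
  (TensorProduct.exists_finset (R := ℂ) (Coalgebra.comul (R := ℂ) x)).choose_spec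

variable {σ : Type*}

lemma counit_smul_sum {x : H} {s : Finset σ} {x1 x2 : σ → H}
    (hx : Coalgebra.comul (R := ℂ) x = ∑ u ∈ s, x1 u ⊗ₜ[ℂ] x2 u) :
    ∑ u ∈ s, Coalgebra.counit (R := ℂ) (x1 u) • x2 u = x := by
  have h := congrArg (fun z : H ⊗[ℂ] H =>
    (TensorProduct.lid ℂ H) ((Coalgebra.counit (R := ℂ)).rTensor H z)) hx
  simpa [map_sum, Coalgebra.rTensor_counit_comul] using h.symm

lemma smul_counit_sum {x : H} {s : Finset σ} {x1 x2 : σ → H}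
    (hx : Coalgebra.comul (R := ℂ) x = ∑ u ∈ s, x1 u ⊗ₜ[ℂ] x2 u) :
    ∑ u ∈ s, Coalgebra.counit (R := ℂ) (x2 u) • x1 u = x := by
  have h := congrArg (fun z : H ⊗[ℂ] H =>
    (TensorProduct.rid ℂ H) ((Coalgebra.counit (R := ℂ)).lTensor H z)) hx
  simpa [map_sum, Coalgebra.lTensor_counit_comul] using h.symm

lemma antipode_mul_sum {x : H} {s : Finset σ} {x1 x2 : σ → H}
    (hx : Coalgebra.comul (R := ℂ) x = ∑ u ∈ s, x1 u ⊗ₜ[ℂ] x2 u) :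
    ∑ u ∈ s, HopfAlgebra.antipode (R := ℂ) (x1 u) * x2 u
      = Coalgebra.counit (R := ℂ) x • (1 : H) := by
  have h := congrArg (fun z : H ⊗[ℂ] H =>
    LinearMap.mul' ℂ H ((HopfAlgebra.antipode (R := ℂ)).rTensor H z)) hx
  simp only [map_sum, LinearMap.rTensor_tmul, LinearMap.mul'_apply] at h
  rw [← h, HopfAlgebra.mul_antipode_rTensor_comul_apply, Algebra.algebraMap_eq_smul_one]

lemma mul_antipode_sum {x : H} {s : Finset σ} {x1 x2 : σ → H}
    (hx : Coalgebra.comul (R := ℂ) x = ∑ u ∈ s, x1 u ⊗ₜ[ℂ] x2 u) :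
    ∑ u ∈ s, x1 u * HopfAlgebra.antipode (R := ℂ) (x2 u)
      = Coalgebra.counit (R := ℂ) x • (1 : H) := by
  have h := congrArg (fun z : H ⊗[ℂ] H =>
    LinearMap.mul' ℂ H ((HopfAlgebra.antipode (R := ℂ)).lTensor H z)) hx
  simp only [map_sum, LinearMap.lTensor_tmul, LinearMap.mul'_apply] at h
  rw [← h, HopfAlgebra.mul_antipode_lTensor_comul_apply, Algebra.algebraMap_eq_smul_one]

lemma antipode_one' : HopfAlgebra.antipode (R := ℂ) (1 : H) = 1 := by
  have h := HopfAlgebra.mul_antipode_rTensor_comul_apply (R := ℂ) (1 : H)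
  simpa [Bialgebra.comul_one, Bialgebra.counit_one, Algebra.TensorProduct.one_def] using h

lemma comul_mul_sum {a b : H} {s w : Finset σ} {a1 a2 b1 b2 : σ → H}
    (ha : Coalgebra.comul (R := ℂ) a = ∑ t ∈ s, a1 t ⊗ₜ[ℂ] a2 t)
    (hb : Coalgebra.comul (R := ℂ) b = ∑ u ∈ w, b1 u ⊗ₜ[ℂ] b2 u) :
    Coalgebra.comul (R := ℂ) (a * b)
      = ∑ t ∈ s, ∑ u ∈ w, (a1 t * b1 u) ⊗ₜ[ℂ] (a2 t * b2 u) := by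
  rw [Bialgebra.comul_mul, ha, hb, Finset.sum_mul_sum]
  simp [Algebra.TensorProduct.tmul_mul_tmul]

lemma coassoc3 {x : H} {s : Finset σ} {x1 x2 : σ → H}
    (hx : Coalgebra.comul (R := ℂ) x = ∑ u ∈ s, x1 u ⊗ₜ[ℂ] x2 u) :
    ∑ u ∈ s, ∑ p ∈ dec (x1 u), p.1 ⊗ₜ[ℂ] (p.2 ⊗ₜ[ℂ] x2 u)
      = ∑ u ∈ s, ∑ p ∈ dec (x2 u), x1 u ⊗ₜ[ℂ] (p.1 ⊗ₜ[ℂ] p.2) := by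
  have h := Coalgebra.coassoc_apply (R := ℂ) x
  rw [hx] at h
  simp only [map_sum, LinearMap.rTensor_tmul, LinearMap.lTensor_tmul] at h
  calc ∑ u ∈ s, ∑ p ∈ dec (x1 u), p.1 ⊗ₜ[ℂ] (p.2 ⊗ₜ[ℂ] x2 u)
      = ∑ u ∈ s, (TensorProduct.assoc ℂ H H H)
          ((Coalgebra.comul (R := ℂ) (x1 u)) ⊗ₜ[ℂ] x2 u) := by
        refine Finset.sum_congr rfl fun u _ => ?_
        rw [dec_spec (x1 u)]
        simp [TensorProduct.sum_tmul, map_sum]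
    _ = ∑ u ∈ s, x1 u ⊗ₜ[ℂ] Coalgebra.comul (R := ℂ) (x2 u) := h
    _ = ∑ u ∈ s, ∑ p ∈ dec (x2 u), x1 u ⊗ₜ[ℂ] (p.1 ⊗ₜ[ℂ] p.2) := by
        refine Finset.sum_congr rfl fun u _ => ?_
        rw [dec_spec (x2 u)]
        simp [TensorProduct.tmul_sum]


local notation "S" => HopfAlgebra.antipode (R := ℂ) (A := H)
local notation "ε" => Coalgebra.counit (R := ℂ) (A := H)

lemma sum_blocks_comm {α β γ δ : Type*} {N : Type*} [AddCommMonoid N]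
    (s : Finset α) (t : α → Finset β) (w : Finset γ) (x : γ → Finset δ)
    (f : α → β → γ → δ → N) :
    ∑ p ∈ s, ∑ u ∈ t p, ∑ q ∈ w, ∑ v ∈ x q, f p u q v
      = ∑ q ∈ w, ∑ v ∈ x q, ∑ p ∈ s, ∑ u ∈ t p, f p u q v := by
  calc ∑ p ∈ s, ∑ u ∈ t p, ∑ q ∈ w, ∑ v ∈ x q, f p u q v
      = ∑ z ∈ s.sigma t, ∑ q ∈ w, ∑ v ∈ x q, f z.1 z.2 q v := Finset.sum_sigma' s t _
    _ = ∑ z ∈ s.sigma t, ∑ y ∈ w.sigma x, f z.1 z.2 y.1 y.2 :=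
        Finset.sum_congr rfl fun z _ => Finset.sum_sigma' w x _
    _ = ∑ y ∈ w.sigma x, ∑ z ∈ s.sigma t, f z.1 z.2 y.1 y.2 := Finset.sum_comm
    _ = ∑ y ∈ w.sigma x, ∑ p ∈ s, ∑ u ∈ t p, f p u y.1 y.2 :=
        Finset.sum_congr rfl fun y _ =>
          (Finset.sum_sigma' s t fun p u => f p u y.1 y.2).symm
    _ = ∑ q ∈ w, ∑ v ∈ x q, ∑ p ∈ s, ∑ u ∈ t p, f p u q v :=
        (Finset.sum_sigma' w x fun q v => ∑ p ∈ s, ∑ u ∈ t p, f p u q v).symm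

lemma stepA (α β : H) :
    ∑ p ∈ dec α, ∑ q ∈ dec β, p.1 * q.1 * (S q.2 * S p.2)
      = (ε α * ε β) • (1 : H) := by
  have hβ := mul_antipode_sum (dec_spec β)
  have hα := mul_antipode_sum (dec_spec α)
  calc ∑ p ∈ dec α, ∑ q ∈ dec β, p.1 * q.1 * (S q.2 * S p.2)
      = ∑ p ∈ dec α, p.1 * (∑ q ∈ dec β, q.1 * S q.2) * S p.2 := by
        refine Finset.sum_congr rfl fun p _ => ?_
        rw [Finset.mul_sum, Finset.sum_mul]
        exact Finset.sum_congr rfl fun q _ => by simp [mul_assoc]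
    _ = ∑ p ∈ dec α, (ε β) • (p.1 * S p.2) := by
        refine Finset.sum_congr rfl fun p _ => ?_
        rw [hβ]
        simp [mul_smul_comm, smul_mul_assoc]
    _ = (ε β) • ((ε α) • (1:H)) := by rw [← Finset.smul_sum, hα]
    _ = (ε α * ε β) • 1 := by rw [smul_smul, mul_comm]

lemma stepB (α β w : H) :
    ∑ u ∈ dec α, ∑ v ∈ dec β, S (u.1 * v.1) * (u.2 * (v.2 * w))
      = (ε α * ε β) • w := by
  have hc := comul_mul_sum (dec_spec α) (dec_spec β)
  have heq : Coalgebra.comul (R := ℂ) (α * β)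
      = ∑ z ∈ (dec α) ×ˢ (dec β), (z.1.1 * z.2.1) ⊗ₜ[ℂ] (z.1.2 * z.2.2) := by
    rw [hc, Finset.sum_product]
  have h := antipode_mul_sum heq
  have h2 := congrArg (fun y : H => y * w) h
  simp only [Finset.sum_mul, smul_mul_assoc, one_mul, Finset.sum_product] at h2
  calc ∑ u ∈ dec α, ∑ v ∈ dec β, S (u.1 * v.1) * (u.2 * (v.2 * w))
      = ∑ u ∈ dec α, ∑ v ∈ dec β, S (u.1 * v.1) * (u.2 * v.2) * w := by
        refine Finset.sum_congr rfl fun u _ => Finset.sum_congr rfl fun v _ => by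
          simp [mul_assoc]
    _ = Coalgebra.counit (R := ℂ) (α * β) • w := h2
    _ = (ε α * ε β) • w := by rw [Bialgebra.counit_mul]

/-- auxiliary linear map `x ⊗ (y ⊗ z) ↦ S (x * c) * (y * w * S z)` -/
noncomputable def Fmap (c w : H) : H ⊗[ℂ] (H ⊗[ℂ] H) →ₗ[ℂ] H :=
  LinearMap.mul' ℂ H ∘ₗ TensorProduct.map
    ((HopfAlgebra.antipode (R := ℂ)) ∘ₗ LinearMap.mulRight ℂ c)
    (LinearMap.mul' ℂ H ∘ₗ TensorProduct.map (LinearMap.mulRight ℂ w)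
      (HopfAlgebra.antipode (R := ℂ)))

lemma Fmap_tmul (c w x y z : H) :
    Fmap c w (x ⊗ₜ[ℂ] (y ⊗ₜ[ℂ] z)) = S (x * c) * (y * w * S z) := by
  simp [Fmap, LinearMap.mul'_apply]

/-- auxiliary linear map `x ⊗ (y ⊗ z) ↦ S (c * x) * (d * (y * S z) * w)` -/
noncomputable def Gmap (c d w : H) : H ⊗[ℂ] (H ⊗[ℂ] H) →ₗ[ℂ] H :=
  LinearMap.mul' ℂ H ∘ₗ TensorProduct.map
    ((HopfAlgebra.antipode (R := ℂ)) ∘ₗ LinearMap.mulLeft ℂ c)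
    (LinearMap.mulRight ℂ w ∘ₗ LinearMap.mulLeft ℂ d ∘ₗ LinearMap.mul' ℂ H ∘ₗ
      TensorProduct.map LinearMap.id (HopfAlgebra.antipode (R := ℂ)))

lemma Gmap_tmul (c d w x y z : H) :
    Gmap c d w (x ⊗ₜ[ℂ] (y ⊗ₜ[ℂ] z)) = S (c * x) * (d * (y * S z) * w) := by
  simp [Gmap, LinearMap.mul'_apply]

lemma antipode_mul' (a b : H) : S (a * b) = S b * S a := by
  have ha : a = ∑ p ∈ dec a, ε p.2 • p.1 := (smul_counit_sum (dec_spec a)).symm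
  have hb : b = ∑ q ∈ dec b, ε q.2 • q.1 := (smul_counit_sum (dec_spec b)).symm
  have h1 : S (a * b) = ∑ p ∈ dec a, ∑ q ∈ dec b, (ε p.2 * ε q.2) • S (p.1 * q.1) := by
    have hab : a * b = ∑ p ∈ dec a, ∑ q ∈ dec b, (ε p.2 * ε q.2) • (p.1 * q.1) := by
      conv_lhs => rw [ha, hb]
      rw [Finset.sum_mul_sum]
      exact Finset.sum_congr rfl fun p _ => Finset.sum_congr rfl fun q _ => by
        simp [smul_mul_assoc, mul_smul_comm, smul_smul, mul_comm]
    rw [hab]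
    simp [map_sum, map_smul]
  -- substitute stepA
  have h2 : S (a * b) = ∑ p ∈ dec a, ∑ u ∈ dec p.2, ∑ q ∈ dec b, ∑ v ∈ dec q.2,
      S (p.1 * q.1) * (u.1 * (v.1 * S v.2) * S u.2) := by
    rw [h1]
    refine Finset.sum_congr rfl fun p _ => ?_
    rw [Finset.sum_comm]
    refine Finset.sum_congr rfl fun q _ => ?_
    calc (ε p.2 * ε q.2) • S (p.1 * q.1)
        = S (p.1 * q.1) * ((ε p.2 * ε q.2) • 1) := by rw [mul_smul_comm, mul_one]
      _ = S (p.1 * q.1) * (∑ u ∈ dec p.2, ∑ v ∈ dec q.2, u.1 * v.1 * (S v.2 * S u.2)) := by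
          rw [stepA]
      _ = ∑ u ∈ dec p.2, ∑ v ∈ dec q.2, S (p.1 * q.1) * (u.1 * (v.1 * S v.2) * S u.2) := by
          rw [Finset.mul_sum]
          refine Finset.sum_congr rfl fun u _ => ?_
          rw [Finset.mul_sum]
          exact Finset.sum_congr rfl fun v _ => by simp [mul_assoc]
  -- E3 : coassociativity replacement on `a`
  have h3 : (∑ q ∈ dec b, ∑ v ∈ dec q.2, ∑ p ∈ dec a, ∑ u ∈ dec p.1,
        S (u.1 * q.1) * (u.2 * (v.1 * S v.2) * S p.2))
      = ∑ q ∈ dec b, ∑ v ∈ dec q.2, ∑ p ∈ dec a, ∑ u ∈ dec p.2,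
        S (p.1 * q.1) * (u.1 * (v.1 * S v.2) * S u.2) := by
    have h := congrArg (fun zz : H ⊗[ℂ] (H ⊗[ℂ] H) =>
      ∑ q ∈ dec b, ∑ v ∈ dec q.2, Fmap q.1 (v.1 * S v.2) zz) (coassoc3 (dec_spec a))
    simpa only [map_sum, Fmap_tmul] using h
  -- E4 : coassociativity replacement on `b`
  have h4 : (∑ p ∈ dec a, ∑ u ∈ dec p.1, ∑ q ∈ dec b, ∑ v ∈ dec q.1,
        S (u.1 * v.1) * (u.2 * (v.2 * S q.2) * S p.2))
      = ∑ p ∈ dec a, ∑ u ∈ dec p.1, ∑ q ∈ dec b, ∑ v ∈ dec q.2,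
        S (u.1 * q.1) * (u.2 * (v.1 * S v.2) * S p.2) := by
    have h := congrArg (fun zz : H ⊗[ℂ] (H ⊗[ℂ] H) =>
      ∑ p ∈ dec a, ∑ u ∈ dec p.1, Gmap u.1 u.2 (S p.2) zz) (coassoc3 (dec_spec b))
    simpa only [map_sum, Gmap_tmul] using h
  -- E5 : collapse the inner sums
  have h5 : (∑ p ∈ dec a, ∑ u ∈ dec p.1, ∑ q ∈ dec b, ∑ v ∈ dec q.1,
        S (u.1 * v.1) * (u.2 * (v.2 * S q.2) * S p.2))
      = ∑ p ∈ dec a, ∑ q ∈ dec b, (ε p.1 * ε q.1) • (S q.2 * S p.2) := by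
    refine Finset.sum_congr rfl fun p _ => ?_
    rw [Finset.sum_comm]
    refine Finset.sum_congr rfl fun q _ => ?_
    rw [← stepB p.1 q.1 (S q.2 * S p.2)]
    refine Finset.sum_congr rfl fun u _ => Finset.sum_congr rfl fun v _ => ?_
    simp [mul_assoc]
  -- final assembly
  have h6 : (∑ p ∈ dec a, ∑ q ∈ dec b, (ε p.1 * ε q.1) • (S q.2 * S p.2))
      = S b * S a := by
    have hsb : (∑ q ∈ dec b, ε q.1 • S q.2) = S b := by
      calc (∑ q ∈ dec b, ε q.1 • S q.2) = S (∑ q ∈ dec b, ε q.1 • q.2) := by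
            rw [map_sum]
            exact Finset.sum_congr rfl fun q _ => (map_smul _ _ _).symm
        _ = S b := by rw [counit_smul_sum (dec_spec b)]
    have hsa : (∑ p ∈ dec a, ε p.1 • S p.2) = S a := by
      calc (∑ p ∈ dec a, ε p.1 • S p.2) = S (∑ p ∈ dec a, ε p.1 • p.2) := by
            rw [map_sum]
            exact Finset.sum_congr rfl fun p _ => (map_smul _ _ _).symm
        _ = S a := by rw [counit_smul_sum (dec_spec a)]
    calc ∑ p ∈ dec a, ∑ q ∈ dec b, (ε p.1 * ε q.1) • (S q.2 * S p.2)
        = ∑ p ∈ dec a, ∑ q ∈ dec b, (ε q.1 • S q.2) * (ε p.1 • S p.2) := by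
          refine Finset.sum_congr rfl fun p _ => Finset.sum_congr rfl fun q _ => ?_
          rw [smul_mul_assoc, mul_smul_comm, smul_smul, mul_comm (ε q.1)]
      _ = ∑ p ∈ dec a, (∑ q ∈ dec b, ε q.1 • S q.2) * (ε p.1 • S p.2) := by
          exact Finset.sum_congr rfl fun p _ => (Finset.sum_mul _ _ _).symm
      _ = (∑ q ∈ dec b, ε q.1 • S q.2) * ∑ p ∈ dec a, (ε p.1 • S p.2) :=
          (Finset.mul_sum _ _ _).symm
      _ = S b * S a := by rw [hsb, hsa]
  calc S (a * b)
      = ∑ p ∈ dec a, ∑ u ∈ dec p.2, ∑ q ∈ dec b, ∑ v ∈ dec q.2,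
          S (p.1 * q.1) * (u.1 * (v.1 * S v.2) * S u.2) := h2
    _ = ∑ q ∈ dec b, ∑ v ∈ dec q.2, ∑ p ∈ dec a, ∑ u ∈ dec p.2,
          S (p.1 * q.1) * (u.1 * (v.1 * S v.2) * S u.2) := sum_blocks_comm _ _ _ _ _
    _ = ∑ q ∈ dec b, ∑ v ∈ dec q.2, ∑ p ∈ dec a, ∑ u ∈ dec p.1,
          S (u.1 * q.1) * (u.2 * (v.1 * S v.2) * S p.2) := h3.symm
    _ = ∑ p ∈ dec a, ∑ u ∈ dec p.1, ∑ q ∈ dec b, ∑ v ∈ dec q.2,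
          S (u.1 * q.1) * (u.2 * (v.1 * S v.2) * S p.2) := (sum_blocks_comm _ _ _ _ _).symm
    _ = ∑ p ∈ dec a, ∑ u ∈ dec p.1, ∑ q ∈ dec b, ∑ v ∈ dec q.1,
          S (u.1 * v.1) * (u.2 * (v.2 * S q.2) * S p.2) := h4.symm
    _ = ∑ p ∈ dec a, ∑ q ∈ dec b, (ε p.1 * ε q.1) • (S q.2 * S p.2) := h5
    _ = S b * S a := h6


section Psi

variable {M : ℕ} (ψ : Fin M → Fin M → H) (Sinv : H →ₗ[ℂ] H)

lemma known1 (hΔψ : ∀ i j, Coalgebra.comul (R := ℂ) (ψ i j) = ∑ k, ψ i k ⊗ₜ[ℂ] ψ k j)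
    (hεψ : ∀ i j, Coalgebra.counit (R := ℂ) (ψ i j) = if i = j then 1 else 0) (i j : Fin M) :
    ∑ k, S (ψ i k) * ψ k j = if i = j then (1 : H) else 0 := by
  have h := antipode_mul_sum (x := ψ i j) (s := Finset.univ)
    (x1 := ψ i) (x2 := (ψ · j)) (hΔψ i j)
  rw [h, hεψ]
  by_cases hij : i = j <;> simp [hij]

lemma known2 (hΔψ : ∀ i j, Coalgebra.comul (R := ℂ) (ψ i j) = ∑ k, ψ i k ⊗ₜ[ℂ] ψ k j)
    (hεψ : ∀ i j, Coalgebra.counit (R := ℂ) (ψ i j) = if i = j then 1 else 0) (i j : Fin M) :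
    ∑ k, ψ i k * S (ψ k j) = if i = j then (1 : H) else 0 := by
  have h := mul_antipode_sum (x := ψ i j) (s := Finset.univ)
    (x1 := ψ i) (x2 := (ψ · j)) (hΔψ i j)
  rw [h, hεψ]
  by_cases hij : i = j <;> simp [hij]

lemma S_inj (hSinv : ∀ h : H, Sinv (HopfAlgebra.antipode (R := ℂ) h) = h ∧
      HopfAlgebra.antipode (R := ℂ) (Sinv h) = h) :
    Function.Injective (HopfAlgebra.antipode (R := ℂ) (A := H)) := by
  intro x y hxy
  rw [← (hSinv x).1, hxy, (hSinv y).1]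

variable (hΔψ : ∀ i j, Coalgebra.comul (R := ℂ) (ψ i j) = ∑ k, ψ i k ⊗ₜ[ℂ] ψ k j)
    (hεψ : ∀ i j, Coalgebra.counit (R := ℂ) (ψ i j) = if i = j then 1 else 0)
    (hSinv : ∀ h : H, Sinv (HopfAlgebra.antipode (R := ℂ) h) = h ∧
      HopfAlgebra.antipode (R := ℂ) (Sinv h) = h)

include hΔψ hεψ hSinv in
lemma T1 (i j : Fin M) :
    ∑ k, Sinv (ψ k j) * ψ i k = if i = j then (1 : H) else 0 := by
  apply S_inj Sinv hSinv
  rw [map_sum]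
  calc ∑ k, S (Sinv (ψ k j) * ψ i k)
      = ∑ k, S (ψ i k) * ψ k j := by
        refine Finset.sum_congr rfl fun k _ => ?_
        rw [antipode_mul', (hSinv (ψ k j)).2]
    _ = if i = j then (1:H) else 0 := known1 ψ hΔψ hεψ i j
    _ = S (if i = j then (1:H) else 0) := by
        by_cases hij : i = j <;> simp [hij, antipode_one']

include hΔψ hεψ hSinv in
lemma T2 (i j : Fin M) :
    ∑ k, ψ k j * Sinv (ψ i k) = if i = j then (1 : H) else 0 := by
  apply S_inj Sinv hSinv
  rw [map_sum]
  calc ∑ k, S (ψ k j * Sinv (ψ i k))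
      = ∑ k, ψ i k * S (ψ k j) := by
        refine Finset.sum_congr rfl fun k _ => ?_
        rw [antipode_mul', (hSinv (ψ i k)).2]
    _ = if i = j then (1:H) else 0 := known2 ψ hΔψ hεψ i j
    _ = S (if i = j then (1:H) else 0) := by
        by_cases hij : i = j <;> simp [hij, antipode_one']

lemma sum_comm3 {α β γ N : Type*} [AddCommMonoid N] [Fintype α] [Fintype β] [Fintype γ]
    (f : α → β → γ → N) : ∑ k, ∑ t, ∑ j, f k t j = ∑ j, ∑ t, ∑ k, f k t j := by
  calc ∑ k, ∑ t, ∑ j, f k t j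
      = ∑ k, ∑ j, ∑ t, f k t j := Finset.sum_congr rfl fun k _ => Finset.sum_comm
    _ = ∑ j, ∑ k, ∑ t, f k t j := Finset.sum_comm
    _ = ∑ j, ∑ t, ∑ k, f k t j := Finset.sum_congr rfl fun j _ => Finset.sum_comm

lemma sum_comm3' {α β γ N : Type*} [AddCommMonoid N] [Fintype α] [Fintype β] [Fintype γ]
    (f : α → β → γ → N) : ∑ k, ∑ t, ∑ j, f k t j = ∑ t, ∑ j, ∑ k, f k t j := by
  calc ∑ k, ∑ t, ∑ j, f k t j
      = ∑ t, ∑ k, ∑ j, f k t j := Finset.sum_comm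
    _ = ∑ t, ∑ j, ∑ k, f k t j := Finset.sum_congr rfl fun t _ => Finset.sum_comm

lemma sum_comm_dep {σ τ γ : Type*} {N : Type*} [AddCommMonoid N] [Fintype γ]
    (s : Finset σ) (w : σ → Finset τ) (f : σ → τ → γ → N) :
    ∑ t ∈ s, ∑ q ∈ w t, ∑ k, f t q k = ∑ k, ∑ t ∈ s, ∑ q ∈ w t, f t q k := by
  calc ∑ t ∈ s, ∑ q ∈ w t, ∑ k, f t q k
      = ∑ t ∈ s, ∑ k, ∑ q ∈ w t, f t q k :=
        Finset.sum_congr rfl fun t _ => Finset.sum_comm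
    _ = ∑ k, ∑ t ∈ s, ∑ q ∈ w t, f t q k := Finset.sum_comm

lemma matinv_cancel
    (hT2 : ∀ i j, ∑ k, ψ k j * Sinv (ψ i k) = if i = j then (1:H) else 0)
    (F G : Fin M → H) (h : ∀ m, ∑ k, F k * ψ m k = ∑ k, G k * ψ m k) (n : Fin M) :
    F n = G n := by
  have e : ∀ F : Fin M → H, F n = ∑ m, (∑ k, F k * ψ m k) * Sinv (ψ n m) := by
    intro F
    calc F n = ∑ k, F k * (if n = k then (1:H) else 0) := by
          simp [mul_ite, Finset.sum_ite_eq]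
      _ = ∑ k, F k * (∑ m, ψ m k * Sinv (ψ n m)) := by
          refine Finset.sum_congr rfl fun k _ => ?_
          rw [hT2 n k]
      _ = ∑ k, ∑ m, F k * ψ m k * Sinv (ψ n m) := by
          refine Finset.sum_congr rfl fun k _ => ?_
          rw [Finset.mul_sum]
          exact Finset.sum_congr rfl fun m _ => by rw [mul_assoc]
      _ = ∑ m, (∑ k, F k * ψ m k) * Sinv (ψ n m) := by
          rw [Finset.sum_comm]
          exact Finset.sum_congr rfl fun m _ => (Finset.sum_mul _ _ _).symm
  rw [e F, e G]
  exact Finset.sum_congr rfl fun m _ => by rw [h m]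

include hΔψ hεψ hSinv in
lemma key (r : H →ₗ[ℂ] H →ₗ[ℂ] ℂ)
    (hr1 : ∀ (a b : H) (ι κ : Type) (_ : Fintype ι) (_ : Fintype κ)
      (a1 a2 : ι → H) (b1 b2 : κ → H),
      Coalgebra.comul (R := ℂ) a = ∑ t, a1 t ⊗ₜ[ℂ] a2 t →
      Coalgebra.comul (R := ℂ) b = ∑ s, b1 s ⊗ₜ[ℂ] b2 s →
      ∑ t, ∑ s, r (a1 t) (b1 s) • (a2 t * b2 s)
        = ∑ t, ∑ s, r (a2 t) (b2 s) • (b1 s * a1 t))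
    (c : H) {σ : Type} [Fintype σ] (c1 c2 : σ → H)
    (hc : Coalgebra.comul (R := ℂ) c = ∑ t, c1 t ⊗ₜ[ℂ] c2 t) (i k : Fin M) :
    ∑ t, ∑ j, r (ψ j i) (c1 t) • (c2 t * Sinv (ψ k j))
      = ∑ t, ∑ j, r (ψ k j) (c2 t) • (Sinv (ψ j i) * c1 t) := by
  have hT1 := T1 ψ Sinv hΔψ hεψ hSinv
  have hT2 := T2 ψ Sinv hΔψ hεψ hSinv
  have star : ∀ j m : Fin M,
      ∑ t, ∑ l, r (ψ j l) (c1 t) • (ψ l m * c2 t)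
        = ∑ t, ∑ l, r (ψ l m) (c2 t) • (c1 t * ψ j l) := by
    intro j m
    have h := hr1 (ψ j m) c (Fin M) σ inferInstance inferInstance
      (ψ j) (ψ · m) c1 c2 (hΔψ j m) hc
    calc ∑ t, ∑ l, r (ψ j l) (c1 t) • (ψ l m * c2 t)
        = ∑ l, ∑ t, r (ψ j l) (c1 t) • (ψ l m * c2 t) := Finset.sum_comm
      _ = ∑ l, ∑ t, r (ψ l m) (c2 t) • (c1 t * ψ j l) := h
      _ = ∑ t, ∑ l, r (ψ l m) (c2 t) • (c1 t * ψ j l) := Finset.sum_comm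
  apply matinv_cancel ψ Sinv hT2
    (fun k => ∑ t, ∑ j, r (ψ j i) (c1 t) • (c2 t * Sinv (ψ k j)))
    (fun k => ∑ t, ∑ j, r (ψ k j) (c2 t) • (Sinv (ψ j i) * c1 t))
  intro m
  have hL : ∑ k, (∑ t, ∑ j, r (ψ j i) (c1 t) • (c2 t * Sinv (ψ k j))) * ψ m k
      = ∑ t, r (ψ m i) (c1 t) • c2 t := by
    calc ∑ k, (∑ t, ∑ j, r (ψ j i) (c1 t) • (c2 t * Sinv (ψ k j))) * ψ m k
        = ∑ k, ∑ t, ∑ j, r (ψ j i) (c1 t) • (c2 t * (Sinv (ψ k j) * ψ m k)) := by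
          refine Finset.sum_congr rfl fun k _ => ?_
          rw [Finset.sum_mul]
          refine Finset.sum_congr rfl fun t _ => ?_
          rw [Finset.sum_mul]
          refine Finset.sum_congr rfl fun j _ => ?_
          rw [smul_mul_assoc, mul_assoc]
      _ = ∑ t, ∑ j, ∑ k, r (ψ j i) (c1 t) • (c2 t * (Sinv (ψ k j) * ψ m k)) :=
          sum_comm3' _
      _ = ∑ t, ∑ j, r (ψ j i) (c1 t) • (c2 t * ∑ k, Sinv (ψ k j) * ψ m k) := by
          refine Finset.sum_congr rfl fun t _ => Finset.sum_congr rfl fun j _ => ?_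
          rw [Finset.mul_sum, Finset.smul_sum]
      _ = ∑ t, ∑ j, r (ψ j i) (c1 t) • (c2 t * if m = j then (1:H) else 0) := by
          refine Finset.sum_congr rfl fun t _ => Finset.sum_congr rfl fun j _ => ?_
          rw [hT1 m j]
      _ = ∑ t, r (ψ m i) (c1 t) • c2 t := by
          refine Finset.sum_congr rfl fun t _ => ?_
          simp [mul_ite, Finset.sum_ite_eq]
  have hR : ∑ k, (∑ t, ∑ j, r (ψ k j) (c2 t) • (Sinv (ψ j i) * c1 t)) * ψ m k
      = ∑ t, r (ψ m i) (c1 t) • c2 t := by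
    calc ∑ k, (∑ t, ∑ j, r (ψ k j) (c2 t) • (Sinv (ψ j i) * c1 t)) * ψ m k
        = ∑ k, ∑ t, ∑ j, Sinv (ψ j i) * (r (ψ k j) (c2 t) • (c1 t * ψ m k)) := by
          refine Finset.sum_congr rfl fun k _ => ?_
          rw [Finset.sum_mul]
          refine Finset.sum_congr rfl fun t _ => ?_
          rw [Finset.sum_mul]
          refine Finset.sum_congr rfl fun j _ => ?_
          rw [smul_mul_assoc, mul_assoc, mul_smul_comm]
      _ = ∑ j, ∑ t, ∑ k, Sinv (ψ j i) * (r (ψ k j) (c2 t) • (c1 t * ψ m k)) :=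
          sum_comm3 _
      _ = ∑ j, Sinv (ψ j i) * (∑ t, ∑ k, r (ψ k j) (c2 t) • (c1 t * ψ m k)) := by
          refine Finset.sum_congr rfl fun j _ => ?_
          rw [Finset.mul_sum]
          exact Finset.sum_congr rfl fun t _ => (Finset.mul_sum _ _ _).symm
      _ = ∑ j, Sinv (ψ j i) * (∑ t, ∑ l, r (ψ m l) (c1 t) • (ψ l j * c2 t)) := by
          refine Finset.sum_congr rfl fun j _ => ?_
          rw [← star m j]
      _ = ∑ j, ∑ t, ∑ l, r (ψ m l) (c1 t) • (Sinv (ψ j i) * ψ l j * c2 t) := by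
          refine Finset.sum_congr rfl fun j _ => ?_
          rw [Finset.mul_sum]
          refine Finset.sum_congr rfl fun t _ => ?_
          rw [Finset.mul_sum]
          refine Finset.sum_congr rfl fun l _ => ?_
          rw [mul_smul_comm, mul_assoc]
      _ = ∑ l, ∑ t, ∑ j, r (ψ m l) (c1 t) • (Sinv (ψ j i) * ψ l j * c2 t) :=
          sum_comm3 _
      _ = ∑ l, ∑ t, r (ψ m l) (c1 t) • ((if l = i then (1:H) else 0) * c2 t) := by
          refine Finset.sum_congr rfl fun l _ => Finset.sum_congr rfl fun t _ => ?_
          rw [← hT1 l i, Finset.sum_mul, Finset.smul_sum]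
      _ = ∑ t, r (ψ m i) (c1 t) • c2 t := by
          rw [Finset.sum_comm]
          refine Finset.sum_congr rfl fun t _ => ?_
          simp [ite_mul, smul_ite, Finset.sum_ite_eq']
  rw [hL, hR]

end Psi


section CX

lemma lTensor_inj_of_retract {A B : Type*} [AddCommGroup A] [AddCommGroup B]
    [Module ℂ A] [Module ℂ B] (f : A →ₗ[ℂ] B) (g : B →ₗ[ℂ] A)
    (hg : g.comp f = LinearMap.id) (N : Type) [AddCommGroup N] [Module ℂ N] :
    Function.Injective (f.lTensor N) := by
  have h : ∀ u : N ⊗[ℂ] A, (g.lTensor N) ((f.lTensor N) u) = u := by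
    intro u
    rw [← LinearMap.comp_apply, ← LinearMap.lTensor_comp, hg, LinearMap.lTensor_id,
      LinearMap.id_apply]
  intro u v huv
  rw [← h u, ← h v, huv]

variable (X : Subalgebra ℂ H)

lemma valInv_exists : ∃ g : H →ₗ[ℂ] X, g.comp X.val.toLinearMap = LinearMap.id :=
  X.val.toLinearMap.exists_leftInverse_of_injective
    (LinearMap.ker_eq_bot.mpr Subtype.coe_injective)

lemma val_lTensor_inj : Function.Injective (X.val.toLinearMap.lTensor H) := by
  obtain ⟨g, hg⟩ := valInv_exists X
  exact lTensor_inj_of_retract _ g hg H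

lemma val_lTensor_lTensor_inj :
    Function.Injective ((X.val.toLinearMap.lTensor H).lTensor H) := by
  obtain ⟨g, hg⟩ := valInv_exists X
  refine lTensor_inj_of_retract _ ((g.lTensor H)) ?_ H
  rw [← LinearMap.lTensor_comp, hg, LinearMap.lTensor_id]

variable (comulX : X →ₗ[ℂ] H ⊗[ℂ] X)

/-- chosen finite decomposition of `comulX x` -/
noncomputable def decX (x : X) : Finset (H × X) :=
  (TensorProduct.exists_finset (R := ℂ) (comulX x)).choose

lemma decX_spec (x : X) : comulX x = ∑ p ∈ decX X comulX x, p.1 ⊗ₜ[ℂ] p.2 :=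
  (TensorProduct.exists_finset (R := ℂ) (comulX x)).choose_spec

variable (hcomulX : ∀ a : X,
    (TensorProduct.map (LinearMap.id) X.val.toLinearMap) (comulX a)
      = Coalgebra.comul (R := ℂ) (a : H))

include hcomulX in
lemma hcomulX' : ∀ a : X, (X.val.toLinearMap.lTensor H) (comulX a)
    = Coalgebra.comul (R := ℂ) (a : H) := hcomulX

include hcomulX in
lemma comul_val {σ : Type*} {x : X} {s : Finset σ} {x1 : σ → H} {x2 : σ → X}
    (hx : comulX x = ∑ t ∈ s, x1 t ⊗ₜ[ℂ] x2 t) :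
    Coalgebra.comul (R := ℂ) (x : H) = ∑ t ∈ s, x1 t ⊗ₜ[ℂ] (x2 t : H) := by
  rw [← hcomulX' X comulX hcomulX x, hx, map_sum]
  exact Finset.sum_congr rfl fun t _ => by
    simp [LinearMap.lTensor_tmul]

include hcomulX in
lemma comulX_mul (a b : X) :
    comulX (a * b) = ∑ p ∈ decX X comulX a, ∑ q ∈ decX X comulX b,
      (p.1 * q.1) ⊗ₜ[ℂ] (p.2 * q.2) := by
  apply val_lTensor_inj X
  rw [hcomulX' X comulX hcomulX (a * b)]
  push_cast
  rw [Bialgebra.comul_mul,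
    ← hcomulX' X comulX hcomulX a, ← hcomulX' X comulX hcomulX b,
    decX_spec X comulX a, decX_spec X comulX b, map_sum, map_sum, map_sum]
  simp only [LinearMap.lTensor_tmul, map_sum]
  rw [Finset.sum_mul_sum]
  refine Finset.sum_congr rfl fun p _ => Finset.sum_congr rfl fun q _ => by
    simp [Algebra.TensorProduct.tmul_mul_tmul]

include hcomulX in
lemma coassocX {σ : Type*} {x : X} {s : Finset σ} {x1 : σ → H} {x2 : σ → X}
    (hx : comulX x = ∑ t ∈ s, x1 t ⊗ₜ[ℂ] x2 t) :
    ∑ t ∈ s, ∑ p ∈ dec (x1 t), p.1 ⊗ₜ[ℂ] (p.2 ⊗ₜ[ℂ] x2 t)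
      = ∑ t ∈ s, ∑ q ∈ decX X comulX (x2 t), x1 t ⊗ₜ[ℂ] (q.1 ⊗ₜ[ℂ] q.2) := by
  apply val_lTensor_lTensor_inj X
  have hH := coassoc3 (x := (x : H)) (s := s) (x1 := x1) (x2 := fun t => (x2 t : H))
    (comul_val X comulX hcomulX hx)
  simp only [map_sum, LinearMap.lTensor_tmul]
  calc ∑ t ∈ s, ∑ p ∈ dec (x1 t), p.1 ⊗ₜ[ℂ] (p.2 ⊗ₜ[ℂ] ((x2 t) : H))
      = ∑ t ∈ s, ∑ p ∈ dec ((x2 t) : H), x1 t ⊗ₜ[ℂ] (p.1 ⊗ₜ[ℂ] p.2) := hH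
    _ = ∑ t ∈ s, x1 t ⊗ₜ[ℂ] Coalgebra.comul (R := ℂ) ((x2 t) : H) := by
        refine Finset.sum_congr rfl fun t _ => ?_
        rw [dec_spec ((x2 t) : H), TensorProduct.tmul_sum]
    _ = ∑ t ∈ s, ∑ q ∈ decX X comulX (x2 t), x1 t ⊗ₜ[ℂ] (q.1 ⊗ₜ[ℂ] ((q.2 : H))) := by
        refine Finset.sum_congr rfl fun t _ => ?_
        rw [comul_val X comulX hcomulX (decX_spec X comulX (x2 t)), TensorProduct.tmul_sum]

end CX

section Gamma

variable {M : ℕ} (X : Subalgebra ℂ H)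

/-- scalar action of `X` on `Fin M → X` as a ℂ-bilinear map -/
noncomputable def smulLin : X →ₗ[ℂ] (Fin M → X) →ₗ[ℂ] (Fin M → X) :=
  LinearMap.mk₂ ℂ (· • ·)
    (fun c c' v => add_smul c c' v)
    (fun a c v => smul_assoc a c v)
    (fun c u v => smul_add c u v)
    (fun _ _ _ => smul_comm _ _ _)

@[simp] lemma smulLin_apply (c : X) (v : Fin M → X) : smulLin (M := M) X c v = c • v := rfl

/-- the action of `H ⊗ X` on `H ⊗ Γ` -/
noncomputable def act : (H ⊗[ℂ] X) →ₗ[ℂ]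
    (H ⊗[ℂ] (Fin M → X)) →ₗ[ℂ] (H ⊗[ℂ] (Fin M → X)) :=
  TensorProduct.lift
    (((TensorProduct.mapBilinear (RingHom.id ℂ) H (Fin M → X) H (Fin M → X)).comp
      (LinearMap.mul ℂ H)).compl₂ (smulLin X))

@[simp] lemma act_tmul (x : H) (ξ : X) (h : H) (v : Fin M → X) :
    act (M := M) X (x ⊗ₜ[ℂ] ξ) (h ⊗ₜ[ℂ] v) = (x * h) ⊗ₜ[ℂ] (ξ • v) := by
  simp [act, TensorProduct.mapBilinear_apply, LinearMap.mul_apply']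

/-- `x ⊗ (y ⊗ z) ↦ f x • ((y * w) ⊗ g z)` -/
noncomputable def Lmap (w : H) (f : H →ₗ[ℂ] ℂ) (g : X →ₗ[ℂ] (Fin M → X)) :
    H ⊗[ℂ] (H ⊗[ℂ] X) →ₗ[ℂ] H ⊗[ℂ] (Fin M → X) :=
  (TensorProduct.lid ℂ _).toLinearMap ∘ₗ
    TensorProduct.map f (TensorProduct.map (LinearMap.mulRight ℂ w) g)

lemma Lmap_tmul (w : H) (f : H →ₗ[ℂ] ℂ) (g : X →ₗ[ℂ] (Fin M → X)) (x y : H) (z : X) :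
    Lmap X w f g (x ⊗ₜ[ℂ] (y ⊗ₜ[ℂ] z)) = f x • ((y * w) ⊗ₜ[ℂ] g z) := by
  simp [Lmap]

/-- `x ⊗ (y ⊗ z) ↦ f y • ((w * x) ⊗ g z)` -/
noncomputable def Rmap (w : H) (f : H →ₗ[ℂ] ℂ) (g : X →ₗ[ℂ] (Fin M → X)) :
    H ⊗[ℂ] (H ⊗[ℂ] X) →ₗ[ℂ] H ⊗[ℂ] (Fin M → X) :=
  (LinearMap.lTensor H (TensorProduct.lid ℂ _).toLinearMap) ∘ₗ
    TensorProduct.map (LinearMap.mulLeft ℂ w) (TensorProduct.map f g)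

lemma Rmap_tmul (w : H) (f : H →ₗ[ℂ] ℂ) (g : X →ₗ[ℂ] (Fin M → X)) (x y : H) (z : X) :
    Rmap X w f g (x ⊗ₜ[ℂ] (y ⊗ₜ[ℂ] z)) = f y • ((w * x) ⊗ₜ[ℂ] g z) := by
  simp [Rmap, TensorProduct.tmul_smul]

end Gamma

end Stmt18Aux


open Stmt18Aux

set_option maxHeartbeats 4000000

/-- Jurčo-style construction, covariance and invariance: with
`Δ_Γ(a γ_i) = a₍₁₎ S⁻¹(ψ^j_i) ⊗ a₍₂₎ γ_j` one has
`Δ_Γ(γ_i · a) = S⁻¹(ψ^j_i) a₍₁₎ ⊗ γ_j · a₍₂₎`, the element `ω = Σ_i b^i γ_i` is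
invariant, and `d a := ω a − a ω` defines a covariant first order differential
calculus on `X`. -/
theorem stmt18
    {H : Type} [Ring H] [HopfAlgebra ℂ H]
    (r : H →ₗ[ℂ] H →ₗ[ℂ] ℂ)
    (hr1 : ∀ (a b : H) (ι κ : Type) (_ : Fintype ι) (_ : Fintype κ)
      (a1 a2 : ι → H) (b1 b2 : κ → H),
      Coalgebra.comul (R := ℂ) a = ∑ t, a1 t ⊗ₜ[ℂ] a2 t →
      Coalgebra.comul (R := ℂ) b = ∑ s, b1 s ⊗ₜ[ℂ] b2 s →
      ∑ t, ∑ s, r (a1 t) (b1 s) • (a2 t * b2 s)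
        = ∑ t, ∑ s, r (a2 t) (b2 s) • (b1 s * a1 t))
    (hr2 : ∀ (a b c : H) (κ : Type) (_ : Fintype κ) (c1 c2 : κ → H),
      Coalgebra.comul (R := ℂ) c = ∑ s, c1 s ⊗ₜ[ℂ] c2 s →
      r (a * b) c = ∑ s, r a (c1 s) * r b (c2 s))
    (hr2' : ∀ c : H, r 1 c = Coalgebra.counit (R := ℂ) c)
    (hr3 : ∀ (a b c : H) (ι : Type) (_ : Fintype ι) (a1 a2 : ι → H),
      Coalgebra.comul (R := ℂ) a = ∑ t, a1 t ⊗ₜ[ℂ] a2 t →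
      r a (b * c) = ∑ t, r (a1 t) c * r (a2 t) b)
    (hr3' : ∀ a : H, r a 1 = Coalgebra.counit (R := ℂ) a)
    (X : Subalgebra ℂ H)
    (comulX : X →ₗ[ℂ] H ⊗[ℂ] X)
    (hcomulX : ∀ a : X,
      (TensorProduct.map (LinearMap.id) X.val.toLinearMap) (comulX a)
        = Coalgebra.comul (R := ℂ) (a : H))
    {M : ℕ} (bb : Fin M → X) (ψ : Fin M → Fin M → H)
    (hψ : ∀ i, comulX (bb i) = ∑ j, ψ i j ⊗ₜ[ℂ] bb j)
    (hΔψ : ∀ i j, Coalgebra.comul (R := ℂ) (ψ i j) = ∑ k, ψ i k ⊗ₜ[ℂ] ψ k j)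
    (hεψ : ∀ i j, Coalgebra.counit (R := ℂ) (ψ i j) = if i = j then 1 else 0)
    (ν : X →ₐ[ℂ] X)
    (hν : ∀ a : X, comulX (ν a) = (TensorProduct.map LinearMap.id ν.toLinearMap) (comulX a))
    -- the inverse of the antipode
    (Sinv : H →ₗ[ℂ] H)
    (hSinv : ∀ h : H, Sinv (HopfAlgebra.antipode (R := ℂ) h) = h ∧
      HopfAlgebra.antipode (R := ℂ) (Sinv h) = h)
    -- the right action on the free left module Γ = (Fin M → X) with basis γ_i
    (rAct : (Fin M → X) → X → (Fin M → X))
    (hrActAdd : ∀ (x y : Fin M → X) (a : X), rAct (x + y) a = rAct x a + rAct y a)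
    (hrActSmul : ∀ (c : X) (x : Fin M → X) (a : X), rAct (c • x) a = c • rAct x a)
    (hrAct : ∀ (a : X) (i : Fin M) (ι : Type) (_ : Fintype ι)
      (a1 : ι → H) (a2 : ι → X),
      comulX a = ∑ t, a1 t ⊗ₜ[ℂ] a2 t →
      rAct (Pi.single i 1) a
        = ∑ j, Pi.single j (∑ t, r (ψ j i) (a1 t) • ν (a2 t)))
    -- the quantum group operation Δ_Γ
    (ΔΓ : (Fin M → X) →ₗ[ℂ] H ⊗[ℂ] (Fin M → X))
    (hΔΓ : ∀ (a : X) (i : Fin M) (ι : Type) (_ : Fintype ι)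
      (a1 : ι → H) (a2 : ι → X),
      comulX a = ∑ t, a1 t ⊗ₜ[ℂ] a2 t →
      ΔΓ (Pi.single i a)
        = ∑ t, ∑ j, (a1 t * Sinv (ψ j i)) ⊗ₜ[ℂ] Pi.single j (a2 t))
    -- d a := ω a − a ω, with ω = Σ_i b^i γ_i
    (D : X → (Fin M → X))
    (hDdef : ∀ a : X, D a = rAct (fun i => bb i) a - a • (fun i => bb i)) :
    -- (i) Δ_Γ(γ_i · a) = S⁻¹(ψ^j_i) a₍₁₎ ⊗ γ_j · a₍₂₎
    (∀ (a : X) (i : Fin M) (ι : Type) (_ : Fintype ι) (a1 : ι → H) (a2 : ι → X),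
      comulX a = ∑ t, a1 t ⊗ₜ[ℂ] a2 t →
      ΔΓ (rAct (Pi.single i 1) a)
        = ∑ t, ∑ j, (Sinv (ψ j i) * a1 t) ⊗ₜ[ℂ] rAct (Pi.single j 1) (a2 t)) ∧
    -- (ii) ω is invariant
    (ΔΓ (fun i => bb i) = (1 : H) ⊗ₜ[ℂ] (fun i => bb i)) ∧
    -- (iii) Leibniz rule for d
    (∀ a b : X, D (a * b) = a • D b + rAct (D a) b) ∧
    -- (iv) covariance of the calculus
    (∀ (a b : X) (ι κ : Type) (_ : Fintype ι) (_ : Fintype κ)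
      (a1 : ι → H) (a2 : ι → X) (b1 : κ → H) (b2 : κ → X),
      comulX a = ∑ t, a1 t ⊗ₜ[ℂ] a2 t →
      comulX b = ∑ s, b1 s ⊗ₜ[ℂ] b2 s →
      ΔΓ (a • D b) = ∑ t, ∑ s, (a1 t * b1 s) ⊗ₜ[ℂ] (a2 t • D (b2 s))) := by
  classical
  have hT1 := T1 ψ Sinv hΔψ hεψ hSinv
  have hT2 := T2 ψ Sinv hΔψ hεψ hSinv
  -- basic facts about Pi.single and the X-action on Γ
  have single_smul : ∀ (c x : X) (i : Fin M),
      c • (Pi.single i x : Fin M → X) = Pi.single i (c * x) := by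
    intro c x i
    funext j
    by_cases h : j = i <;> simp [Pi.single_apply, h]
  have rAct_zero : ∀ a : X, rAct 0 a = 0 := by
    intro a
    have h := hrActAdd 0 0 a
    rw [add_zero] at h
    exact (left_eq_add.mp h)
  have rAct_sum : ∀ {σ : Type} (s : Finset σ) (f : σ → (Fin M → X)) (a : X),
      rAct (∑ i ∈ s, f i) a = ∑ i ∈ s, rAct (f i) a := by
    intro σ s f a
    induction s using Finset.cons_induction with
    | empty => simpa using rAct_zero a
    | cons i s hi ih => rw [Finset.sum_cons, hrActAdd, ih, Finset.sum_cons]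
  have rAct_sub : ∀ (x y : Fin M → X) (a : X), rAct (x - y) a = rAct x a - rAct y a := by
    intro x y a
    have h := hrActAdd (x - y) y a
    rw [sub_add_cancel] at h
    exact eq_sub_of_add_eq h.symm
  -- ω
  have hω_sum : (fun i => bb i) = ∑ i, Pi.single i (bb i) := (Finset.univ_sum_single _).symm
  -- decompositions with subtype index
  have hdecX : ∀ x : X, comulX x
      = ∑ p : {p // p ∈ decX X comulX x}, (p : H × X).1 ⊗ₜ[ℂ] (p : H × X).2 := by
    intro x
    rw [decX_spec X comulX x]
    exact (Finset.sum_coe_sort (decX X comulX x)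
      (fun p => p.1 ⊗ₜ[ℂ] p.2)).symm
  have hRA : ∀ (a : X) (i : Fin M), rAct (Pi.single i 1) a
      = ∑ j, Pi.single j (∑ q ∈ decX X comulX a, r (ψ j i) q.1 • ν q.2) := by
    intro a i
    rw [hrAct a i {p // p ∈ decX X comulX a} inferInstance _ _ (hdecX a)]
    refine Finset.sum_congr rfl fun j _ => ?_
    exact congrArg (Pi.single j)
      (Finset.sum_coe_sort (decX X comulX a) (fun q => r (ψ j i) q.1 • ν q.2))
  have hDG : ∀ (x : X) (i : Fin M), ΔΓ (Pi.single i x)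
      = ∑ q ∈ decX X comulX x, ∑ j, (q.1 * Sinv (ψ j i)) ⊗ₜ[ℂ] Pi.single j q.2 := by
    intro x i
    rw [hΔΓ x i {p // p ∈ decX X comulX x} inferInstance _ _ (hdecX x)]
    exact Finset.sum_coe_sort (decX X comulX x)
      (fun q => ∑ j, (q.1 * Sinv (ψ j i)) ⊗ₜ[ℂ] Pi.single j q.2)
  have hν' : ∀ x : X, comulX (ν x) = ∑ q ∈ decX X comulX x, q.1 ⊗ₜ[ℂ] (ν q.2) := by
    intro x
    rw [hν x, decX_spec X comulX x, map_sum]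
    rfl
  -- part (ii)
  have part2 : ΔΓ (fun i => bb i) = (1 : H) ⊗ₜ[ℂ] (fun i => bb i) := by
    calc ΔΓ (fun i => bb i) = ∑ i, ΔΓ (Pi.single i (bb i)) := by
          rw [hω_sum, map_sum]
      _ = ∑ i, ∑ j, ∑ k, (ψ i j * Sinv (ψ k i)) ⊗ₜ[ℂ] Pi.single k (bb j) := by
          exact Finset.sum_congr rfl fun i _ =>
            hΔΓ (bb i) i (Fin M) inferInstance (ψ i) bb (hψ i)
      _ = ∑ j, ∑ k, (∑ i, ψ i j * Sinv (ψ k i)) ⊗ₜ[ℂ] Pi.single k (bb j) := by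
          rw [sum_comm3' (fun i j k => (ψ i j * Sinv (ψ k i)) ⊗ₜ[ℂ] Pi.single k (bb j))]
          exact Finset.sum_congr rfl fun j _ => Finset.sum_congr rfl fun k _ =>
            (TensorProduct.sum_tmul _ _ _).symm
      _ = ∑ j, ∑ k, ((if k = j then (1:H) else 0)) ⊗ₜ[ℂ] Pi.single k (bb j) := by
          exact Finset.sum_congr rfl fun j _ => Finset.sum_congr rfl fun k _ => by
            rw [hT2 k j]
      _ = ∑ j, (1 : H) ⊗ₜ[ℂ] Pi.single j (bb j) := by
          refine Finset.sum_congr rfl fun j _ => ?_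
          rw [Finset.sum_congr rfl fun k _ => TensorProduct.ite_tmul _ _ _]
          simp [Finset.sum_ite_eq']
      _ = (1 : H) ⊗ₜ[ℂ] (fun i => bb i) := by
          rw [← TensorProduct.tmul_sum, ← hω_sum]

  -- part (i)
  have part1 : ∀ (a : X) (i : Fin M) (ι : Type) (_ : Fintype ι) (a1 : ι → H) (a2 : ι → X),
      comulX a = ∑ t, a1 t ⊗ₜ[ℂ] a2 t →
      ΔΓ (rAct (Pi.single i 1) a)
        = ∑ t, ∑ j, (Sinv (ψ j i) * a1 t) ⊗ₜ[ℂ] rAct (Pi.single j 1) (a2 t) := by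
    intro a i ι instι a1 a2 hdec
    -- coassociativity identity
    have hTT := coassocX X comulX hcomulX (s := Finset.univ) hdec
    -- step (3) : decomposition of comulX (xa j)
    have hxa : ∀ j : Fin M, comulX (∑ t, r (ψ j i) (a1 t) • ν (a2 t))
        = ∑ z : (Σ t : ι, {q // q ∈ decX X comulX (a2 t)}),
            (r (ψ j i) (a1 z.1) • (z.2 : H × X).1) ⊗ₜ[ℂ] ν (z.2 : H × X).2 := by
      intro j
      rw [map_sum]
      calc ∑ t, comulX (r (ψ j i) (a1 t) • ν (a2 t))
          = ∑ t, ∑ q ∈ decX X comulX (a2 t),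
              (r (ψ j i) (a1 t) • q.1) ⊗ₜ[ℂ] ν q.2 := by
            refine Finset.sum_congr rfl fun t _ => ?_
            rw [map_smul, hν' (a2 t), Finset.smul_sum]
            exact Finset.sum_congr rfl fun q _ => by
              rw [TensorProduct.smul_tmul']
        _ = ∑ t, ∑ q : {q // q ∈ decX X comulX (a2 t)},
              (r (ψ j i) (a1 t) • (q : H × X).1) ⊗ₜ[ℂ] ν (q : H × X).2 := by
            exact Finset.sum_congr rfl fun t _ =>
              (Finset.sum_coe_sort (decX X comulX (a2 t))
                (fun (q : H × X) => (r (ψ j i) (a1 t) • q.1) ⊗ₜ[ℂ] ν q.2)).symm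
        _ = ∑ z : (Σ t : ι, {q // q ∈ decX X comulX (a2 t)}),
              (r (ψ j i) (a1 z.1) • (z.2 : H × X).1) ⊗ₜ[ℂ] ν (z.2 : H × X).2 := by
            rw [← Finset.univ_sigma_univ, Finset.sum_sigma]
    -- LHS expansion to canonical (j,k,t,q) order
    have hLHS : ΔΓ (rAct (Pi.single i 1) a)
        = ∑ j, ∑ k, (Lmap X (Sinv (ψ k j)) (r (ψ j i))
            ((LinearMap.single ℂ (fun _ => X) k) ∘ₗ ν.toLinearMap))
            (∑ t, ∑ q ∈ decX X comulX (a2 t), a1 t ⊗ₜ[ℂ] (q.1 ⊗ₜ[ℂ] (q.2 : X))) := by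
      rw [hrAct a i ι instι a1 a2 hdec, map_sum]
      refine Finset.sum_congr rfl fun j _ => ?_
      rw [hΔΓ _ j _ inferInstance _ _ (hxa j)]
      calc ∑ z : (Σ t : ι, {q // q ∈ decX X comulX (a2 t)}), ∑ k,
              ((r (ψ j i) (a1 z.1) • (z.2 : H × X).1) * Sinv (ψ k j))
                ⊗ₜ[ℂ] Pi.single k (ν (z.2 : H × X).2)
          = ∑ t, ∑ q ∈ decX X comulX (a2 t), ∑ k,
              r (ψ j i) (a1 t) • (((q.1 * Sinv (ψ k j)))
                ⊗ₜ[ℂ] (Pi.single k (ν q.2) : Fin M → X)) := by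
            rw [← Finset.univ_sigma_univ, Finset.sum_sigma]
            refine Finset.sum_congr rfl fun t _ => ?_
            rw [← Finset.sum_coe_sort (decX X comulX (a2 t))
              (fun (q : H × X) => ∑ k, r (ψ j i) (a1 t) •
                ((q.1 * Sinv (ψ k j)) ⊗ₜ[ℂ] (Pi.single k (ν q.2) : Fin M → X)))]
            refine Finset.sum_congr rfl fun q _ => Finset.sum_congr rfl fun k _ => ?_
            rw [smul_mul_assoc, TensorProduct.smul_tmul']
        _ = ∑ k, ∑ t, ∑ q ∈ decX X comulX (a2 t),
              r (ψ j i) (a1 t) • ((q.1 * Sinv (ψ k j))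
                ⊗ₜ[ℂ] (Pi.single k (ν q.2) : Fin M → X)) :=
            sum_comm_dep _ _ _
        _ = ∑ k, (Lmap X (Sinv (ψ k j)) (r (ψ j i))
              ((LinearMap.single ℂ (fun _ => X) k) ∘ₗ ν.toLinearMap))
              (∑ t, ∑ q ∈ decX X comulX (a2 t), a1 t ⊗ₜ[ℂ] (q.1 ⊗ₜ[ℂ] (q.2 : X))) := by
            refine Finset.sum_congr rfl fun k _ => ?_
            rw [map_sum]
            refine Finset.sum_congr rfl fun t _ => ?_
            rw [map_sum]
            refine Finset.sum_congr rfl fun q _ => ?_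
            rw [Lmap_tmul]
            simp [LinearMap.single_apply]
    -- RHS expansion to canonical (j,k,t,q) order
    have hRHS : (∑ t, ∑ j, (Sinv (ψ j i) * a1 t) ⊗ₜ[ℂ] rAct (Pi.single j 1) (a2 t))
        = ∑ j, ∑ k, (Rmap X (Sinv (ψ j i)) (r (ψ k j))
            ((LinearMap.single ℂ (fun _ => X) k) ∘ₗ ν.toLinearMap))
            (∑ t, ∑ q ∈ decX X comulX (a2 t), a1 t ⊗ₜ[ℂ] (q.1 ⊗ₜ[ℂ] (q.2 : X))) := by
      calc ∑ t, ∑ j, (Sinv (ψ j i) * a1 t) ⊗ₜ[ℂ] rAct (Pi.single j 1) (a2 t)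
          = ∑ t, ∑ j, ∑ k, ∑ q ∈ decX X comulX (a2 t),
              r (ψ k j) q.1 • ((Sinv (ψ j i) * a1 t)
                ⊗ₜ[ℂ] (Pi.single k (ν q.2) : Fin M → X)) := by
            refine Finset.sum_congr rfl fun t _ => Finset.sum_congr rfl fun j _ => ?_
            rw [hRA (a2 t) j, TensorProduct.tmul_sum]
            refine Finset.sum_congr rfl fun k _ => ?_
            have hsingle : (Pi.single k (∑ q ∈ decX X comulX (a2 t),
                r (ψ k j) q.1 • ν q.2) : Fin M → X)
                = ∑ q ∈ decX X comulX (a2 t),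
                    r (ψ k j) q.1 • (Pi.single k (ν q.2) : Fin M → X) := by
              rw [show (Pi.single k (∑ q ∈ decX X comulX (a2 t), r (ψ k j) q.1 • ν q.2)
                  : Fin M → X) = LinearMap.single ℂ (fun _ => X) k
                    (∑ q ∈ decX X comulX (a2 t), r (ψ k j) q.1 • ν q.2) from rfl,
                map_sum]
              exact Finset.sum_congr rfl fun q _ => by
                rw [map_smul, LinearMap.single_apply]
            rw [hsingle, TensorProduct.tmul_sum]
            exact Finset.sum_congr rfl fun q _ => TensorProduct.tmul_smul _ _ _
        _ = ∑ j, ∑ t, ∑ k, ∑ q ∈ decX X comulX (a2 t),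
              r (ψ k j) q.1 • ((Sinv (ψ j i) * a1 t)
                ⊗ₜ[ℂ] (Pi.single k (ν q.2) : Fin M → X)) := Finset.sum_comm
        _ = ∑ j, ∑ k, ∑ t, ∑ q ∈ decX X comulX (a2 t),
              r (ψ k j) q.1 • ((Sinv (ψ j i) * a1 t)
                ⊗ₜ[ℂ] (Pi.single k (ν q.2) : Fin M → X)) :=
            Finset.sum_congr rfl fun j _ => Finset.sum_comm
        _ = ∑ j, ∑ k, (Rmap X (Sinv (ψ j i)) (r (ψ k j))
              ((LinearMap.single ℂ (fun _ => X) k) ∘ₗ ν.toLinearMap))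
              (∑ t, ∑ q ∈ decX X comulX (a2 t), a1 t ⊗ₜ[ℂ] (q.1 ⊗ₜ[ℂ] (q.2 : X))) := by
            refine Finset.sum_congr rfl fun j _ => Finset.sum_congr rfl fun k _ => ?_
            rw [map_sum]
            refine Finset.sum_congr rfl fun t _ => ?_
            rw [map_sum]
            refine Finset.sum_congr rfl fun q _ => ?_
            rw [Rmap_tmul]
            simp [LinearMap.single_apply]
    -- the middle comparison via `key`, after transporting along coassociativity
    have keyapp : ∀ (t : ι) (k : Fin M),
        (∑ p ∈ dec (a1 t), ∑ j, r (ψ j i) p.1 •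
            ((p.2 * Sinv (ψ k j)) ⊗ₜ[ℂ] (Pi.single k (ν (a2 t)) : Fin M → X)))
          = ∑ p ∈ dec (a1 t), ∑ j, r (ψ k j) p.2 •
              ((Sinv (ψ j i) * p.1) ⊗ₜ[ℂ] (Pi.single k (ν (a2 t)) : Fin M → X)) := by
      intro t k
      have hc : Coalgebra.comul (R := ℂ) (a1 t)
          = ∑ p : {p // p ∈ dec (a1 t)}, (p : H × H).1 ⊗ₜ[ℂ] (p : H × H).2 := by
        rw [dec_spec (a1 t)]
        exact (Finset.sum_coe_sort (dec (a1 t)) (fun p => p.1 ⊗ₜ[ℂ] p.2)).symm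
      have hk := key ψ Sinv hΔψ hεψ hSinv r hr1 (a1 t)
        (σ := {p // p ∈ dec (a1 t)})
        (fun p => (p : H × H).1) (fun p => (p : H × H).2) hc i k
      have hk2 := congrArg
        ((TensorProduct.mk ℂ H (Fin M → X)).flip ((Pi.single k (ν (a2 t)) : Fin M → X))) hk
      simp only [map_sum, map_smul, LinearMap.flip_apply, TensorProduct.mk_apply] at hk2
      calc (∑ p ∈ dec (a1 t), ∑ j, r (ψ j i) p.1 •
            ((p.2 * Sinv (ψ k j)) ⊗ₜ[ℂ] (Pi.single k (ν (a2 t)) : Fin M → X)))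
          = ∑ p : {p // p ∈ dec (a1 t)}, ∑ j, r (ψ j i) (p : H × H).1 •
              (((p : H × H).2 * Sinv (ψ k j)) ⊗ₜ[ℂ]
                (Pi.single k (ν (a2 t)) : Fin M → X)) :=
            (Finset.sum_coe_sort (dec (a1 t)) (fun (p : H × H) => ∑ j, r (ψ j i) p.1 •
              ((p.2 * Sinv (ψ k j)) ⊗ₜ[ℂ] (Pi.single k (ν (a2 t)) : Fin M → X)))).symm
        _ = ∑ p : {p // p ∈ dec (a1 t)}, ∑ j, r (ψ k j) (p : H × H).2 •
              ((Sinv (ψ j i) * (p : H × H).1) ⊗ₜ[ℂ]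
                (Pi.single k (ν (a2 t)) : Fin M → X)) := hk2
        _ = ∑ p ∈ dec (a1 t), ∑ j, r (ψ k j) p.2 •
              ((Sinv (ψ j i) * p.1) ⊗ₜ[ℂ] (Pi.single k (ν (a2 t)) : Fin M → X)) :=
            Finset.sum_coe_sort (dec (a1 t)) (fun (p : H × H) => ∑ j, r (ψ k j) p.2 •
              ((Sinv (ψ j i) * p.1) ⊗ₜ[ℂ] (Pi.single k (ν (a2 t)) : Fin M → X)))
    rw [hLHS, hRHS, ← hTT]
    calc ∑ j, ∑ k, (Lmap X (Sinv (ψ k j)) (r (ψ j i))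
            ((LinearMap.single ℂ (fun _ => X) k) ∘ₗ ν.toLinearMap))
            (∑ t, ∑ p ∈ dec (a1 t), p.1 ⊗ₜ[ℂ] (p.2 ⊗ₜ[ℂ] a2 t))
        = ∑ k, ∑ j, (Lmap X (Sinv (ψ k j)) (r (ψ j i))
            ((LinearMap.single ℂ (fun _ => X) k) ∘ₗ ν.toLinearMap))
            (∑ t, ∑ p ∈ dec (a1 t), p.1 ⊗ₜ[ℂ] (p.2 ⊗ₜ[ℂ] a2 t)) := Finset.sum_comm
      _ = ∑ k, ∑ t, ∑ p ∈ dec (a1 t), ∑ j, r (ψ j i) p.1 •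
            ((p.2 * Sinv (ψ k j)) ⊗ₜ[ℂ] (Pi.single k (ν (a2 t)) : Fin M → X)) := by
          refine Finset.sum_congr rfl fun k _ => ?_
          calc ∑ j, (Lmap X (Sinv (ψ k j)) (r (ψ j i))
                ((LinearMap.single ℂ (fun _ => X) k) ∘ₗ ν.toLinearMap))
                (∑ t, ∑ p ∈ dec (a1 t), p.1 ⊗ₜ[ℂ] (p.2 ⊗ₜ[ℂ] a2 t))
              = ∑ j, ∑ t, ∑ p ∈ dec (a1 t), r (ψ j i) p.1 •
                  ((p.2 * Sinv (ψ k j)) ⊗ₜ[ℂ] (Pi.single k (ν (a2 t)) : Fin M → X)) := by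
                refine Finset.sum_congr rfl fun j _ => ?_
                rw [map_sum]
                refine Finset.sum_congr rfl fun t _ => ?_
                rw [map_sum]
                refine Finset.sum_congr rfl fun p _ => ?_
                rw [Lmap_tmul]
                simp [LinearMap.single_apply]
            _ = ∑ t, ∑ p ∈ dec (a1 t), ∑ j, r (ψ j i) p.1 •
                  ((p.2 * Sinv (ψ k j)) ⊗ₜ[ℂ] (Pi.single k (ν (a2 t)) : Fin M → X)) :=
                (sum_comm_dep _ _ _).symm
      _ = ∑ k, ∑ t, ∑ p ∈ dec (a1 t), ∑ j, r (ψ k j) p.2 •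
            ((Sinv (ψ j i) * p.1) ⊗ₜ[ℂ] (Pi.single k (ν (a2 t)) : Fin M → X)) :=
          Finset.sum_congr rfl fun k _ => Finset.sum_congr rfl fun t _ => keyapp t k
      _ = ∑ k, ∑ j, (Rmap X (Sinv (ψ j i)) (r (ψ k j))
            ((LinearMap.single ℂ (fun _ => X) k) ∘ₗ ν.toLinearMap))
            (∑ t, ∑ p ∈ dec (a1 t), p.1 ⊗ₜ[ℂ] (p.2 ⊗ₜ[ℂ] a2 t)) := by
          refine Finset.sum_congr rfl fun k _ => ?_
          calc ∑ t, ∑ p ∈ dec (a1 t), ∑ j, r (ψ k j) p.2 •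
                ((Sinv (ψ j i) * p.1) ⊗ₜ[ℂ] (Pi.single k (ν (a2 t)) : Fin M → X))
              = ∑ j, ∑ t, ∑ p ∈ dec (a1 t), r (ψ k j) p.2 •
                  ((Sinv (ψ j i) * p.1) ⊗ₜ[ℂ] (Pi.single k (ν (a2 t)) : Fin M → X)) :=
                sum_comm_dep _ _ _
            _ = ∑ j, (Rmap X (Sinv (ψ j i)) (r (ψ k j))
                  ((LinearMap.single ℂ (fun _ => X) k) ∘ₗ ν.toLinearMap))
                  (∑ t, ∑ p ∈ dec (a1 t), p.1 ⊗ₜ[ℂ] (p.2 ⊗ₜ[ℂ] a2 t)) := by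
                refine Finset.sum_congr rfl fun j _ => ?_
                rw [map_sum]
                refine Finset.sum_congr rfl fun t _ => ?_
                rw [map_sum]
                refine Finset.sum_congr rfl fun p _ => ?_
                rw [Rmap_tmul]
                simp [LinearMap.single_apply]
      _ = ∑ j, ∑ k, (Rmap X (Sinv (ψ j i)) (r (ψ k j))
            ((LinearMap.single ℂ (fun _ => X) k) ∘ₗ ν.toLinearMap))
            (∑ t, ∑ p ∈ dec (a1 t), p.1 ⊗ₜ[ℂ] (p.2 ⊗ₜ[ℂ] a2 t)) := Finset.sum_comm

  -- single of sums
  have single_sum : ∀ (k : Fin M) {σ : Type} (s : Finset σ) (f : σ → X),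
      (Pi.single k (∑ x ∈ s, f x) : Fin M → X)
        = ∑ x ∈ s, (Pi.single k (f x) : Fin M → X) := by
    intro k σ s f
    exact map_sum (LinearMap.single ℂ (fun _ => X) k) f s
  -- product decompositions
  have hab : ∀ c x : X, comulX (c * x)
      = ∑ z ∈ (decX X comulX c) ×ˢ (decX X comulX x),
          (z.1.1 * z.2.1) ⊗ₜ[ℂ] (z.1.2 * z.2.2) := by
    intro c x
    rw [comulX_mul X comulX hcomulX c x]
    exact (Finset.sum_product (s := decX X comulX c) (t := decX X comulX x)
      (f := fun z => (z.1.1 * z.2.1) ⊗ₜ[ℂ] (z.1.2 * z.2.2))).symm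
  have habs : ∀ c x : X, comulX (c * x)
      = ∑ z : {z // z ∈ (decX X comulX c) ×ˢ (decX X comulX x)},
          ((z : (H × X) × (H × X)).1.1 * (z : (H × X) × (H × X)).2.1)
            ⊗ₜ[ℂ] ((z : (H × X) × (H × X)).1.2 * (z : (H × X) × (H × X)).2.2) := by
    intro c x
    rw [hab c x]
    exact (Finset.sum_coe_sort ((decX X comulX c) ×ˢ (decX X comulX x))
      (fun (z : (H × X) × (H × X)) => (z.1.1 * z.2.1) ⊗ₜ[ℂ] (z.1.2 * z.2.2))).symm
  -- ΔΓ is equivariant on single tensors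
  have hL1single : ∀ (c x : X) (i : Fin M),
      ΔΓ (Pi.single i (c * x)) = act X (comulX c) (ΔΓ (Pi.single i x)) := by
    intro c x i
    rw [hΔΓ (c * x) i {z // z ∈ (decX X comulX c) ×ˢ (decX X comulX x)} inferInstance
      _ _ (habs c x), decX_spec X comulX c, hDG x i]
    calc ∑ z : {z // z ∈ (decX X comulX c) ×ˢ (decX X comulX x)}, ∑ j,
            (((z : (H × X) × (H × X)).1.1 * (z : (H × X) × (H × X)).2.1) * Sinv (ψ j i))
              ⊗ₜ[ℂ] Pi.single j ((z : (H × X) × (H × X)).1.2 * (z : (H × X) × (H × X)).2.2)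
        = ∑ z ∈ (decX X comulX c) ×ˢ (decX X comulX x), ∑ j,
            ((z.1.1 * z.2.1) * Sinv (ψ j i)) ⊗ₜ[ℂ] Pi.single j (z.1.2 * z.2.2) :=
          Finset.sum_coe_sort ((decX X comulX c) ×ˢ (decX X comulX x))
            (fun (z : (H × X) × (H × X)) => ∑ j,
              ((z.1.1 * z.2.1) * Sinv (ψ j i)) ⊗ₜ[ℂ] Pi.single j (z.1.2 * z.2.2))
      _ = ∑ p ∈ decX X comulX c, ∑ q ∈ decX X comulX x, ∑ j,
            ((p.1 * q.1) * Sinv (ψ j i)) ⊗ₜ[ℂ] Pi.single j (p.2 * q.2) :=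
          Finset.sum_product (s := decX X comulX c) (t := decX X comulX x)
            (f := fun (z : (H × X) × (H × X)) => ∑ j,
              ((z.1.1 * z.2.1) * Sinv (ψ j i)) ⊗ₜ[ℂ] Pi.single j (z.1.2 * z.2.2))
      _ = ∑ p ∈ decX X comulX c, (act X (p.1 ⊗ₜ[ℂ] p.2))
            (∑ q ∈ decX X comulX x, ∑ j,
              (q.1 * Sinv (ψ j i)) ⊗ₜ[ℂ] Pi.single j q.2) := by
          refine Finset.sum_congr rfl fun p _ => ?_
          rw [map_sum]
          refine Finset.sum_congr rfl fun q _ => ?_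
          rw [map_sum]
          refine Finset.sum_congr rfl fun j _ => ?_
          rw [act_tmul, single_smul, mul_assoc]
      _ = (act X (∑ p ∈ decX X comulX c, p.1 ⊗ₜ[ℂ] p.2))
            (∑ q ∈ decX X comulX x, ∑ j,
              (q.1 * Sinv (ψ j i)) ⊗ₜ[ℂ] Pi.single j q.2) := by
          rw [map_sum (act X (M := M)) _ _, LinearMap.sum_apply]
  -- ΔΓ is equivariant
  have hL1 : ∀ (c : X) (v : Fin M → X), ΔΓ (c • v) = act X (comulX c) (ΔΓ v) := by
    intro c v
    have hv : ΔΓ v = ∑ i, ΔΓ (Pi.single i (v i)) := by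
      conv_lhs => rw [← Finset.univ_sum_single v]
      exact map_sum ΔΓ _ _
    calc ΔΓ (c • v) = ∑ i, ΔΓ (Pi.single i (c * v i)) := by
          conv_lhs => rw [← Finset.univ_sum_single v]
          rw [Finset.smul_sum, map_sum]
          exact Finset.sum_congr rfl fun i _ => by rw [single_smul]
      _ = ∑ i, act X (comulX c) (ΔΓ (Pi.single i (v i))) :=
          Finset.sum_congr rfl fun i _ => hL1single c (v i) i
      _ = act X (comulX c) (ΔΓ v) := by
          rw [hv]
          exact (map_sum (act X (comulX c)) _ _).symm
  -- ω as a combination of the basis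
  have hωa : ∀ y : X, rAct (fun i => bb i) y = ∑ i, bb i • rAct (Pi.single i 1) y := by
    intro y
    calc rAct (fun i => bb i) y = rAct (∑ i, Pi.single i (bb i)) y := by rw [← hω_sum]
      _ = ∑ i, rAct (Pi.single i (bb i)) y := rAct_sum _ _ _
      _ = ∑ i, bb i • rAct (Pi.single i 1) y := by
          refine Finset.sum_congr rfl fun i _ => ?_
          rw [← hrActSmul, single_smul, mul_one]
  -- part (iv) prerequisite : covariance of d
  have hL2 : ∀ (b : X) (κ : Type) (_ : Fintype κ) (b1 : κ → H) (b2 : κ → X),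
      comulX b = ∑ s, b1 s ⊗ₜ[ℂ] b2 s →
      ΔΓ (D b) = ∑ s, b1 s ⊗ₜ[ℂ] D (b2 s) := by
    intro b κ instκ b1 b2 hdec
    have h1 : ΔΓ (rAct (fun i => bb i) b)
        = ∑ s, b1 s ⊗ₜ[ℂ] rAct (fun i => bb i) (b2 s) := by
      calc ΔΓ (rAct (fun i => bb i) b)
          = ∑ i, act X (comulX (bb i)) (ΔΓ (rAct (Pi.single i 1) b)) := by
            rw [hωa b, map_sum]
            exact Finset.sum_congr rfl fun i _ => hL1 (bb i) _
        _ = ∑ i, ∑ j, ∑ s, ∑ k, (ψ i j * (Sinv (ψ k i) * b1 s)) ⊗ₜ[ℂ]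
              (bb j • rAct (Pi.single k 1) (b2 s)) := by
            refine Finset.sum_congr rfl fun i _ => ?_
            rw [hψ i, part1 b i κ instκ b1 b2 hdec,
              map_sum (act X (M := M)) _ _, LinearMap.sum_apply]
            refine Finset.sum_congr rfl fun j _ => ?_
            rw [map_sum]
            refine Finset.sum_congr rfl fun s _ => ?_
            rw [map_sum]
            exact Finset.sum_congr rfl fun k _ => act_tmul X _ _ _ _
        _ = ∑ i, ∑ s, ∑ k, ∑ j, (ψ i j * (Sinv (ψ k i) * b1 s)) ⊗ₜ[ℂ]
              (bb j • rAct (Pi.single k 1) (b2 s)) :=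
            Finset.sum_congr rfl fun i _ => sum_comm3' _
        _ = ∑ s, ∑ k, ∑ j, ∑ i, (ψ i j * (Sinv (ψ k i) * b1 s)) ⊗ₜ[ℂ]
              (bb j • rAct (Pi.single k 1) (b2 s)) := by
            rw [Finset.sum_comm]
            refine Finset.sum_congr rfl fun s _ => ?_
            rw [Finset.sum_comm]
            exact Finset.sum_congr rfl fun k _ => Finset.sum_comm
        _ = ∑ s, ∑ k, ∑ j, ((if k = j then (1:H) else 0) * b1 s) ⊗ₜ[ℂ]
              (bb j • rAct (Pi.single k 1) (b2 s)) := by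
            refine Finset.sum_congr rfl fun s _ => Finset.sum_congr rfl fun k _ =>
              Finset.sum_congr rfl fun j _ => ?_
            rw [← hT2 k j]
            calc ∑ i, (ψ i j * (Sinv (ψ k i) * b1 s)) ⊗ₜ[ℂ]
                  (bb j • rAct (Pi.single k 1) (b2 s))
                = (∑ i, ψ i j * Sinv (ψ k i) * b1 s) ⊗ₜ[ℂ]
                    (bb j • rAct (Pi.single k 1) (b2 s)) := by
                  rw [TensorProduct.sum_tmul]
                  exact Finset.sum_congr rfl fun i _ => by rw [mul_assoc]
              _ = ((∑ i, ψ i j * Sinv (ψ k i)) * b1 s) ⊗ₜ[ℂ]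
                    (bb j • rAct (Pi.single k 1) (b2 s)) := by
                  rw [Finset.sum_mul]
        _ = ∑ s, ∑ j, b1 s ⊗ₜ[ℂ] (bb j • rAct (Pi.single j 1) (b2 s)) := by
            refine Finset.sum_congr rfl fun s _ => ?_
            rw [Finset.sum_comm]
            refine Finset.sum_congr rfl fun j _ => ?_
            calc ∑ k, ((if k = j then (1:H) else 0) * b1 s) ⊗ₜ[ℂ]
                  (bb j • rAct (Pi.single k 1) (b2 s))
                = ∑ k, if k = j then b1 s ⊗ₜ[ℂ]
                    (bb j • rAct (Pi.single k 1) (b2 s)) else 0 := by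
                  refine Finset.sum_congr rfl fun k _ => ?_
                  by_cases hkj : k = j <;>
                    simp [hkj, TensorProduct.zero_tmul]
              _ = b1 s ⊗ₜ[ℂ] (bb j • rAct (Pi.single j 1) (b2 s)) := by
                  rw [Finset.sum_ite_eq' Finset.univ j]
                  simp
        _ = ∑ s, b1 s ⊗ₜ[ℂ] rAct (fun i => bb i) (b2 s) := by
            refine Finset.sum_congr rfl fun s _ => ?_
            rw [← TensorProduct.tmul_sum, ← hωa (b2 s)]
    have h2 : ΔΓ (b • (fun i => bb i))
        = ∑ s, b1 s ⊗ₜ[ℂ] (b2 s • (fun i => bb i)) := by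
      rw [hL1 b _, part2, hdec, map_sum (act X (M := M)) _ _, LinearMap.sum_apply]
      exact Finset.sum_congr rfl fun s _ => by rw [act_tmul, mul_one]
    rw [hDdef b, map_sub, h1, h2, ← Finset.sum_sub_distrib]
    refine Finset.sum_congr rfl fun s _ => ?_
    rw [← TensorProduct.tmul_sub, hDdef (b2 s)]
  -- part (iii)
  have part3 : ∀ a b : X, D (a * b) = a • D b + rAct (D a) b := by
    have hmult : ∀ a b : X, rAct (fun i => bb i) (a * b)
        = rAct (rAct (fun i => bb i) a) b := by
      intro a b
      have hscalar : ∀ i k : Fin M,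
          (∑ p ∈ decX X comulX a, ∑ q ∈ decX X comulX b,
            r (ψ k i) (p.1 * q.1) • ν (p.2 * q.2))
          = ∑ j, (∑ p ∈ decX X comulX a, r (ψ j i) p.1 • ν p.2)
              * (∑ q ∈ decX X comulX b, r (ψ k j) q.1 • ν q.2) := by
        intro i k
        calc (∑ p ∈ decX X comulX a, ∑ q ∈ decX X comulX b,
              r (ψ k i) (p.1 * q.1) • ν (p.2 * q.2))
            = ∑ p ∈ decX X comulX a, ∑ q ∈ decX X comulX b, ∑ j,
                (r (ψ j i) p.1 * r (ψ k j) q.1) • (ν p.2 * ν q.2) := by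
              refine Finset.sum_congr rfl fun p _ => Finset.sum_congr rfl fun q _ => ?_
              rw [hr3 (ψ k i) p.1 q.1 (Fin M) inferInstance (ψ k) (ψ · i) (hΔψ k i),
                map_mul, Finset.sum_smul]
              exact Finset.sum_congr rfl fun j _ => by rw [mul_comm (r (ψ k j) q.1)]
          _ = ∑ j, ∑ p ∈ decX X comulX a, ∑ q ∈ decX X comulX b,
                (r (ψ j i) p.1 * r (ψ k j) q.1) • (ν p.2 * ν q.2) := by
              exact sum_comm_dep _ _ _
          _ = ∑ j, (∑ p ∈ decX X comulX a, r (ψ j i) p.1 • ν p.2)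
                * (∑ q ∈ decX X comulX b, r (ψ k j) q.1 • ν q.2) := by
              refine Finset.sum_congr rfl fun j _ => ?_
              rw [Finset.sum_mul_sum]
              refine Finset.sum_congr rfl fun p _ => Finset.sum_congr rfl fun q _ => ?_
              rw [smul_mul_assoc, mul_smul_comm, smul_smul]
      calc rAct (fun i => bb i) (a * b)
          = ∑ i, bb i • rAct (Pi.single i 1) (a * b) := hωa (a * b)
        _ = ∑ i, ∑ k, (Pi.single k (bb i * ∑ p ∈ decX X comulX a, ∑ q ∈ decX X comulX b,
              r (ψ k i) (p.1 * q.1) • ν (p.2 * q.2)) : Fin M → X) := by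
            refine Finset.sum_congr rfl fun i _ => ?_
            rw [hrAct (a * b) i {z // z ∈ (decX X comulX a) ×ˢ (decX X comulX b)}
              inferInstance _ _ (habs a b), Finset.smul_sum]
            refine Finset.sum_congr rfl fun k _ => ?_
            rw [single_smul]
            refine congrArg (Pi.single k) (congrArg (fun y => bb i * y) ?_)
            calc ∑ z : {z // z ∈ (decX X comulX a) ×ˢ (decX X comulX b)},
                  r (ψ k i) ((z : (H × X) × (H × X)).1.1 * (z : (H × X) × (H × X)).2.1)
                    • ν ((z : (H × X) × (H × X)).1.2 * (z : (H × X) × (H × X)).2.2)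
                = ∑ z ∈ (decX X comulX a) ×ˢ (decX X comulX b),
                    r (ψ k i) (z.1.1 * z.2.1) • ν (z.1.2 * z.2.2) :=
                  Finset.sum_coe_sort ((decX X comulX a) ×ˢ (decX X comulX b))
                    (fun (z : (H × X) × (H × X)) =>
                      r (ψ k i) (z.1.1 * z.2.1) • ν (z.1.2 * z.2.2))
              _ = ∑ p ∈ decX X comulX a, ∑ q ∈ decX X comulX b,
                    r (ψ k i) (p.1 * q.1) • ν (p.2 * q.2) :=
                  Finset.sum_product (s := decX X comulX a) (t := decX X comulX b)
                    (f := fun (z : (H × X) × (H × X)) =>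
                      r (ψ k i) (z.1.1 * z.2.1) • ν (z.1.2 * z.2.2))
        _ = ∑ i, ∑ k, ∑ j, (Pi.single k ((bb i
              * (∑ p ∈ decX X comulX a, r (ψ j i) p.1 • ν p.2))
              * (∑ q ∈ decX X comulX b, r (ψ k j) q.1 • ν q.2)) : Fin M → X) := by
            refine Finset.sum_congr rfl fun i _ => Finset.sum_congr rfl fun k _ => ?_
            rw [hscalar i k, Finset.mul_sum, single_sum]
            exact Finset.sum_congr rfl fun j _ => by rw [mul_assoc]
        _ = ∑ i, ∑ j, ∑ k, (Pi.single k ((bb i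
              * (∑ p ∈ decX X comulX a, r (ψ j i) p.1 • ν p.2))
              * (∑ q ∈ decX X comulX b, r (ψ k j) q.1 • ν q.2)) : Fin M → X) :=
            Finset.sum_congr rfl fun i _ => Finset.sum_comm
        _ = rAct (rAct (fun i => bb i) a) b := by
            have hra : rAct (fun i => bb i) a = ∑ i, ∑ j, (Pi.single j
                (bb i * ∑ p ∈ decX X comulX a, r (ψ j i) p.1 • ν p.2) : Fin M → X) := by
              rw [hωa a]
              refine Finset.sum_congr rfl fun i _ => ?_
              rw [hRA a i, Finset.smul_sum]
              exact Finset.sum_congr rfl fun j _ => by rw [single_smul]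
            rw [hra, rAct_sum]
            refine Finset.sum_congr rfl fun i _ => ?_
            rw [rAct_sum]
            refine Finset.sum_congr rfl fun j _ => ?_
            have : (Pi.single j (bb i * ∑ p ∈ decX X comulX a, r (ψ j i) p.1 • ν p.2)
                : Fin M → X) = (bb i * ∑ p ∈ decX X comulX a, r (ψ j i) p.1 • ν p.2)
                  • (Pi.single j 1 : Fin M → X) := by
              rw [single_smul, mul_one]
            rw [this, hrActSmul, hRA b j, Finset.smul_sum]
            exact Finset.sum_congr rfl fun k _ => by rw [single_smul]
    intro a b
    rw [hDdef (a * b), hDdef a, hDdef b, rAct_sub, hrActSmul, smul_sub, smul_smul,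
      hmult a b]
    abel
  -- part (iv)
  have part4 : ∀ (a b : X) (ι κ : Type) (_ : Fintype ι) (_ : Fintype κ)
      (a1 : ι → H) (a2 : ι → X) (b1 : κ → H) (b2 : κ → X),
      comulX a = ∑ t, a1 t ⊗ₜ[ℂ] a2 t →
      comulX b = ∑ s, b1 s ⊗ₜ[ℂ] b2 s →
      ΔΓ (a • D b) = ∑ t, ∑ s, (a1 t * b1 s) ⊗ₜ[ℂ] (a2 t • D (b2 s)) := by
    intro a b ι κ insti instk a1 a2 b1 b2 ha hb
    rw [hL1 a (D b), hL2 b κ instk b1 b2 hb, ha,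
      map_sum (act X (M := M)) _ _, LinearMap.sum_apply]
    refine Finset.sum_congr rfl fun t _ => ?_
    rw [map_sum]
    exact Finset.sum_congr rfl fun s _ => act_tmul X _ _ _ _
  exact ⟨part1, part2, part3, part4⟩
end

section
/- Let H be a Hopf algebra with Haar functional h (h(1) = 1 and a_{(1)} h(a_{(2)}) = h(a)·1 = h(a_{(1)}) a_{(2)} for all a ∈ H), and let W ⊆ H be a finite-dimensional subcomodule for Δ (i.e. Δ(W) ⊆ H ⊗ W). Then (id − 1·h)(W) is again a subcomodule of H, and W ⊆ (id − 1·h)(W) + ℂ·1. -/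
open TensorProduct MulOpposite

/-- for a Hopf algebra `H` with Haar functional `h` and a
finite-dimensional subcomodule `W ⊆ H`, the space `(id − 1·h)(W)` is again a
subcomodule, and `W ⊆ (id − 1·h)(W) + ℂ·1`. -/
theorem stmt19
    {H : Type} [Ring H] [HopfAlgebra ℂ H]
    -- Haar functional
    (h : H →ₗ[ℂ] ℂ) (h1 : h 1 = 1)
    (hHaar : ∀ (a : H) (ι : Type) (_ : Fintype ι) (a1 a2 : ι → H),
      Coalgebra.comul (R := ℂ) a = ∑ t, a1 t ⊗ₜ[ℂ] a2 t →
      (∑ t, h (a2 t) • a1 t = h a • (1 : H)) ∧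
      (∑ t, h (a1 t) • a2 t = h a • (1 : H)))
    -- W: a finite-dimensional subcomodule
    (W : Submodule ℂ H) (hWfd : FiniteDimensional ℂ W)
    (hWcomod : ∀ w ∈ W, Coalgebra.comul (R := ℂ) w ∈
      LinearMap.range (TensorProduct.map (LinearMap.id : H →ₗ[ℂ] H) W.subtype)) :
    -- W' := (id − 1·h)(W)
    (∀ w ∈ W.map (LinearMap.id - (Algebra.linearMap ℂ H).comp h),
      Coalgebra.comul (R := ℂ) w ∈
        LinearMap.range (TensorProduct.map (LinearMap.id : H →ₗ[ℂ] H)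
          (W.map (LinearMap.id - (Algebra.linearMap ℂ H).comp h)).subtype)) ∧
    W ≤ W.map (LinearMap.id - (Algebra.linearMap ℂ H).comp h)
          ⊔ Submodule.span ℂ {(1 : H)} := by
  set f : H →ₗ[ℂ] H := LinearMap.id - (Algebra.linearMap ℂ H).comp h with hf
  have hfapp : ∀ a : H, f a = a - h a • 1 := by
    intro a
    simp [hf, Algebra.algebraMap_eq_smul_one]
  have hcomul_one : Coalgebra.comul (R := ℂ) (1 : H) = (1 : H) ⊗ₜ[ℂ] (1 : H) := by
    have := map_one (Bialgebra.comulAlgHom ℂ H)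
    rw [Bialgebra.comulAlgHom_apply] at this
    rw [this, Algebra.TensorProduct.one_def]
  constructor
  · rintro w' ⟨w, hwW, rfl⟩
    obtain ⟨x, hx⟩ := hWcomod w hwW
    obtain ⟨S, hS⟩ := TensorProduct.exists_finset x
    have hcw : Coalgebra.comul (R := ℂ) w = ∑ i ∈ S, i.1 ⊗ₜ[ℂ] (i.2 : H) := by
      rw [← hx, hS, map_sum]
      simp
    -- Haar property
    have haar := (hHaar w {i // i ∈ S} (by infer_instance)
      (fun i => i.1.1) (fun i => (i.1.2 : H))
      (by rw [hcw, ← Finset.sum_coe_sort S (fun i => i.1 ⊗ₜ[ℂ] (i.2 : H))])).1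
    have haar' : ∑ i ∈ S, h (i.2 : H) • i.1 = h w • (1 : H) := by
      rw [← Finset.sum_coe_sort S (fun i => h (i.2 : H) • i.1)]
      exact haar
    -- witness
    refine ⟨∑ i ∈ S.attach, i.1.1 ⊗ₜ[ℂ]
      (⟨f (i.1.2 : H), Submodule.mem_map_of_mem i.1.2.2⟩ :
        (W.map f : Submodule ℂ H)), ?_⟩
    rw [map_sum]
    simp only [TensorProduct.map_tmul, LinearMap.id_coe, id_eq, Submodule.coe_subtype]
    have step1 : ∑ i ∈ S.attach, i.1.1 ⊗ₜ[ℂ] (f (i.1.2 : H))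
        = ∑ i ∈ S, i.1 ⊗ₜ[ℂ] (f (i.2 : H)) := by
      rw [Finset.sum_attach S (fun i => i.1 ⊗ₜ[ℂ] (f (i.2 : H)))]
    rw [step1]
    have : Coalgebra.comul (R := ℂ) (f w)
        = Coalgebra.comul (R := ℂ) w - h w • ((1 : H) ⊗ₜ[ℂ] (1 : H)) := by
      rw [hfapp w, map_sub, map_smul, hcomul_one]
    rw [this, hcw]
    have expand : ∀ i : H × W, i.1 ⊗ₜ[ℂ] (f (i.2 : H))
        = i.1 ⊗ₜ[ℂ] (i.2 : H) - h (i.2 : H) • (i.1 ⊗ₜ[ℂ] (1 : H)) := by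
      intro i
      rw [hfapp]
      rw [TensorProduct.tmul_sub, TensorProduct.tmul_smul]
    rw [Finset.sum_congr rfl (fun i _ => expand i), Finset.sum_sub_distrib]
    congr 1
    have key : ∑ x ∈ S, h (x.2 : H) • x.1 ⊗ₜ[ℂ] (1 : H)
        = (∑ x ∈ S, h (x.2 : H) • x.1) ⊗ₜ[ℂ] (1 : H) := by
      rw [TensorProduct.sum_tmul]
      exact Finset.sum_congr rfl fun i _ => (TensorProduct.smul_tmul' _ _ _).symm
    rw [key, haar', TensorProduct.smul_tmul']
  · intro w hw
    have : w = f w + h w • 1 := by rw [hfapp]; abel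
    rw [this]
    exact Submodule.add_mem_sup (Submodule.mem_map_of_mem hw)
      (Submodule.smul_mem _ _ (Submodule.mem_span_singleton_self 1))
end
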